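/- arXiv:0705.4328 — 8 statements merged into one kernel-verified Lean document; each statement's English description precedes it below -/
import Mathlib

section
/- Let n ≥ 1 and k ≥ 2 be integers and let π : Fin k → ℝ satisfy π v > 0 for every v and ∑ v, π v = 1. Then the set of extreme points of the convex hull (over ℝ, inside the space (Fin n → Fin k) → ℝ) of the set {D 𝒮 : 𝒮 a partition of Fin n} is exactly the set {D 𝒮 : 𝒮 a partition of Fin n}; that is, every partition distribution D 𝒮 is a vertex of the polytope of phylogenetic mixtures. -/
open Finset

/-- The partition distribution on site patterns: independently draw one state from `π`
for each block of `𝒮` and assign it to all coordinates in that block. -/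
noncomputable def partitionDist {n k : ℕ} (π : Fin k → ℝ)
    (𝒮 : Finpartition (Finset.univ : Finset (Fin n))) : (Fin n → Fin k) → ℝ :=
  fun x => ∏ B ∈ 𝒮.parts, ∑ v : Fin k, π v * ∏ i ∈ B, (if x i = v then (1 : ℝ) else 0)

section Aux

variable {n k : ℕ} {π : Fin k → ℝ}

lemma pd_eq (π : Fin k → ℝ) (𝒮 : Finpartition (Finset.univ : Finset (Fin n)))
    (x : Fin n → Fin k) :
    partitionDist π 𝒮 x
      = ∏ B ∈ 𝒮.parts, ∑ v : Fin k, (if ∀ i ∈ B, x i = v then π v else 0) := by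
  unfold partitionDist
  simp only [Finset.prod_boole, mul_boole]
  congr
  funext B
  exact Finset.sum_congr rfl fun v _ => ite_congr rfl (fun _ => rfl) (fun _ => rfl)

lemma pd_nonneg (hπ : ∀ v, 0 < π v) (𝒮 : Finpartition (Finset.univ : Finset (Fin n)))
    (x : Fin n → Fin k) : 0 ≤ partitionDist π 𝒮 x := by
  rw [pd_eq]
  refine Finset.prod_nonneg fun B _ => Finset.sum_nonneg fun v _ => ?_
  split_ifs
  · exact (hπ v).le
  · exact le_rfl

lemma pd_pos (hπ : ∀ v, 0 < π v) (𝒮 : Finpartition (Finset.univ : Finset (Fin n)))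
    (x : Fin n → Fin k) (h : ∀ B ∈ 𝒮.parts, ∃ v, ∀ i ∈ B, x i = v) :
    0 < partitionDist π 𝒮 x := by
  rw [pd_eq]
  refine Finset.prod_pos fun B hB => ?_
  obtain ⟨v, hv⟩ := h B hB
  refine Finset.sum_pos' (fun v' _ => ?_) ⟨v, Finset.mem_univ v, ?_⟩
  · split_ifs
    · exact (hπ v').le
    · exact le_rfl
  · rw [if_pos hv]; exact hπ v

lemma const_of_ne_zero {𝒮 : Finpartition (Finset.univ : Finset (Fin n))}
    {x : Fin n → Fin k} (h : partitionDist π 𝒮 x ≠ 0) :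
    ∀ B ∈ 𝒮.parts, ∃ v, ∀ i ∈ B, x i = v := by
  rw [pd_eq] at h
  intro B hB
  by_contra hc
  push_neg at hc
  refine h (Finset.prod_eq_zero hB (Finset.sum_eq_zero fun v _ => ?_))
  rw [if_neg]
  intro hall
  obtain ⟨i, hi, hne⟩ := hc v
  exact hne (hall i hi)

lemma pd_const (π : Fin k → ℝ) (𝒮 : Finpartition (Finset.univ : Finset (Fin n)))
    (v : Fin k) : partitionDist π 𝒮 (fun _ => v) = π v ^ 𝒮.parts.card := by
  rw [pd_eq]
  rw [← Finset.prod_const]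
  refine Finset.prod_congr rfl fun B hB => ?_
  obtain ⟨i₀, hi₀⟩ := 𝒮.nonempty_of_mem_parts hB
  have : ∀ w : Fin k, (if ∀ i ∈ B, (fun _ => v) i = w then π w else 0)
      = if w = v then π w else 0 := by
    intro w
    rcases eq_or_ne w v with rfl | hne
    · simp
    · rw [if_neg (fun hall => hne ((hall i₀ hi₀).symm)), if_neg hne]
  rw [Finset.sum_congr rfl fun w _ => this w, Finset.sum_ite_eq' Finset.univ v π,
    if_pos (Finset.mem_univ v)]

lemma le_of_support (hk : 2 ≤ k) (hπ : ∀ v, 0 < π v)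
    {𝒮 𝒯 : Finpartition (Finset.univ : Finset (Fin n))}
    (h : ∀ x, partitionDist π 𝒯 x ≠ 0 → partitionDist π 𝒮 x ≠ 0) : 𝒮 ≤ 𝒯 := by
  intro A hA
  obtain ⟨i₀, hi₀⟩ := 𝒮.nonempty_of_mem_parts hA
  obtain ⟨B, hB, hi₀B⟩ := 𝒯.exists_mem (Finset.mem_univ i₀)
  refine ⟨B, hB, ?_⟩
  classical
  set u : Fin k := ⟨0, by omega⟩ with hu
  set w : Fin k := ⟨1, by omega⟩ with hw
  set x : Fin n → Fin k := fun i => if i ∈ B then u else w with hx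
  have hTx : partitionDist π 𝒯 x ≠ 0 := by
    refine (pd_pos hπ _ _ ?_).ne'
    intro B' hB'
    rcases eq_or_ne B' B with rfl | hne
    · exact ⟨u, fun i hi => by simp [hx, hi]⟩
    · refine ⟨w, fun i hi => ?_⟩
      have hiB : i ∉ B := Finset.disjoint_left.mp (𝒯.disjoint hB' hB hne) hi
      simp [hx, hiB]
  obtain ⟨v, hv⟩ := const_of_ne_zero (h x hTx) A hA
  have hvu : v = u := by
    have h1 := hv i₀ hi₀
    simp only [hx, if_pos hi₀B] at h1
    exact h1.symm
  intro j hj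
  have hxj := hv j hj
  by_contra hjB
  simp only [hx, if_neg hjB] at hxj
  rw [hvu] at hxj
  exact absurd hxj (by simp [hu, hw, Fin.ext_iff])

lemma eq_of_le_of_card_le {𝒮 𝒯 : Finpartition (Finset.univ : Finset (Fin n))}
    (h : 𝒮 ≤ 𝒯) (hc : 𝒮.parts.card ≤ 𝒯.parts.card) : 𝒮 = 𝒯 := by
  refine le_antisymm h ?_
  have hch : ∀ A, A ∈ 𝒮.parts → ∃ B, B ∈ 𝒯.parts ∧ A ⊆ B := fun A hA => by
    obtain ⟨B, hB, hAB⟩ := h hA; exact ⟨B, hB, hAB⟩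
  choose f hf1 hf2 using hch
  have hsurj : ∀ B ∈ 𝒯.parts, ∃ A hA, f A hA = B := by
    intro B hB
    obtain ⟨i, hi⟩ := 𝒯.nonempty_of_mem_parts hB
    obtain ⟨A, hA, hiA⟩ := 𝒮.exists_mem (Finset.mem_univ i)
    exact ⟨A, hA, 𝒯.eq_of_mem_parts (hf1 A hA) hB (hf2 A hA hiA) hi⟩
  have hinj := Finset.inj_on_of_surj_on_of_card_le f hf1 hsurj hc
  intro B hB
  obtain ⟨A, hA, hfA⟩ := hsurj B hB
  refine ⟨A, hA, fun j hj => ?_⟩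
  obtain ⟨A', hA', hjA'⟩ := 𝒮.exists_mem (Finset.mem_univ j)
  have hfA' : f A' hA' = B :=
    𝒯.eq_of_mem_parts (hf1 A' hA') hB (hf2 A' hA' hjA') hj
  have : A' = A := hinj hA' hA (hfA'.trans hfA.symm)
  exact this ▸ hjA'

lemma key (hk : 2 ≤ k) (hπ : ∀ v, 0 < π v) (hsum : ∑ v, π v = 1)
    (𝒮 : Finpartition (Finset.univ : Finset (Fin n)))
    {ι : Type} (t : Finset ι) (w : ι → ℝ) (p : ι → (Fin n → Fin k) → ℝ)
    (hw0 : ∀ i ∈ t, 0 ≤ w i) (hw1 : ∑ i ∈ t, w i = 1)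
    (hmem : ∀ i ∈ t, ∃ 𝒯, p i = partitionDist π 𝒯)
    (heq : ∀ x, partitionDist π 𝒮 x = ∑ j ∈ t, w j * p j x) :
    ∀ i ∈ t, w i ≠ 0 → p i = partitionDist π 𝒮 := by
  set v₀ : Fin k := ⟨0, by omega⟩ with hv₀
  set v₁ : Fin k := ⟨1, by omega⟩ with hv₁
  have hπ1 : π v₀ < 1 := by
    rw [← hsum]
    exact Finset.single_lt_sum (by simp [hv₀, hv₁, Fin.ext_iff])
      (Finset.mem_univ v₀) (Finset.mem_univ v₁) (hπ v₁) (fun x _ _ => (hπ x).le)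
  have step1 : ∀ j ∈ t, w j ≠ 0 → ∀ 𝒯, p j = partitionDist π 𝒯 → 𝒮 ≤ 𝒯 := by
    intro j hj hwj 𝒯 hpj
    apply le_of_support hk hπ
    intro x hTx
    rw [heq x]
    have hterm : ∀ j' ∈ t, 0 ≤ w j' * p j' x := fun j' hj' => by
      obtain ⟨𝒯', h'⟩ := hmem j' hj'
      exact mul_nonneg (hw0 j' hj') (h' ▸ pd_nonneg hπ 𝒯' x)
    have hpos : 0 < w j * p j x :=
      lt_of_le_of_ne (hterm j hj) (Ne.symm (mul_ne_zero hwj (hpj ▸ hTx)))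
    exact (Finset.sum_pos' hterm ⟨j, hj, hpos⟩).ne'
  have step2 : ∀ j ∈ t, w j ≠ 0 → ∀ 𝒯, p j = partitionDist π 𝒯 →
      𝒯.parts.card ≤ 𝒮.parts.card :=
    fun j hj hwj 𝒯 hpj => Finpartition.card_mono (step1 j hj hwj 𝒯 hpj)
  intro i hi hwi
  obtain ⟨𝒯, hpi⟩ := hmem i hi
  have hcard : 𝒮.parts.card ≤ 𝒯.parts.card := by
    by_contra hlt
    push_neg at hlt
    have hbase := heq (fun _ => v₀)
    rw [pd_const] at hbase
    have hstrict : ∑ j ∈ t, w j * π v₀ ^ 𝒮.parts.card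
        < ∑ j ∈ t, w j * p j (fun _ => v₀) := by
      refine Finset.sum_lt_sum (fun j hj => ?_) ⟨i, hi, ?_⟩
      · rcases eq_or_ne (w j) 0 with h0 | h0
        · simp [h0]
        · obtain ⟨𝒯', hpj⟩ := hmem j hj
          rw [hpj, pd_const]
          exact mul_le_mul_of_nonneg_left
            (pow_le_pow_of_le_one (hπ v₀).le hπ1.le (step2 j hj h0 𝒯' hpj))
            (hw0 j hj)
      · rw [hpi, pd_const]
        have hwpos : 0 < w i := lt_of_le_of_ne (hw0 i hi) (Ne.symm hwi)
        exact mul_lt_mul_of_pos_left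
          (pow_lt_pow_right_of_lt_one₀ (hπ v₀) hπ1 hlt) hwpos
    rw [← Finset.sum_mul, hw1, one_mul, ← hbase] at hstrict
    exact lt_irrefl _ hstrict
  rw [hpi, eq_of_le_of_card_le (step1 i hi hwi 𝒯 hpi) hcard]

end Aux

theorem stmt0 (n k : ℕ) (hn : 1 ≤ n) (hk : 2 ≤ k) (π : Fin k → ℝ)
    (hπ : ∀ v, 0 < π v) (hsum : ∑ v, π v = 1) :
    Set.extremePoints ℝ
      (convexHull ℝ
        {p : (Fin n → Fin k) → ℝ |
          ∃ 𝒮 : Finpartition (Finset.univ : Finset (Fin n)), p = partitionDist π 𝒮}) =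
      {p : (Fin n → Fin k) → ℝ |
        ∃ 𝒮 : Finpartition (Finset.univ : Finset (Fin n)), p = partitionDist π 𝒮} := by
  apply Set.Subset.antisymm extremePoints_convexHull_subset
  rintro p ⟨𝒮, rfl⟩
  rw [mem_extremePoints]
  refine ⟨subset_convexHull ℝ _ ⟨𝒮, rfl⟩, ?_⟩
  intro y hy z hz hseg
  rw [_root_.convexHull_eq] at hy hz
  obtain ⟨ι₁, t₁, w₁, p₁, h10, h11, h1mem, h1c⟩ := hy
  obtain ⟨ι₂, t₂, w₂, p₂, h20, h21, h2mem, h2c⟩ := hz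
  obtain ⟨a, b, ha, hb, hab, habd⟩ := hseg
  rw [Finset.centerMass_eq_of_sum_1 _ _ h11] at h1c
  rw [Finset.centerMass_eq_of_sum_1 _ _ h21] at h2c
  set t : Finset (ι₁ ⊕ ι₂) := t₁.disjSum t₂ with ht
  set w : ι₁ ⊕ ι₂ → ℝ := Sum.elim (fun i => a * w₁ i) (fun j => b * w₂ j) with hwdef
  set q : ι₁ ⊕ ι₂ → (Fin n → Fin k) → ℝ := Sum.elim p₁ p₂ with hqdef
  have hw0 : ∀ i ∈ t, 0 ≤ w i := by
    rintro (i | i) hi <;> simp only [ht, Finset.inl_mem_disjSum, Finset.inr_mem_disjSum] at hi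
    · exact mul_nonneg ha.le (h10 i hi)
    · exact mul_nonneg hb.le (h20 i hi)
  have hw1 : ∑ i ∈ t, w i = 1 := by
    rw [ht, hwdef, Finset.sum_sumElim, ← Finset.mul_sum, ← Finset.mul_sum, h11, h21,
      mul_one, mul_one, hab]
  have hmem : ∀ i ∈ t, ∃ 𝒯, q i = partitionDist π 𝒯 := by
    rintro (i | i) hi <;> simp only [ht, Finset.inl_mem_disjSum, Finset.inr_mem_disjSum] at hi
    · exact h1mem i hi
    · exact h2mem i hi
  have heq : ∀ x, partitionDist π 𝒮 x = ∑ j ∈ t, w j * q j x := by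
    intro x
    have hx := congrFun habd x
    simp only [Pi.add_apply, Pi.smul_apply, smul_eq_mul] at hx
    rw [← hx, ← h1c, ← h2c, ht, Finset.sum_disjSum]
    simp only [hwdef, hqdef, Sum.elim_inl, Sum.elim_inr, Finset.sum_apply,
      Pi.smul_apply, smul_eq_mul, Finset.mul_sum, mul_assoc]
  have hkey := key hk hπ hsum 𝒮 t w q hw0 hw1 hmem heq
  have hy' : y = partitionDist π 𝒮 := by
    rw [← h1c]
    have hcongr : ∀ i ∈ t₁, w₁ i • p₁ i = w₁ i • partitionDist π 𝒮 := by
      intro i hi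
      rcases eq_or_ne (w₁ i) 0 with h0 | h0
      · rw [h0, zero_smul, zero_smul]
      · have := hkey (Sum.inl i) (by simp [ht, hi]) (by
          simp only [hwdef, Sum.elim_inl]
          exact mul_ne_zero ha.ne' h0)
        simp only [hqdef, Sum.elim_inl] at this
        rw [this]
    rw [Finset.sum_congr rfl hcongr, ← Finset.sum_smul, h11, one_smul]
  have hz' : z = partitionDist π 𝒮 := by
    rw [← h2c]
    have hcongr : ∀ i ∈ t₂, w₂ i • p₂ i = w₂ i • partitionDist π 𝒮 := by
      intro i hi
      rcases eq_or_ne (w₂ i) 0 with h0 | h0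
      · rw [h0, zero_smul, zero_smul]
      · have := hkey (Sum.inr i) (by simp [ht, hi]) (by
          simp only [hwdef, Sum.elim_inr]
          exact mul_ne_zero hb.ne' h0)
        simp only [hqdef, Sum.elim_inr] at this
        rw [this]
    rw [Finset.sum_congr rfl hcongr, ← Finset.sum_smul, h21, one_smul]
  exact ⟨hy', hz'⟩
end

section
/- Let n ≥ 1. For the CFN partition distributions D 𝒮 : (Fin n → Bool) → ℝ, both the set {D 𝒮 : 𝒮 any partition of Fin n} and the subset {D 𝒮 : 𝒮 a star partition of Fin n} have affine dimension 2^(n−1) − 1; formally, Module.finrank ℝ (vectorSpan ℝ S) = 2^(n−1) − 1 where S is either of these two subsets of the real vector space (Fin n → Bool) → ℝ. -/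
/-- The CFN (two-state symmetric) partition distribution: one uniform state drawn
independently for each block of the partition `𝒮`. -/
noncomputable def cfnDist {n : ℕ} (𝒮 : Finpartition (Finset.univ : Finset (Fin n))) :
    (Fin n → Bool) → ℝ :=
  fun x =>
    if ∀ B ∈ 𝒮.parts, ∀ i ∈ B, ∀ j ∈ B, x i = x j then (1 / 2 : ℝ) ^ 𝒮.parts.card else 0

/-- A star partition: at most one part has cardinality greater than 1. -/
def IsStarPartition {n : ℕ} (𝒮 : Finpartition (Finset.univ : Finset (Fin n))) : Prop :=
  (𝒮.parts.filter fun B => 1 < B.card).card ≤ 1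


open Finset

variable {n : ℕ}

noncomputable def chi (S : Finset (Fin n)) : (Fin n → Bool) → ℝ :=
  fun x => ∏ i ∈ S, (if x i then (-1:ℝ) else 1)

lemma chi_mul (S T : Finset (Fin n)) (x : Fin n → Bool) :
    chi S x * chi T x = chi (symmDiff S T) x := by
  classical
  have key : ∀ i : Fin n, (if x i then (-1:ℝ) else 1) * (if x i then (-1:ℝ) else 1) = 1 := by
    intro i; by_cases h : x i <;> simp [h]
  unfold chi
  rw [← Finset.prod_union_inter]
  have hdisj : Disjoint (symmDiff S T) (S ∩ T) := by
    simpa using disjoint_symmDiff_inf S T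
  have hunion : symmDiff S T ∪ (S ∩ T) = S ∪ T := by
    simpa using symmDiff_sup_inf S T
  rw [← hunion, Finset.prod_union hdisj, mul_assoc, ← Finset.prod_mul_distrib]
  simp [key]

lemma chi_flip (S : Finset (Fin n)) (x : Fin n → Bool) :
    chi S (fun i => !(x i)) = (-1:ℝ)^S.card * chi S x := by
  unfold chi
  rw [← Finset.prod_const, ← Finset.prod_mul_distrib]
  apply Finset.prod_congr rfl
  intro i _
  by_cases h : x i <;> simp [h]

def flipAt (i₀ : Fin n) : (Fin n → Bool) ≃ (Fin n → Bool) :=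
  Function.Involutive.toPerm (fun x => Function.update x i₀ (!(x i₀))) (fun x => by
    funext j
    by_cases hj : j = i₀ <;> simp [hj, Function.update_apply])

lemma chi_flipAt {S : Finset (Fin n)} {i₀ : Fin n} (hi₀ : i₀ ∈ S) (x : Fin n → Bool) :
    chi S (flipAt i₀ x) = - chi S x := by
  unfold chi
  rw [← Finset.mul_prod_erase S _ hi₀, ← Finset.mul_prod_erase S _ hi₀]
  have h1 : ∏ i ∈ S.erase i₀, (if (flipAt i₀ x) i then (-1:ℝ) else 1)
      = ∏ i ∈ S.erase i₀, (if x i then (-1:ℝ) else 1) := by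
    apply Finset.prod_congr rfl
    intro i hi
    have : i ≠ i₀ := Finset.ne_of_mem_erase hi
    simp [flipAt, Function.Involutive.toPerm, Function.update_apply, this]
  rw [h1]
  have h2 : (flipAt i₀ x) i₀ = !(x i₀) := by simp [flipAt, Function.Involutive.toPerm]
  rw [h2]
  by_cases h : x i₀ <;> simp [h]

lemma sum_chi (S : Finset (Fin n)) :
    ∑ x : Fin n → Bool, chi S x = if S = ∅ then (2:ℝ)^n else 0 := by
  classical
  by_cases h : S = ∅
  · simp [h, chi, Finset.card_univ]
  · simp only [h, if_false]
    obtain ⟨i₀, hi₀⟩ := Finset.nonempty_iff_ne_empty.2 h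
    have key : ∑ x : Fin n → Bool, chi S x = - ∑ x : Fin n → Bool, chi S x := by
      conv_lhs => rw [← Equiv.sum_comp (flipAt i₀) (chi S)]
      rw [← Finset.sum_neg_distrib]
      exact Finset.sum_congr rfl fun x _ => chi_flipAt hi₀ x
    linarith

lemma sum_chi_mul (S T : Finset (Fin n)) :
    ∑ x : Fin n → Bool, chi S x * chi T x = if S = T then (2:ℝ)^n else 0 := by
  classical
  simp only [chi_mul]
  rw [sum_chi]
  congr 1
  simp [symmDiff_eq_bot]

lemma pairing_sum (s : Finset (Finset (Fin n))) (g : Finset (Fin n) → ℝ) (T : Finset (Fin n))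
    (hT : T ∈ s) :
    ∑ x : Fin n → Bool, (∑ S ∈ s, g S • chi S) x * chi T x = g T * 2^n := by
  classical
  have : ∀ x : Fin n → Bool, (∑ S ∈ s, g S • chi S) x = ∑ S ∈ s, g S * chi S x := by
    intro x; simp [Finset.sum_apply]
  simp only [this, Finset.sum_mul]
  rw [Finset.sum_comm]
  have : ∀ S ∈ s, ∑ x : Fin n → Bool, g S * chi S x * chi T x
      = if S = T then g S * 2^n else 0 := by
    intro S _
    simp only [mul_assoc, ← Finset.mul_sum, sum_chi_mul]
    split <;> simp
  rw [Finset.sum_congr rfl this, Finset.sum_ite_eq' s T (fun S => g S * 2^n), if_pos hT]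

lemma chi_li : LinearIndependent ℝ (chi : Finset (Fin n) → (Fin n → Bool) → ℝ) := by
  rw [linearIndependent_iff']
  intro s g hsum T hT
  have h := pairing_sum s g T hT
  rw [hsum] at h
  simp only [Pi.zero_apply, zero_mul, Finset.sum_const_zero] at h
  have h2 : (2:ℝ)^n ≠ 0 := by positivity
  have := h.symm
  exact (mul_eq_zero.1 this).resolve_right h2

def flipAll : (Fin n → Bool) ≃ (Fin n → Bool) :=
  Function.Involutive.toPerm (fun x => fun i => !(x i)) (fun x => by funext i; simp)

lemma flipAll_apply (x : Fin n → Bool) : flipAll x = fun i => !(x i) := rfl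

lemma span_chi_top : Submodule.span ℝ (Set.range (chi : Finset (Fin n) → _)) = ⊤ := by
  apply chi_li.span_eq_top_of_card_eq_finrank
  rw [Module.finrank_fintype_fun_eq_card]
  simp [Fintype.card_finset]

def goodIdx (n : ℕ) := {S : Finset (Fin n) // S ≠ ∅ ∧ Even S.card}

noncomputable def V (n : ℕ) : Submodule ℝ ((Fin n → Bool) → ℝ) :=
  Submodule.span ℝ (Set.range fun S : goodIdx n => chi S.1)

lemma chi_mem_V {S : Finset (Fin n)} (h1 : S ≠ ∅) (h2 : Even S.card) : chi S ∈ V n :=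
  Submodule.subset_span ⟨⟨S, h1, h2⟩, rfl⟩

lemma mem_V (q : (Fin n → Bool) → ℝ) (hflip : ∀ x, q (fun i => !(x i)) = q x)
    (hsum : ∑ x : Fin n → Bool, q x = 0) : q ∈ V n := by
  classical
  set b : Module.Basis (Finset (Fin n)) ℝ ((Fin n → Bool) → ℝ) := Module.Basis.mk chi_li span_chi_top.ge with hb
  have hbc : ∀ S, b S = chi S := fun S => by rw [hb, Module.Basis.coe_mk]
  have hrepr : q = ∑ S : Finset (Fin n), b.repr q S • chi S := by
    conv_lhs => rw [← b.sum_repr q]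
    exact Finset.sum_congr rfl fun S _ => by rw [hbc]
  have hcoef : ∀ T : Finset (Fin n), (T = ∅ ∨ ¬ Even T.card) → b.repr q T = 0 := by
    intro T hT
    have hp := pairing_sum Finset.univ (fun S => b.repr q S) T (Finset.mem_univ T)
    rw [← hrepr] at hp
    have h2 : (2:ℝ)^n ≠ 0 := by positivity
    have hzero : ∑ x : Fin n → Bool, q x * chi T x = 0 := by
      rcases hT with h | h
      · subst h
        simpa [chi] using hsum
      · have hodd : Odd T.card := Nat.not_even_iff_odd.1 h
        have key : ∑ x : Fin n → Bool, q x * chi T x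
            = - ∑ x : Fin n → Bool, q x * chi T x := by
          conv_lhs => rw [← Equiv.sum_comp (flipAll (n := n)) (fun x => q x * chi T x)]
          rw [← Finset.sum_neg_distrib]
          refine Finset.sum_congr rfl fun x _ => ?_
          rw [flipAll_apply, hflip, chi_flip, hodd.neg_one_pow]
          ring
        linarith
    rw [hp] at hzero
    exact (mul_eq_zero.1 hzero).resolve_right h2
  rw [hrepr]
  apply Submodule.sum_mem
  intro S _
  by_cases hS : S ≠ ∅ ∧ Even S.card
  · exact Submodule.smul_mem _ _ (chi_mem_V hS.1 hS.2)
  · have : b.repr q S = 0 := by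
      apply hcoef
      by_cases h : S = ∅
      · exact Or.inl h
      · exact Or.inr fun he => hS ⟨h, he⟩
    rw [this, zero_smul]
    exact Submodule.zero_mem _

lemma card_even_filter (hn : 1 ≤ n) :
    (Finset.univ.filter fun S : Finset (Fin n) => Even S.card).card = 2^(n-1) := by
  classical
  set i₀ : Fin n := ⟨0, hn⟩
  set f : Finset (Fin n) → Finset (Fin n) :=
    fun S => if i₀ ∈ S then S.erase i₀ else insert i₀ S with hf
  have hcard : ∀ S, ¬ Even S.card → Even (f S).card := by
    intro S h
    rw [hf]
    rw [Nat.not_even_iff] at h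
    by_cases hi : i₀ ∈ S
    · simp only [hi, if_true, Finset.card_erase_of_mem hi]
      rw [Nat.even_iff]; omega
    · simp only [hi, if_false, Finset.card_insert_of_notMem hi]
      rw [Nat.even_iff]; omega
  have hcard' : ∀ S, Even S.card → ¬ Even (f S).card := by
    intro S h
    rw [hf]
    rw [Nat.even_iff] at h
    by_cases hi : i₀ ∈ S
    · have h1 : 1 ≤ S.card := Finset.card_pos.2 ⟨i₀, hi⟩
      simp only [hi, if_true, Finset.card_erase_of_mem hi]
      rw [Nat.not_even_iff]; omega
    · simp only [hi, if_false, Finset.card_insert_of_notMem hi]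
      rw [Nat.not_even_iff]; omega
  have hinv : ∀ S, f (f S) = S := by
    intro S
    rw [hf]
    by_cases hi : i₀ ∈ S
    · simp [hi, Finset.insert_erase hi]
    · simp [hi, Finset.erase_insert hi]
  have hbij : (Finset.univ.filter fun S : Finset (Fin n) => Even S.card).card
      = (Finset.univ.filter fun S : Finset (Fin n) => ¬ Even S.card).card := by
    apply Finset.card_bij' (fun S _ => f S) (fun S _ => f S)
    · intro S hS
      simp only [Finset.mem_filter, Finset.mem_univ, true_and] at hS ⊢
      exact hcard' S hS
    · intro S hS
      simp only [Finset.mem_filter, Finset.mem_univ, true_and] at hS ⊢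
      exact hcard S hS
    · intro S _; exact hinv S
    · intro S _; exact hinv S
  have hEO : (Finset.univ.filter fun S : Finset (Fin n) => Even S.card).card
      + (Finset.univ.filter fun S : Finset (Fin n) => ¬ Even S.card).card = 2^n := by
    rw [Finset.card_filter_add_card_filter_not]
    simp [Finset.card_univ, Fintype.card_finset]
  rw [← hbij] at hEO
  have h2 : 2 * (Finset.univ.filter fun S : Finset (Fin n) => Even S.card).card = 2^n := by omega
  have hpow : 2^n = 2 * 2^(n-1) := by
    conv_lhs => rw [show n = 1 + (n-1) by omega]
    rw [pow_add, pow_one]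
  omega

lemma card_good (hn : 1 ≤ n) :
    (Finset.univ.filter fun S : Finset (Fin n) => S ≠ ∅ ∧ Even S.card).card = 2^(n-1) - 1 := by
  classical
  have h1 : (Finset.univ.filter fun S : Finset (Fin n) => S ≠ ∅ ∧ Even S.card)
      = (Finset.univ.filter fun S : Finset (Fin n) => Even S.card).erase ∅ := by
    ext S
    simp [Finset.mem_erase, and_comm]
  rw [h1, Finset.card_erase_of_mem, card_even_filter hn]
  simp

noncomputable instance : Fintype (goodIdx n) := by
  unfold goodIdx
  classical
  infer_instance

lemma finrank_V (hn : 1 ≤ n) : Module.finrank ℝ (V n) = 2^(n-1) - 1 := by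
  classical
  have hli : LinearIndependent ℝ (fun S : goodIdx n => chi S.1) :=
    chi_li.comp Subtype.val Subtype.val_injective
  rw [V, finrank_span_eq_card hli]
  rw [show Fintype.card (goodIdx n) = Fintype.card {S : Finset (Fin n) // S ≠ ∅ ∧ Even S.card}
    from Fintype.card_congr (Equiv.refl _)]
  rw [Fintype.card_subtype]
  exact card_good hn

lemma indicator_identity (B : Finset (Fin n)) (hB : B.Nonempty) (x : Fin n → Bool) :
    ∑ S ∈ B.powerset.filter (fun S => Even S.card), chi S x
      = if (∀ i ∈ B, ∀ j ∈ B, x i = x j) then (2:ℝ)^(B.card - 1) else 0 := by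
  classical
  set a : Fin n → ℝ := fun i => if x i then (-1:ℝ) else 1 with ha
  have P1 : ∏ i ∈ B, (a i + 1) = ∑ S ∈ B.powerset, chi S x := by
    rw [Finset.prod_add]
    exact Finset.sum_congr rfl fun S _ => by simp [chi, ha]
  have P2 : ∏ i ∈ B, (-a i + 1) = ∑ S ∈ B.powerset, (-1:ℝ)^S.card * chi S x := by
    rw [Finset.prod_add]
    refine Finset.sum_congr rfl fun S _ => ?_
    have h0 : ∏ i ∈ S, -a i = ∏ i ∈ S, ((-1:ℝ) * a i) :=
      Finset.prod_congr rfl fun i _ => by ring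
    simp only [h0, chi, Finset.prod_mul_distrib, Finset.prod_const, ha, one_pow, mul_one]
    rw [← Finset.prod_const, ← Finset.prod_mul_distrib]
    exact Finset.prod_congr rfl fun i _ => by ring
  have key : ∏ i ∈ B, (a i + 1) + ∏ i ∈ B, (-a i + 1)
      = 2 * ∑ S ∈ B.powerset.filter (fun S => Even S.card), chi S x := by
    rw [P1, P2, ← Finset.sum_add_distrib]
    rw [← Finset.sum_filter_add_sum_filter_not B.powerset (fun S => Even S.card)
      (fun S => chi S x + (-1:ℝ)^S.card * chi S x)]
    have h1 : ∑ S ∈ B.powerset.filter (fun S => Even S.card),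
        (chi S x + (-1:ℝ)^S.card * chi S x)
        = ∑ S ∈ B.powerset.filter (fun S => Even S.card), 2 * chi S x := by
      refine Finset.sum_congr rfl fun S hS => ?_
      rw [Finset.mem_filter] at hS
      rw [hS.2.neg_one_pow]
      ring
    have h2 : ∑ S ∈ B.powerset.filter (fun S => ¬ Even S.card),
        (chi S x + (-1:ℝ)^S.card * chi S x) = 0 := by
      refine Finset.sum_eq_zero fun S hS => ?_
      rw [Finset.mem_filter] at hS
      rw [(Nat.not_even_iff_odd.1 hS.2).neg_one_pow]
      ring
    rw [h1, h2, add_zero, Finset.mul_sum]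
  obtain ⟨i₀, hi₀⟩ := hB
  have hcd : 1 ≤ B.card := Finset.card_pos.2 ⟨i₀, hi₀⟩
  by_cases hc : ∀ i ∈ B, ∀ j ∈ B, x i = x j
  · rw [if_pos hc]
    have hprod : ∏ i ∈ B, (a i + 1) + ∏ i ∈ B, (-a i + 1) = 2^B.card := by
      by_cases hx : x i₀
      · have hall : ∀ i ∈ B, a i = -1 := fun i hi => by
          rw [ha]; simp [hc i hi i₀ hi₀, hx]
        have e1 : ∏ i ∈ B, (a i + 1) = 0 :=
          Finset.prod_eq_zero hi₀ (by rw [hall i₀ hi₀]; norm_num)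
        have e2 : ∏ i ∈ B, (-a i + 1) = 2^B.card := by
          rw [Finset.prod_congr rfl (fun i hi => by rw [hall i hi]; norm_num :
            ∀ i ∈ B, -a i + 1 = 2), Finset.prod_const]
        rw [e1, e2, zero_add]
      · have hall : ∀ i ∈ B, a i = 1 := fun i hi => by
          rw [ha]
          have := hc i hi i₀ hi₀
          simp only [Bool.not_eq_true] at hx
          rw [hx] at this
          simp [this]
        have e1 : ∏ i ∈ B, (a i + 1) = 2^B.card := by
          rw [Finset.prod_congr rfl (fun i hi => by rw [hall i hi]; norm_num :
            ∀ i ∈ B, a i + 1 = 2), Finset.prod_const]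
        have e2 : ∏ i ∈ B, (-a i + 1) = 0 :=
          Finset.prod_eq_zero hi₀ (by rw [hall i₀ hi₀]; norm_num)
        rw [e1, e2, add_zero]
    rw [hprod] at key
    have h2 : (2:ℝ)^B.card = 2 * 2^(B.card - 1) := by
      conv_lhs => rw [show B.card = 1 + (B.card - 1) by omega]
      rw [pow_add, pow_one]
    rw [h2] at key
    linarith
  · rw [if_neg hc]
    push_neg at hc
    obtain ⟨i, hi, j, hj, hij⟩ := hc
    have hpair : ∃ it ∈ B, ∃ jf ∈ B, x it = true ∧ x jf = false := by
      by_cases hxi : x i = true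
      · refine ⟨i, hi, j, hj, hxi, ?_⟩
        cases hxj : x j
        · rfl
        · exact absurd (hxi.trans hxj.symm) hij
      · rw [Bool.not_eq_true] at hxi
        refine ⟨j, hj, i, hi, ?_, hxi⟩
        cases hxj : x j
        · exact absurd (hxi.trans hxj.symm) hij
        · rfl
    obtain ⟨it, hit, jf, hjfB, hxit, hxjf⟩ := hpair
    have e1 : ∏ i ∈ B, (a i + 1) = 0 :=
      Finset.prod_eq_zero hit (by rw [ha]; simp [hxit])
    have e2 : ∏ i ∈ B, (-a i + 1) = 0 :=
      Finset.prod_eq_zero hjfB (by rw [ha]; simp [hxjf])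
    rw [e1, e2] at key
    linarith

def starPart (B : Finset (Fin n)) (hB : B.Nonempty) : Finpartition (Finset.univ : Finset (Fin n)) where
  parts := insert B (Bᶜ.image fun i => {i})
  supIndep := by
    rw [Finset.supIndep_iff_pairwiseDisjoint]
    intro s hs t ht hst
    simp only [Finset.coe_insert, Set.mem_insert_iff, Finset.coe_image, Set.mem_image,
      Finset.mem_coe, Finset.mem_compl] at hs ht
    rcases hs with rfl | ⟨i, hi, rfl⟩ <;> rcases ht with rfl | ⟨j, hj, rfl⟩
    · exact absurd rfl hst
    · simp only [Function.onFun, id_eq, Finset.disjoint_singleton_right]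
      simpa using hj
    · simp only [Function.onFun, id_eq, Finset.disjoint_singleton_left]
      simpa using hi
    · simp only [Function.onFun, id_eq, Finset.disjoint_singleton_left, Finset.mem_singleton]
      intro h
      exact hst (by rw [h])
  sup_parts := by
    ext a
    simp only [Finset.mem_sup, Finset.mem_insert, Finset.mem_image, Finset.mem_compl,
      Finset.mem_univ, iff_true]
    by_cases h : a ∈ B
    · exact ⟨B, Or.inl rfl, h⟩
    · exact ⟨{a}, Or.inr ⟨a, h, rfl⟩, Finset.mem_singleton_self a⟩
  bot_notMem := by
    simp only [Finset.bot_eq_empty, Finset.mem_insert, Finset.mem_image]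
    rintro (h | ⟨i, _, h⟩)
    · exact Finset.nonempty_iff_ne_empty.1 hB h.symm
    · exact Finset.singleton_ne_empty i h

lemma starPart_parts_card (B : Finset (Fin n)) (hB : B.Nonempty) :
    (starPart B hB).parts.card = n - B.card + 1 := by
  have hnotmem : B ∉ Bᶜ.image fun i => ({i} : Finset (Fin n)) := by
    rw [Finset.mem_image]
    rintro ⟨i, hi, rfl⟩
    rw [Finset.mem_compl] at hi
    exact hi (Finset.mem_singleton_self i)
  rw [show (starPart B hB).parts = insert B (Bᶜ.image fun i => {i}) from rfl,
    Finset.card_insert_of_notMem hnotmem,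
    Finset.card_image_of_injective _ (fun a b h => by
      simpa using Finset.singleton_injective h),
    Finset.card_compl]
  simp [Fintype.card_fin]

lemma starPart_isStar (B : Finset (Fin n)) (hB : B.Nonempty) :
    IsStarPartition (starPart B hB) := by
  unfold IsStarPartition
  rw [Finset.card_le_one]
  intro a ha b hb
  simp only [Finset.mem_filter, show (starPart B hB).parts = insert B (Bᶜ.image fun i => {i})
    from rfl, Finset.mem_insert, Finset.mem_image] at ha hb
  have key : ∀ c, (c = B ∨ ∃ i ∈ Bᶜ, {i} = c) → 1 < c.card → c = B := by
    rintro c (rfl | ⟨i, _, rfl⟩) hc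
    · rfl
    · simp at hc
  rw [key a ha.1 ha.2, key b hb.1 hb.2]

lemma cfnDist_starPart (B : Finset (Fin n)) (hB : B.Nonempty) (x : Fin n → Bool) :
    cfnDist (starPart B hB) x
      = if (∀ i ∈ B, ∀ j ∈ B, x i = x j) then (1/2 : ℝ)^(n - B.card + 1) else 0 := by
  have hparts : (starPart B hB).parts = insert B (Bᶜ.image fun i => {i}) := rfl
  rw [cfnDist, starPart_parts_card]
  congr 1
  simp only [eq_iff_iff]
  constructor
  · intro h
    exact h B (hparts ▸ Finset.mem_insert_self _ _)
  · intro h C hC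
    rw [hparts, Finset.mem_insert, Finset.mem_image] at hC
    rcases hC with rfl | ⟨i, _, rfl⟩
    · exact h
    · intro a ha b hb
      rw [Finset.mem_singleton] at ha hb
      rw [ha, hb]

lemma cfnDist_flip (𝒮 : Finpartition (Finset.univ : Finset (Fin n))) (x : Fin n → Bool) :
    cfnDist 𝒮 (fun i => !(x i)) = cfnDist 𝒮 x := by
  unfold cfnDist
  congr 1
  simp only [eq_iff_iff]
  constructor <;> intro h B hB i hi j hj
  · have := h B hB i hi j hj
    simpa using this
  · rw [h B hB i hi j hj]

lemma sum_cfnDist (𝒮 : Finpartition (Finset.univ : Finset (Fin n))) :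
    ∑ x : Fin n → Bool, cfnDist 𝒮 x = 1 := by
  classical
  unfold cfnDist
  rw [Finset.sum_ite, Finset.sum_const_zero, add_zero, Finset.sum_const]
  have hcard : (Finset.univ.filter fun x : Fin n → Bool =>
      ∀ B ∈ 𝒮.parts, ∀ i ∈ B, ∀ j ∈ B, x i = x j).card = 2 ^ 𝒮.parts.card := by
    rw [show (2:ℕ) ^ 𝒮.parts.card = Fintype.card ({B // B ∈ 𝒮.parts} → Bool) by
      simp [Fintype.card_fun]]
    rw [← Finset.card_univ]
    apply Finset.card_bij'
      (i := fun x _ => fun B : {B // B ∈ 𝒮.parts} =>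
        x (B.1.min' (𝒮.nonempty_of_mem_parts B.2)))
      (j := fun c _ => fun i : Fin n => c ⟨𝒮.part i, 𝒮.part_mem.2 (Finset.mem_univ i)⟩)
    · intro x _; exact Finset.mem_univ _
    · intro c _
      simp only [Finset.mem_filter, Finset.mem_univ, true_and]
      intro B hB i hi j hj
      have hBi : 𝒮.part i = B := (𝒮.eq_of_mem_parts (𝒮.part_mem.2 (Finset.mem_univ i)) hB
        (𝒮.mem_part (Finset.mem_univ i)) hi)
      have hBj : 𝒮.part j = B := (𝒮.eq_of_mem_parts (𝒮.part_mem.2 (Finset.mem_univ j)) hB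
        (𝒮.mem_part (Finset.mem_univ j)) hj)
      congr 1
      rw [Subtype.ext_iff]
      simp [hBi, hBj]
    · intro x hx
      rw [Finset.mem_filter] at hx
      funext i
      set B := 𝒮.part i with hBdef
      have hBmem : B ∈ 𝒮.parts := 𝒮.part_mem.2 (Finset.mem_univ i)
      exact hx.2 B hBmem _ (Finset.min'_mem _ _) i (𝒮.mem_part (Finset.mem_univ i))
    · intro c _
      funext B
      set i := B.1.min' (𝒮.nonempty_of_mem_parts B.2) with hi
      have him : i ∈ B.1 := Finset.min'_mem _ _
      have : 𝒮.part i = B.1 := 𝒮.eq_of_mem_parts (𝒮.part_mem.2 (Finset.mem_univ i)) B.2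
        (𝒮.mem_part (Finset.mem_univ i)) him
      exact congrArg c (Subtype.ext this)
  rw [hcard]
  simp only [nsmul_eq_mul, Nat.cast_pow, Nat.cast_ofNat]
  rw [div_pow, one_pow, mul_one_div, div_self (by positivity)]

lemma scaled_formula (B : Finset (Fin n)) (hB : B.Nonempty) (x : Fin n → Bool) :
    (2:ℝ)^n * cfnDist (starPart B hB) x
      = ∑ S ∈ B.powerset.filter (fun S => Even S.card), chi S x := by
  rw [cfnDist_starPart, indicator_identity B hB]
  have hle : B.card ≤ n := by simpa using Finset.card_le_univ B
  have hge : 1 ≤ B.card := Finset.card_pos.2 hB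
  by_cases h : ∀ i ∈ B, ∀ j ∈ B, x i = x j
  · rw [if_pos h, if_pos h]
    have hexp : (B.card - 1) + (n - B.card + 1) = n := by omega
    have : (2:ℝ)^n = 2^(B.card - 1) * 2^(n - B.card + 1) := by
      rw [← pow_add, hexp]
    rw [this, mul_assoc, ← mul_pow]
    norm_num
  · rw [if_neg h, if_neg h, mul_zero]

-- the set of star distributions

def starSet (n : ℕ) : Set ((Fin n → Bool) → ℝ) :=
  {p | ∃ 𝒮 : Finpartition (Finset.univ : Finset (Fin n)), IsStarPartition 𝒮 ∧ p = cfnDist 𝒮}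

lemma sum_mem_vectorSpan (B : Finset (Fin n)) (hB : B.Nonempty) :
    ∑ S ∈ (B.powerset.filter (fun S => Even S.card)).erase ∅, chi S
      ∈ vectorSpan ℝ (starSet n) := by
  classical
  obtain ⟨i₀, hi₀⟩ := hB
  have hB0 : ({i₀} : Finset (Fin n)).Nonempty := Finset.singleton_nonempty i₀
  have hkey : ∑ S ∈ (B.powerset.filter (fun S => Even S.card)).erase ∅, chi S
      = (2:ℝ)^n • (cfnDist (starPart B ⟨i₀, hi₀⟩) - cfnDist (starPart {i₀} hB0)) := by
    funext x
    have hmem : ∅ ∈ B.powerset.filter (fun S => Even S.card) := by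
      simp
    have hsplit : ∑ S ∈ B.powerset.filter (fun S => Even S.card), chi S x
        = chi ∅ x + ∑ S ∈ (B.powerset.filter (fun S => Even S.card)).erase ∅, chi S x :=
      (Finset.add_sum_erase _ _ hmem).symm
    have h1 := scaled_formula B ⟨i₀, hi₀⟩ x
    have h2 := scaled_formula {i₀} hB0 x
    have h2' : (2:ℝ)^n * cfnDist (starPart {i₀} hB0) x = 1 := by
      rw [h2]
      have : ({i₀} : Finset (Fin n)).powerset.filter (fun S => Even S.card) = {∅} := by
        ext S
        simp only [Finset.mem_filter, Finset.mem_powerset, Finset.subset_singleton_iff,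
          Finset.mem_singleton]
        constructor
        · rintro ⟨rfl | rfl, h⟩
          · rfl
          · simp at h
        · rintro rfl
          simp
      rw [this]
      simp [chi]
    have : ∑ S ∈ (B.powerset.filter (fun S => Even S.card)).erase ∅, chi S x
        = (2:ℝ)^n * cfnDist (starPart B ⟨i₀, hi₀⟩) x
          - (2:ℝ)^n * cfnDist (starPart {i₀} hB0) x := by
      rw [h1, h2', hsplit]
      simp [chi]
    rw [Finset.sum_apply]
    simp only [Pi.smul_apply, Pi.sub_apply, smul_eq_mul]
    rw [this]
    ring
  rw [hkey]
  apply Submodule.smul_mem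
  have hp : cfnDist (starPart B ⟨i₀, hi₀⟩) ∈ starSet n :=
    ⟨starPart B ⟨i₀, hi₀⟩, starPart_isStar _ _, rfl⟩
  have hq : cfnDist (starPart {i₀} hB0) ∈ starSet n :=
    ⟨starPart {i₀} hB0, starPart_isStar _ _, rfl⟩
  exact vsub_mem_vectorSpan ℝ hp hq

lemma chi_mem_vectorSpan : ∀ k (S : Finset (Fin n)), S.card ≤ k → S ≠ ∅ → Even S.card →
    chi S ∈ vectorSpan ℝ (starSet n) := by
  intro k
  induction k with
  | zero =>
    intro S hk hne _
    exact absurd (Finset.card_eq_zero.1 (Nat.le_zero.1 hk)) hne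
  | succ k ih =>
    intro S hk hne hev
    classical
    have hSne : S.Nonempty := Finset.nonempty_iff_ne_empty.2 hne
    set F := (S.powerset.filter (fun T => Even T.card)).erase ∅ with hF
    have hSF : S ∈ F := by
      rw [hF]
      simp [Finset.mem_erase, hne, hev]
    have hsplit : chi S = (∑ T ∈ F, chi T) - ∑ T ∈ F.erase S, chi T := by
      rw [← Finset.add_sum_erase _ _ hSF]
      abel
    rw [hsplit]
    apply Submodule.sub_mem
    · exact sum_mem_vectorSpan S hSne
    · apply Submodule.sum_mem
      intro T hT
      rw [Finset.mem_erase, hF, Finset.mem_erase, Finset.mem_filter, Finset.mem_powerset] at hT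
      obtain ⟨hTS, hTne, hTsub, hTev⟩ := hT
      have : T.card < S.card := Finset.card_lt_card (Finset.ssubset_iff_subset_ne.2 ⟨hTsub, hTS⟩)
      exact ih T (by omega) hTne hTev

def allSet (n : ℕ) : Set ((Fin n → Bool) → ℝ) :=
  {p | ∃ 𝒮 : Finpartition (Finset.univ : Finset (Fin n)), p = cfnDist 𝒮}

theorem stmt1 (n : ℕ) (hn : 1 ≤ n) :
    Module.finrank ℝ
        (vectorSpan ℝ
          {p : (Fin n → Bool) → ℝ |
            ∃ 𝒮 : Finpartition (Finset.univ : Finset (Fin n)), p = cfnDist 𝒮}) =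
      2 ^ (n - 1) - 1 ∧
    Module.finrank ℝ
        (vectorSpan ℝ
          {p : (Fin n → Bool) → ℝ |
            ∃ 𝒮 : Finpartition (Finset.univ : Finset (Fin n)),
              IsStarPartition 𝒮 ∧ p = cfnDist 𝒮}) =
      2 ^ (n - 1) - 1 := by
  have hall : vectorSpan ℝ (allSet n) ≤ V n := by
    rw [vectorSpan_def]
    rw [Submodule.span_le]
    rintro d ⟨p, hp, q, hq, rfl⟩
    obtain ⟨𝒮, rfl⟩ := hp
    obtain ⟨𝒯, rfl⟩ := hq
    apply mem_V
    · intro x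
      simp only [vsub_eq_sub, Pi.sub_apply]
      rw [cfnDist_flip, cfnDist_flip]
    · simp only [vsub_eq_sub, Pi.sub_apply, Finset.sum_sub_distrib]
      rw [sum_cfnDist, sum_cfnDist, sub_self]
  have hV : V n ≤ vectorSpan ℝ (starSet n) := by
    rw [V, Submodule.span_le]
    rintro _ ⟨⟨S, hne, hev⟩, rfl⟩
    exact chi_mem_vectorSpan S.card S le_rfl hne hev
  have hmono : vectorSpan ℝ (starSet n) ≤ vectorSpan ℝ (allSet n) :=
    vectorSpan_mono ℝ (fun p ⟨𝒮, _, hp⟩ => ⟨𝒮, hp⟩)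
  have h1 : vectorSpan ℝ (allSet n) = V n := le_antisymm hall (hV.trans hmono)
  have h2 : vectorSpan ℝ (starSet n) = V n := le_antisymm (hmono.trans hall) hV
  constructor
  · rw [show {p : (Fin n → Bool) → ℝ |
        ∃ 𝒮 : Finpartition (Finset.univ : Finset (Fin n)), p = cfnDist 𝒮} = allSet n from rfl,
      h1]
    exact finrank_V hn
  · rw [show {p : (Fin n → Bool) → ℝ |
        ∃ 𝒮 : Finpartition (Finset.univ : Finset (Fin n)),
          IsStarPartition 𝒮 ∧ p = cfnDist 𝒮} = starSet n from rfl, h2]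
    exact finrank_V hn
end

section
/- Let n ≥ 1 and let r be a real number with 0 < r < 1 and r ≠ 1/2. For the two-state partition distributions D 𝒮 : (Fin n → Bool) → ℝ built from the stationary distribution π with π false = r and π true = 1 − r, both the set {D 𝒮 : 𝒮 any partition of Fin n} and the subset {D 𝒮 : 𝒮 a star partition of Fin n} have affine dimension 2^n − n − 1; formally, Module.finrank ℝ (vectorSpan ℝ S) = 2^n − n − 1 where S is either of these two subsets of (Fin n → Bool) → ℝ. -/
/-- The two-state partition distribution with stationary distribution
`π false = r`, `π true = 1 - r`: independently draw one state for each block of `𝒮`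
and assign it to all coordinates in that block. -/
noncomputable def twoStateDist {n : ℕ} (r : ℝ)
    (𝒮 : Finpartition (Finset.univ : Finset (Fin n))) : (Fin n → Bool) → ℝ :=
  fun x =>
    ∏ B ∈ 𝒮.parts,
      ∑ v : Bool, (if v then 1 - r else r) * ∏ i ∈ B, (if x i = v then (1 : ℝ) else 0)

namespace Stmt2Aux

open Finset

noncomputable def ach (r : ℝ) : Bool → ℝ := fun v => if v then r else -(1 - r)

noncomputable def mu (r : ℝ) (k : ℕ) : ℝ :=
  ∑ v : Bool, (if v then 1 - r else r) * (ach r v) ^ k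

lemma mu_zero (r : ℝ) : mu r 0 = 1 := by
  simp [mu, Fintype.sum_bool]

lemma mu_one (r : ℝ) : mu r 1 = 0 := by
  simp [mu, Fintype.sum_bool, ach]; ring

lemma mu_ne_zero {r : ℝ} (hr0 : 0 < r) (hr1 : r < 1) (hr : r ≠ 1 / 2) {k : ℕ} (hk : 2 ≤ k) :
    mu r k ≠ 0 := by
  obtain ⟨m, rfl⟩ : ∃ m, k = m + 1 := ⟨k - 1, by omega⟩
  have hm : 1 ≤ m := by omega
  have hq0 : (0:ℝ) < 1 - r := by linarith
  have key : mu r (m + 1) = r * (1 - r) * (r ^ m - (-(1 - r)) ^ m) := by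
    simp [mu, Fintype.sum_bool, ach]; ring
  rw [key]
  have hne : r ^ m ≠ (-(1 - r)) ^ m := by
    rcases Nat.even_or_odd m with he | ho
    · rw [he.neg_pow]
      intro h
      have : r = 1 - r :=
        (pow_left_inj₀ (le_of_lt hr0) (le_of_lt hq0) (by omega : m ≠ 0)).mp h
      apply hr; linarith
    · have h1 : (-(1 - r)) ^ m < 0 := ho.pow_neg (by linarith)
      have h2 : 0 < r ^ m := pow_pos hr0 m
      exact ne_of_gt (lt_trans h1 h2)
  intro h
  apply hne
  have h1 : r * (1 - r) ≠ 0 := by positivity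
  have := mul_eq_zero.mp h
  rcases this with h' | h'
  · exact absurd h' h1
  · linarith [sub_eq_zero.mp h']


noncomputable def Fl {n : ℕ} (r : ℝ) (S : Finset (Fin n)) :
    ((Fin n → Bool) → ℝ) →ₗ[ℝ] ℝ where
  toFun f := ∑ x : Fin n → Bool, f x * ∏ i ∈ S, ach r (x i)
  map_add' f g := by simp [add_mul, Finset.sum_add_distrib]
  map_smul' c f := by simp [Finset.mul_sum, mul_assoc]

variable {n : ℕ}

lemma prod_parts_inter (𝒮 : Finpartition (Finset.univ : Finset (Fin n)))
    (S : Finset (Fin n)) (f : Fin n → ℝ) :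
    ∏ B ∈ 𝒮.parts, ∏ i ∈ B ∩ S, f i = ∏ i ∈ S, f i := by
  rw [← Finset.prod_biUnion]
  · congr 1
    ext i
    simp only [mem_biUnion, mem_inter]
    constructor
    · rintro ⟨B, _, _, h⟩; exact h
    · intro hi
      exact ⟨𝒮.part i, 𝒮.part_mem.2 (mem_univ i), 𝒮.mem_part (mem_univ i), hi⟩
  · intro B hB C hC hBC
    have := (𝒮.supIndep.pairwiseDisjoint) hB hC hBC
    exact (this.mono (inter_subset_left) (inter_subset_left)).mono_right le_rfl

/-- the extension of a block-assignment to coordinates -/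
noncomputable def ext (𝒮 : Finpartition (Finset.univ : Finset (Fin n)))
    (y : {B // B ∈ 𝒮.parts} → Bool) : Fin n → Bool :=
  fun i => y ⟨𝒮.part i, 𝒮.part_mem.2 (mem_univ i)⟩

lemma ext_eq (𝒮 : Finpartition (Finset.univ : Finset (Fin n)))
    (y : {B // B ∈ 𝒮.parts} → Bool) (B : {B // B ∈ 𝒮.parts}) {i : Fin n} (hi : i ∈ B.1) :
    ext 𝒮 y i = y B := by
  unfold ext
  congr 1
  exact Subtype.ext (𝒮.part_eq_of_mem B.2 hi)

theorem Fl_twoStateDist (r : ℝ) (𝒮 : Finpartition (Finset.univ : Finset (Fin n)))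
    (S : Finset (Fin n)) :
    Fl r S (twoStateDist r 𝒮) = ∏ B ∈ 𝒮.parts, mu r (B ∩ S).card := by
  classical
  have step1 : ∀ x : Fin n → Bool, twoStateDist r 𝒮 x =
      ∑ y : {B // B ∈ 𝒮.parts} → Bool,
        (∏ B : {B // B ∈ 𝒮.parts}, (if y B then 1 - r else r)) *
          (if x = ext 𝒮 y then 1 else 0) := by
    intro x
    rw [twoStateDist, ← Finset.prod_coe_sort, Fintype.prod_sum]
    refine Finset.sum_congr rfl fun y _ => ?_
    rw [Finset.prod_mul_distrib]
    congr 1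
    have : ∀ B : {B // B ∈ 𝒮.parts}, (∏ i ∈ B.1, (if x i = y B then (1:ℝ) else 0))
        = ∏ i ∈ B.1, (if x i = ext 𝒮 y i then (1:ℝ) else 0) := by
      intro B
      refine Finset.prod_congr rfl fun i hi => ?_
      rw [ext_eq 𝒮 y B hi]
    simp_rw [this]
    rw [Finset.prod_coe_sort (f := fun B => ∏ i ∈ B, (if x i = ext 𝒮 y i then (1:ℝ) else 0))]
    have := prod_parts_inter 𝒮 Finset.univ (fun i => if x i = ext 𝒮 y i then (1:ℝ) else 0)
    simp only [inter_univ] at this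
    rw [this, Fintype.prod_boole]
    congr 1
    simp [funext_iff]
  have step2 : Fl r S (twoStateDist r 𝒮) =
      ∑ y : {B // B ∈ 𝒮.parts} → Bool,
        (∏ B : {B // B ∈ 𝒮.parts}, (if y B then 1 - r else r)) *
          ∏ i ∈ S, ach r (ext 𝒮 y i) := by
    show (∑ x : Fin n → Bool, twoStateDist r 𝒮 x * ∏ i ∈ S, ach r (x i)) = _
    simp_rw [step1, Finset.sum_mul]
    rw [Finset.sum_comm]
    refine Finset.sum_congr rfl fun y _ => ?_
    have : ∀ x : Fin n → Bool,
        (∏ B : {B // B ∈ 𝒮.parts}, (if y B then 1 - r else r)) *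
          (if x = ext 𝒮 y then 1 else 0) * ∏ i ∈ S, ach r (x i)
        = if x = ext 𝒮 y then
            (∏ B : {B // B ∈ 𝒮.parts}, (if y B then 1 - r else r)) *
              ∏ i ∈ S, ach r (x i) else 0 := by
      intro x
      by_cases h : x = ext 𝒮 y <;> simp [h]
    simp_rw [this]
    rw [Finset.sum_ite_eq' Finset.univ (ext 𝒮 y)
      (fun x => (∏ B : {B // B ∈ 𝒮.parts}, (if y B then 1 - r else r)) *
        ∏ i ∈ S, ach r (x i))]
    simp
  rw [step2]
  have step3 : ∀ y : {B // B ∈ 𝒮.parts} → Bool,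
      (∏ i ∈ S, ach r (ext 𝒮 y i))
        = ∏ B : {B // B ∈ 𝒮.parts}, ach r (y B) ^ (B.1 ∩ S).card := by
    intro y
    rw [← prod_parts_inter 𝒮 S (fun i => ach r (ext 𝒮 y i)),
      ← Finset.prod_coe_sort (f := fun B => ∏ i ∈ B ∩ S, ach r (ext 𝒮 y i))]
    refine Finset.prod_congr rfl fun B _ => ?_
    rw [Finset.prod_congr rfl (fun i hi => by
      rw [ext_eq 𝒮 y B (Finset.mem_of_mem_inter_left hi)]), Finset.prod_const]
  simp_rw [step3]
  simp_rw [← Finset.prod_mul_distrib]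
  rw [← Fintype.prod_sum (f := fun (B : {B // B ∈ 𝒮.parts}) (v : Bool) =>
    (if v then 1 - r else r) * ach r v ^ (B.1 ∩ S).card)]
  rw [← Finset.prod_coe_sort (f := fun B => mu r (B ∩ S).card)]
  rfl


/-- star partition: one block `T` (with `2 ≤ T.card`) plus singletons. -/
def starP (T : Finset (Fin n)) (hT : 2 ≤ T.card) :
    Finpartition (Finset.univ : Finset (Fin n)) where
  parts := insert T ((Finset.univ \ T).image fun i => {i})
  supIndep := by
    rw [Finset.supIndep_iff_pairwiseDisjoint]
    intro x hx y hy hxy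
    simp only [coe_insert, Set.mem_insert_iff, coe_image, Set.mem_image, mem_coe,
      mem_sdiff, mem_univ, true_and] at hx hy
    have sd : ∀ i : Fin n, i ∉ T → Disjoint T {i} := by
      intro i hi
      simpa [Finset.disjoint_singleton_right] using hi
    rcases hx with rfl | ⟨i, hi, rfl⟩ <;> rcases hy with rfl | ⟨j, hj, rfl⟩
    · exact absurd rfl hxy
    · exact sd j hj
    · exact (sd i hi).symm
    · have hij : i ≠ j := fun h => hxy (by rw [h])
      show Disjoint ({i} : Finset (Fin n)) {j}
      exact Finset.disjoint_singleton.mpr hij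
  sup_parts := by
    ext i
    simp only [sup_insert, id_eq, mem_univ, iff_true, Finset.sup_image]
    by_cases hi : i ∈ T
    · exact Finset.mem_union_left _ hi
    · refine Finset.mem_union_right _ ?_
      rw [Finset.mem_sup]
      exact ⟨i, by simp [hi], by simp⟩
  bot_notMem := by
    simp only [bot_eq_empty, mem_insert, mem_image, not_or]
    constructor
    · intro h; rw [← h] at hT; simp at hT
    · rintro ⟨i, _, h⟩; exact Finset.singleton_ne_empty i h

lemma starP_parts (T : Finset (Fin n)) (hT : 2 ≤ T.card) :
    (starP T hT).parts = insert T ((Finset.univ \ T).image fun i => {i}) := rfl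

lemma isStar_starP (T : Finset (Fin n)) (hT : 2 ≤ T.card) :
    ((starP T hT).parts.filter fun B => 1 < B.card) = {T} := by
  ext B
  simp only [starP_parts, mem_filter, mem_insert, mem_image, mem_singleton]
  constructor
  · rintro ⟨rfl | ⟨i, hi, rfl⟩, hc⟩
    · rfl
    · simp at hc
  · rintro rfl; exact ⟨Or.inl rfl, by omega⟩

lemma isStar_bot : ∀ B ∈ (⊥ : Finpartition (Finset.univ : Finset (Fin n))).parts, B.card = 1 := by
  intro B hB
  rw [Finpartition.mem_bot_iff] at hB
  obtain ⟨a, _, rfl⟩ := hB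
  simp


section
variable (r : ℝ)

lemma Fl_empty (𝒮 : Finpartition (Finset.univ : Finset (Fin n))) :
    Fl r ∅ (twoStateDist r 𝒮) = 1 := by
  rw [Fl_twoStateDist]
  refine Finset.prod_eq_one fun B _ => ?_
  simp [mu_zero]

lemma Fl_single (i : Fin n) (𝒮 : Finpartition (Finset.univ : Finset (Fin n))) :
    Fl r {i} (twoStateDist r 𝒮) = 0 := by
  rw [Fl_twoStateDist]
  refine Finset.prod_eq_zero (𝒮.part_mem.2 (mem_univ i)) ?_
  have h1 : 𝒮.part i ∩ {i} = {i} :=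
    Finset.inter_singleton_of_mem (𝒮.mem_part (mem_univ i))
  rw [h1]
  simpa using mu_one r

lemma Fl_starP (S T : Finset (Fin n)) (hT : 2 ≤ T.card) (hS : S.Nonempty) :
    Fl r S (twoStateDist r (starP T hT)) = if S ⊆ T then mu r S.card else 0 := by
  have hTnotim : T ∉ (Finset.univ \ T).image fun i : Fin n => {i} := by
    intro h
    obtain ⟨i, _, hi⟩ := Finset.mem_image.mp h
    rw [← hi] at hT; simp at hT
  rw [Fl_twoStateDist, starP_parts, Finset.prod_insert hTnotim,
    Finset.prod_image (by intro a _ b _ h; exact Finset.singleton_injective h)]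
  by_cases hsub : S ⊆ T
  · rw [if_pos hsub]
    have h2 : T ∩ S = S := Finset.inter_eq_right.mpr hsub
    rw [h2]
    have h3 : ∀ i ∈ Finset.univ \ T, mu r (({i} : Finset (Fin n)) ∩ S).card = 1 := by
      intro i hi
      have : i ∉ S := fun hiS => (Finset.mem_sdiff.mp hi).2 (hsub hiS)
      rw [Finset.singleton_inter_of_notMem this]
      simpa using mu_zero r
    rw [Finset.prod_congr rfl h3]
    simp
  · rw [if_neg hsub]
    obtain ⟨i, hiS, hiT⟩ := Finset.not_subset.mp hsub
    refine mul_eq_zero_of_right _ ?_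
    refine Finset.prod_eq_zero (Finset.mem_sdiff.mpr ⟨mem_univ i, hiT⟩) ?_
    rw [Finset.singleton_inter_of_mem hiS]
    simpa using mu_one r

lemma Fl_bot (S : Finset (Fin n)) (hS : S.Nonempty) :
    Fl r S (twoStateDist r (⊥ : Finpartition (Finset.univ : Finset (Fin n)))) = 0 := by
  obtain ⟨i, hi⟩ := hS
  rw [Fl_twoStateDist, Finpartition.parts_bot, Finset.prod_map]
  refine Finset.prod_eq_zero (mem_univ i) ?_
  show mu r (({i} : Finset (Fin n)) ∩ S).card = 0
  rw [Finset.singleton_inter_of_mem hi]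
  simpa using mu_one r

/-- combined constraint map -/
noncomputable def Psi : ((Fin n → Bool) → ℝ) →ₗ[ℝ] (Option (Fin n) → ℝ) :=
  LinearMap.pi fun o => Fl r (o.elim ∅ fun i => {i})

lemma Psi_twoStateDist (𝒮 : Finpartition (Finset.univ : Finset (Fin n))) :
    Psi r (twoStateDist r 𝒮) = Pi.single none 1 := by
  funext o
  cases o with
  | none => simpa [Psi, LinearMap.pi_apply] using Fl_empty r 𝒮
  | some i =>
      have := Fl_single r i 𝒮
      simp only [Psi, LinearMap.pi_apply, Option.elim]
      rw [this, Pi.single_apply, if_neg (by simp)]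

/-- auxiliary function hitting the `some j` coordinate -/
noncomputable def gj (j : Fin n) : (Fin n → Bool) → ℝ := fun x => if x j then 1 else -1

lemma Fl_gj (S : Finset (Fin n)) (j : Fin n) :
    Fl r S (gj j) = ∏ i : Fin n, ∑ v : Bool,
      ((if i = j then (if v then (1:ℝ) else -1) else 1) * (if i ∈ S then ach r v else 1)) := by
  rw [Fintype.prod_sum]
  show (∑ x : Fin n → Bool, gj j x * ∏ i ∈ S, ach r (x i)) = _
  refine Finset.sum_congr rfl fun x _ => ?_
  rw [Finset.prod_mul_distrib, Finset.prod_ite_eq' Finset.univ j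
    (fun i => if x i then (1:ℝ) else -1), if_pos (mem_univ j),
    Finset.prod_ite_mem Finset.univ S (fun i => ach r (x i)), Finset.univ_inter]
  rfl

lemma Fl_gj_empty (j : Fin n) : Fl r ∅ (gj j) = 0 := by
  rw [Fl_gj]
  refine Finset.prod_eq_zero (mem_univ j) ?_
  simp [Fintype.sum_bool]

lemma Fl_gj_single (i j : Fin n) :
    Fl r {i} (gj j) = if i = j then (2:ℝ)^(n-1) else 0 := by
  rw [Fl_gj]
  by_cases hij : i = j
  · subst hij
    rw [if_pos rfl]
    have hfac : ∀ k : Fin n, (∑ v : Bool,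
        ((if k = i then (if v then (1:ℝ) else -1) else 1) * (if k ∈ ({i} : Finset (Fin n)) then ach r v else 1)))
        = if k = i then 1 else 2 := by
      intro k
      by_cases hk : k = i
      · subst hk; simp [Fintype.sum_bool, ach]
      · simp [hk, Fintype.sum_bool]
    rw [Finset.prod_congr rfl fun k _ => hfac k,
      ← Finset.mul_prod_erase Finset.univ _ (mem_univ i), if_pos rfl, one_mul]
    rw [Finset.prod_congr rfl (fun k hk => if_neg (Finset.mem_erase.mp hk).1),
      Finset.prod_const, Finset.card_erase_of_mem (mem_univ i), Finset.card_univ,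
      Fintype.card_fin]
  · rw [if_neg hij]
    refine Finset.prod_eq_zero (mem_univ j) ?_
    have : j ∉ ({i} : Finset (Fin n)) := by simp [Ne.symm hij]
    simp [this, Fintype.sum_bool]

lemma Psi_gj (j : Fin n) :
    Psi r (gj j) = ((2:ℝ)^(n-1)) • (Pi.single (some j) 1 : Option (Fin n) → ℝ) := by
  funext o
  cases o with
  | none =>
      simp only [Psi, LinearMap.pi_apply, Option.elim, Pi.smul_apply,
        Pi.single_apply, smul_eq_mul]
      rw [show (Fl r (∅ : Finset (Fin n)) (gj j) = 0) from Fl_gj_empty r j]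
      simp
  | some i =>
      simp only [Psi, LinearMap.pi_apply, Option.elim, Pi.smul_apply,
        Pi.single_apply, smul_eq_mul]
      rw [show Fl r ({i} : Finset (Fin n)) (gj j) = _ from Fl_gj_single r i j]
      by_cases h : i = j <;> simp [h]

lemma Psi_surjective : Function.Surjective (Psi (n := n) r) := by
  intro g
  refine ⟨g none • twoStateDist r ⊥ + ∑ j : Fin n, (g (some j) / (2:ℝ)^(n-1)) • gj j, ?_⟩
  rw [map_add, map_smul, map_sum]
  simp_rw [map_smul, Psi_gj, Psi_twoStateDist]
  funext o
  have h2 : ((2:ℝ)^(n-1)) ≠ 0 := by positivity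
  cases o with
  | none =>
      simp [Pi.single_apply]
  | some i =>
      simp only [Pi.add_apply, Pi.smul_apply, Finset.sum_apply, Pi.single_apply,
        smul_eq_mul]
      rw [if_neg (by simp)]
      have : ∀ j : Fin n, g (some j) / (2:ℝ)^(n-1) * ((2:ℝ)^(n-1) * (if (some i : Option (Fin n)) = some j then (1:ℝ) else 0))
          = if j = i then g (some j) else 0 := by
        intro j
        by_cases h : j = i
        · subst h; rw [if_pos rfl, if_pos rfl, mul_one]
          field_simp
        · rw [if_neg (by simpa using Ne.symm h), if_neg h, mul_zero, mul_zero]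
      simp_rw [this]
      rw [Finset.sum_ite_eq' Finset.univ i (fun j => g (some j))]
      simp

lemma finrank_ker_Psi : Module.finrank ℝ (LinearMap.ker (Psi (n := n) r)) = 2^n - (n+1) := by
  have h := LinearMap.finrank_range_add_finrank_ker (Psi (n := n) r)
  rw [LinearMap.range_eq_top.mpr (Psi_surjective r), finrank_top] at h
  rw [Module.finrank_pi, Module.finrank_pi, Fintype.card_option, Fintype.card_fin,
    Fintype.card_fun, Fintype.card_bool, Fintype.card_fin] at h
  omega

lemma card_subtype_two_le (hn : 1 ≤ n) :
    Fintype.card {T : Finset (Fin n) // 2 ≤ T.card} = 2^n - n - 1 := by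
  haveI : Nonempty (Fin n) := ⟨⟨0, by omega⟩⟩
  rw [Fintype.card_subtype]
  have hsplit := Finset.card_filter_add_card_filter_not
    (s := (Finset.univ : Finset (Finset (Fin n)))) (fun T => 2 ≤ T.card)
  have hneg : ((Finset.univ : Finset (Finset (Fin n))).filter fun T => ¬ 2 ≤ T.card)
      = insert ∅ (Finset.univ.image fun i : Fin n => ({i} : Finset (Fin n))) := by
    ext T
    simp only [mem_filter, mem_univ, true_and, not_le, mem_insert, mem_image]
    constructor
    · intro h
      have h1 : T.card ≤ 1 := by omega
      obtain ⟨a, ha⟩ := Finset.card_le_one_iff_subset_singleton.mp h1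
      rcases Finset.subset_singleton_iff.mp ha with rfl | rfl
      · exact Or.inl rfl
      · exact Or.inr ⟨a, rfl⟩
    · rintro (rfl | ⟨i, _, rfl⟩) <;> simp
  have hempty : (∅ : Finset (Fin n)) ∉ Finset.univ.image fun i : Fin n => ({i} : Finset (Fin n)) := by
    simp only [mem_image, mem_univ, true_and, not_exists]
    exact fun i h => Finset.singleton_ne_empty i h
  have hcard : (insert ∅ (Finset.univ.image fun i : Fin n => ({i} : Finset (Fin n)))).card = n + 1 := by
    rw [Finset.card_insert_of_notMem hempty,
      Finset.card_image_of_injective _ Finset.singleton_injective, Finset.card_univ,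
      Fintype.card_fin]
  rw [hneg, hcard, Finset.card_univ, Fintype.card_finset, Fintype.card_fin] at hsplit
  omega

section
variable (r : ℝ)

noncomputable def vT (T : {T : Finset (Fin n) // 2 ≤ T.card}) : (Fin n → Bool) → ℝ :=
  twoStateDist r (starP T.1 T.2) - twoStateDist r ⊥

lemma Fl_vT (S : Finset (Fin n)) (hS : 2 ≤ S.card) (T : {T : Finset (Fin n) // 2 ≤ T.card}) :
    Fl r S (vT r T) = if S ⊆ T.1 then mu r S.card else 0 := by
  have hSne : S.Nonempty := Finset.card_pos.mp (by omega)
  rw [vT, map_sub, Fl_starP r S T.1 T.2 hSne, Fl_bot r S hSne, sub_zero]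

lemma li_vT (hr0 : 0 < r) (hr1 : r < 1) (hr : r ≠ 1 / 2) :
    LinearIndependent ℝ (vT (n := n) r) := by
  rw [linearIndependent_iff']
  intro s g hsum
  have key : ∀ T ∈ s, ∑ T' ∈ s.filter (fun T' => T.1 ⊆ T'.1), g T' = 0 := by
    intro T hT
    have h0 := congrArg (Fl r T.1) hsum
    rw [map_sum, map_zero] at h0
    have hterm : ∀ T' ∈ s, Fl r T.1 (g T' • vT r T')
        = if T.1 ⊆ T'.1 then g T' * mu r T.1.card else 0 := by
      intro T' _
      rw [map_smul, Fl_vT r T.1 T.2 T']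
      by_cases h : T.1 ⊆ T'.1 <;> simp [h]
    rw [Finset.sum_congr rfl hterm, ← Finset.sum_filter] at h0
    rw [← Finset.sum_mul] at h0
    rcases mul_eq_zero.mp h0 with h | h
    · exact h
    · exact absurd h (mu_ne_zero hr0 hr1 hr T.2)
  have step : ∀ T ∈ s, (∀ T' ∈ s, T.1 ⊂ T'.1 → g T' = 0) → g T = 0 := by
    intro T hT hstrict
    have hk := key T hT
    have hTmem : T ∈ s.filter (fun T' => T.1 ⊆ T'.1) :=
      Finset.mem_filter.mpr ⟨hT, subset_rfl⟩
    rw [← Finset.add_sum_erase _ _ hTmem] at hk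
    have hz : ∑ T' ∈ (s.filter (fun T' => T.1 ⊆ T'.1)).erase T, g T' = 0 := by
      refine Finset.sum_eq_zero fun T' hT' => ?_
      have h1 := Finset.mem_erase.mp hT'
      have h2 := Finset.mem_filter.mp h1.2
      refine hstrict T' h2.1 ?_
      refine Finset.ssubset_iff_subset_ne.mpr ⟨h2.2, fun hEq => h1.1 (Subtype.ext hEq.symm)⟩
    rw [hz] at hk
    linarith
  suffices H : ∀ k : ℕ, ∀ T, ∀ _ : T ∈ s, n - T.1.card ≤ k → g T = 0 by
    exact fun T hT => H n T hT (by omega)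
  intro k
  induction k with
  | zero =>
      intro T hT hk
      refine step T hT fun T' hT' hss => ?_
      exfalso
      have h1 := Finset.card_lt_card hss
      have h2 := Finset.card_le_univ T'.1
      rw [Fintype.card_fin] at h2
      omega
  | succ k ih =>
      intro T hT hk
      refine step T hT fun T' hT' hss => ?_
      refine ih T' hT' ?_
      have h1 := Finset.card_lt_card hss
      have h2 := Finset.card_le_univ T'.1
      rw [Fintype.card_fin] at h2
      omega

end
end
end Stmt2Aux

open Stmt2Aux in
theorem stmt2 (n : ℕ) (hn : 1 ≤ n) (r : ℝ) (hr0 : 0 < r) (hr1 : r < 1) (hr : r ≠ 1 / 2) :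
    Module.finrank ℝ
        (vectorSpan ℝ
          {p : (Fin n → Bool) → ℝ |
            ∃ 𝒮 : Finpartition (Finset.univ : Finset (Fin n)), p = twoStateDist r 𝒮}) =
      2 ^ n - n - 1 ∧
    Module.finrank ℝ
        (vectorSpan ℝ
          {p : (Fin n → Bool) → ℝ |
            ∃ 𝒮 : Finpartition (Finset.univ : Finset (Fin n)),
              IsStarPartition 𝒮 ∧ p = twoStateDist r 𝒮}) =
      2 ^ n - n - 1 := by
  classical
  set bigSet : Set ((Fin n → Bool) → ℝ) :=
    {p | ∃ 𝒮 : Finpartition (Finset.univ : Finset (Fin n)), p = twoStateDist r 𝒮} with hbig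
  set starSet : Set ((Fin n → Bool) → ℝ) :=
    {p | ∃ 𝒮 : Finpartition (Finset.univ : Finset (Fin n)),
      IsStarPartition 𝒮 ∧ p = twoStateDist r 𝒮} with hstarS
  have hstar1 : ∀ T : {T : Finset (Fin n) // 2 ≤ T.card}, IsStarPartition (starP T.1 T.2) := by
    intro T
    unfold IsStarPartition
    rw [isStar_starP]
    simp
  have hstarbot : IsStarPartition (⊥ : Finpartition (Finset.univ : Finset (Fin n))) := by
    unfold IsStarPartition
    have h : ((⊥ : Finpartition (Finset.univ : Finset (Fin n))).parts.filter
        fun B => 1 < B.card) = ∅ := by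
      rw [Finset.filter_eq_empty_iff]
      intro B hB
      have := isStar_bot B hB
      omega
    rw [h]
    simp
  have hsub : starSet ⊆ bigSet := by
    rintro p ⟨𝒮, _, h⟩
    exact ⟨𝒮, h⟩
  have hupper : vectorSpan ℝ bigSet ≤ LinearMap.ker (Psi (n := n) r) := by
    rw [vectorSpan_def, Submodule.span_le]
    rintro v hv
    rw [Set.mem_vsub] at hv
    obtain ⟨p, hp, q, hq, rfl⟩ := hv
    obtain ⟨𝒮p, rfl⟩ := hp
    obtain ⟨𝒮q, rfl⟩ := hq
    simp only [SetLike.mem_coe, LinearMap.mem_ker, vsub_eq_sub, map_sub,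
      Psi_twoStateDist, sub_self]
  have hUB : Module.finrank ℝ (vectorSpan ℝ bigSet) ≤ 2 ^ n - n - 1 := by
    have h := Submodule.finrank_mono hupper
    rw [finrank_ker_Psi] at h
    rw [show 2 ^ n - n - 1 = 2 ^ n - (n + 1) from Nat.sub_sub _ _ _]
    exact h
  have hmem : ∀ T : {T : Finset (Fin n) // 2 ≤ T.card}, vT r T ∈ vectorSpan ℝ starSet := by
    intro T
    have h1 : twoStateDist r (starP T.1 T.2) ∈ starSet := ⟨starP T.1 T.2, hstar1 T, rfl⟩
    have h2 : twoStateDist r (⊥ : Finpartition (Finset.univ : Finset (Fin n))) ∈ starSet :=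
      ⟨⊥, hstarbot, rfl⟩
    have h3 := vsub_mem_vectorSpan ℝ h1 h2
    simpa [vT, vsub_eq_sub] using h3
  have hli := li_vT r hr0 hr1 hr (n := n)
  have hli2 : LinearIndependent ℝ
      (fun T : {T : Finset (Fin n) // 2 ≤ T.card} =>
        (⟨vT r T, hmem T⟩ : vectorSpan ℝ starSet)) := by
    apply LinearIndependent.of_comp (vectorSpan ℝ starSet).subtype
    exact hli
  have hLB : 2 ^ n - n - 1 ≤ Module.finrank ℝ (vectorSpan ℝ starSet) := by
    have h := hli2.fintype_card_le_finrank
    rwa [card_subtype_two_le hn] at h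
  have hmid : Module.finrank ℝ (vectorSpan ℝ starSet) ≤ Module.finrank ℝ (vectorSpan ℝ bigSet) :=
    Submodule.finrank_mono (vectorSpan_mono ℝ hsub)
  exact ⟨le_antisymm hUB (le_trans hLB hmid),
    le_antisymm (le_trans hmid hUB) hLB⟩
end

section
/- There do not exist: a probability measure ν on ℝ with ν {t : t < 0} = 0, and functions λ, λ' : Fin 5 → ℝ with λ e > 0 and λ' e > 0 for every e, such that for every A : Finset (Fin 4) of even cardinality, ∫ t, Real.exp (−2 * t * (∑_{e ∈ Fin 5 with |L e ∩ A| odd} λ e)) ∂ν = Real.exp (−2 * ∑_{e ∈ Fin 5 with |L' e ∩ A| odd} λ' e), where L is the edge/leaf-side structure of the quartet tree 01|23 and L' that of the quartet tree 02|13. (This is the CFN rates-across-sites identifiability theorem for quartets: a rates-across-sites mixture on the quartet tree 01|23 with positive branch lengths can never produce the site-pattern distribution of an unmixed CFN process on the quartet tree 02|13 with positive branch lengths.) -/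
open MeasureTheory Real

lemma expInt_aux (ν : MeasureTheory.Measure ℝ) [MeasureTheory.IsProbabilityMeasure ν]
    (hν : ν {t : ℝ | t < 0} = 0)
    (a : ℝ) (ha : 0 ≤ a) : MeasureTheory.Integrable (fun t : ℝ => Real.exp (-2 * t * a)) ν := by
  have hae : ∀ᵐ t ∂ν, 0 ≤ t := by
    rw [ae_iff]
    simpa [not_le] using hν
  refine (integrable_const (1:ℝ)).mono' ?_ ?_
  · exact (Real.continuous_exp.comp (by continuity)).aestronglyMeasurable
  · filter_upwards [hae] with t ht
    rw [Real.norm_eq_abs, abs_of_pos (Real.exp_pos _)]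
    exact Real.exp_le_one_iff.mpr (by nlinarith)

lemma cheb_aux (ν : MeasureTheory.Measure ℝ) [MeasureTheory.IsProbabilityMeasure ν]
    (hν : ν {t : ℝ | t < 0} = 0)
    (a b : ℝ) (ha : 0 ≤ a) (hb : 0 ≤ b) :
    (∫ t, Real.exp (-2 * t * a) ∂ν) * (∫ t, Real.exp (-2 * t * b) ∂ν) ≤
      ∫ t, Real.exp (-2 * t * (a + b)) ∂ν := by
  set f : ℝ → ℝ := fun t => Real.exp (-2 * t * a) with hf_def
  set h : ℝ → ℝ := fun t => Real.exp (-2 * t * b) with hh_def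
  have key : ∀ t : ℝ, f t * h t = Real.exp (-2 * t * (a + b)) := by
    intro t; rw [hf_def, hh_def]; dsimp only
    rw [← Real.exp_add]; ring_nf
  have hf : Integrable f ν := expInt_aux ν hν a ha
  have hh : Integrable h ν := expInt_aux ν hν b hb
  have hfh : Integrable (fun t => f t * h t) ν := by
    simp_rw [key]; exact expInt_aux ν hν (a+b) (by linarith)
  have hmono : ∀ s t : ℝ, s ≤ t → f t ≤ f s := by
    intro s t hst; exact Real.exp_le_exp.mpr (by nlinarith)
  have hmonoh : ∀ s t : ℝ, s ≤ t → h t ≤ h s := by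
    intro s t hst; exact Real.exp_le_exp.mpr (by nlinarith)
  have hpos : 0 ≤ ∫ p : ℝ × ℝ, (f p.1 - f p.2) * (h p.1 - h p.2) ∂ν.prod ν := by
    refine integral_nonneg fun p => ?_
    show (0:ℝ) ≤ (f p.1 - f p.2) * (h p.1 - h p.2)
    rcases le_total p.1 p.2 with hle | hle
    · nlinarith [hmono p.1 p.2 hle, hmonoh p.1 p.2 hle]
    · nlinarith [hmono p.2 p.1 hle, hmonoh p.2 p.1 hle]
  have J1 : Integrable (fun p : ℝ × ℝ => f p.1 * h p.1) (ν.prod ν) := by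
    simpa using hfh.mul_prod (integrable_const (1:ℝ))
  have J2 : Integrable (fun p : ℝ × ℝ => f p.2 * h p.2) (ν.prod ν) := by
    simpa using (integrable_const (1:ℝ)).mul_prod hfh
  have I3 : Integrable (fun p : ℝ × ℝ => f p.1 * h p.2) (ν.prod ν) := hf.mul_prod hh
  have I4 : Integrable (fun p : ℝ × ℝ => h p.1 * f p.2) (ν.prod ν) := hh.mul_prod hf
  have e1 : ∫ p : ℝ × ℝ, f p.1 * h p.1 ∂ν.prod ν = ∫ t, f t * h t ∂ν := by
    have := integral_prod_mul (μ := ν) (ν := ν) (fun t => f t * h t) (fun _ : ℝ => (1:ℝ))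
    simpa using this
  have e2 : ∫ p : ℝ × ℝ, f p.2 * h p.2 ∂ν.prod ν = ∫ t, f t * h t ∂ν := by
    have := integral_prod_mul (μ := ν) (ν := ν) (fun _ : ℝ => (1:ℝ)) (fun t => f t * h t)
    simpa using this
  have e3 : ∫ p : ℝ × ℝ, f p.1 * h p.2 ∂ν.prod ν = (∫ t, f t ∂ν) * ∫ t, h t ∂ν :=
    integral_prod_mul f h
  have e4 : ∫ p : ℝ × ℝ, h p.1 * f p.2 ∂ν.prod ν = (∫ t, h t ∂ν) * ∫ t, f t ∂ν :=
    integral_prod_mul h f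
  have hexp : ∫ p : ℝ × ℝ, (f p.1 - f p.2) * (h p.1 - h p.2) ∂ν.prod ν =
      2 * (∫ t, f t * h t ∂ν) - 2 * ((∫ t, f t ∂ν) * ∫ t, h t ∂ν) := by
    calc ∫ p : ℝ × ℝ, (f p.1 - f p.2) * (h p.1 - h p.2) ∂ν.prod ν
        = ∫ p : ℝ × ℝ, (f p.1 * h p.1 + f p.2 * h p.2) - (f p.1 * h p.2 + h p.1 * f p.2)
            ∂ν.prod ν := by congr 1; funext p; ring
      _ = (∫ p : ℝ × ℝ, (f p.1 * h p.1 + f p.2 * h p.2) ∂ν.prod ν) -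
            ∫ p : ℝ × ℝ, (f p.1 * h p.2 + h p.1 * f p.2) ∂ν.prod ν :=
          integral_sub (J1.add J2) (I3.add I4)
      _ = 2 * (∫ t, f t * h t ∂ν) - 2 * ((∫ t, f t ∂ν) * ∫ t, h t ∂ν) := by
          rw [integral_add J1 J2, integral_add I3 I4, e1, e2, e3, e4]; ring
  rw [hexp] at hpos
  calc (∫ t, f t ∂ν) * (∫ t, h t ∂ν) ≤ ∫ t, f t * h t ∂ν := by linarith
    _ = ∫ t, Real.exp (-2 * t * (a + b)) ∂ν := integral_congr_ae (.of_forall key)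

/-- Leaf-side map of the quartet tree `01|23`: edges `0,1,2,3` are pendant and
edge `4` is internal with taxa `{0,1}` on one side. -/
def quartetL : Fin 5 → Finset (Fin 4)
  | 0 => {0}
  | 1 => {1}
  | 2 => {2}
  | 3 => {3}
  | 4 => {0, 1}

/-- Leaf-side map of the quartet tree `02|13`. -/
def quartetL' : Fin 5 → Finset (Fin 4)
  | 0 => {0}
  | 1 => {1}
  | 2 => {2}
  | 3 => {3}
  | 4 => {0, 2}

/-- CFN rates-across-sites identifiability for quartets: a rates-across-sites mixture
on the quartet tree `01|23` with positive branch lengths can never produce the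
site-pattern distribution of an unmixed CFN process on the quartet tree `02|13`
with positive branch lengths. -/
theorem stmt4 :
    ¬ ∃ (ν : MeasureTheory.Measure ℝ) (_ : MeasureTheory.IsProbabilityMeasure ν)
      (lam lam' : Fin 5 → ℝ),
        ν {t : ℝ | t < 0} = 0 ∧ (∀ e, 0 < lam e) ∧ (∀ e, 0 < lam' e) ∧
        ∀ A : Finset (Fin 4), Even A.card →
          (∫ t : ℝ,
              Real.exp (-2 * t *
                ∑ e ∈ Finset.univ.filter fun e => Odd (quartetL e ∩ A).card, lam e) ∂ν) =
            Real.exp (-2 *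
              ∑ e ∈ Finset.univ.filter fun e => Odd (quartetL' e ∩ A).card, lam' e) := by
  rintro ⟨ν, hprob, lam, lam', hν0, hlam, hlam', hEq⟩
  have hae : ∀ᵐ t ∂ν, 0 ≤ t := by
    rw [ae_iff]
    simpa [not_le] using hν0
  -- compute the filters for the four pattern sets we use
  have e01 : (Finset.univ.filter fun e : Fin 5 =>
      Odd (quartetL e ∩ ({0,1}:Finset (Fin 4))).card) = ({0,1} : Finset (Fin 5)) := by decide
  have e01' : (Finset.univ.filter fun e : Fin 5 =>
      Odd (quartetL' e ∩ ({0,1}:Finset (Fin 4))).card) = ({0,1,4} : Finset (Fin 5)) := by decide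
  have e02 : (Finset.univ.filter fun e : Fin 5 =>
      Odd (quartetL e ∩ ({0,2}:Finset (Fin 4))).card) = ({0,2,4} : Finset (Fin 5)) := by decide
  have e02' : (Finset.univ.filter fun e : Fin 5 =>
      Odd (quartetL' e ∩ ({0,2}:Finset (Fin 4))).card) = ({0,2} : Finset (Fin 5)) := by decide
  have e13 : (Finset.univ.filter fun e : Fin 5 =>
      Odd (quartetL e ∩ ({1,3}:Finset (Fin 4))).card) = ({1,3,4} : Finset (Fin 5)) := by decide
  have e13' : (Finset.univ.filter fun e : Fin 5 =>
      Odd (quartetL' e ∩ ({1,3}:Finset (Fin 4))).card) = ({1,3} : Finset (Fin 5)) := by decide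
  have eU : (Finset.univ.filter fun e : Fin 5 =>
      Odd (quartetL e ∩ (Finset.univ : Finset (Fin 4))).card)
      = ({0,1,2,3} : Finset (Fin 5)) := by decide
  have eU' : (Finset.univ.filter fun e : Fin 5 =>
      Odd (quartetL' e ∩ (Finset.univ : Finset (Fin 4))).card)
      = ({0,1,2,3} : Finset (Fin 5)) := by decide
  -- sum expansions
  have s2 : ∀ (f : Fin 5 → ℝ) (a b : Fin 5), a ≠ b →
      ∑ e ∈ ({a,b}:Finset (Fin 5)), f e = f a + f b := by
    intro f a b hab; rw [Finset.sum_pair hab]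
  have s3 : ∀ (f : Fin 5 → ℝ) (a b c : Fin 5), a ≠ b → a ≠ c → b ≠ c →
      ∑ e ∈ ({a,b,c}:Finset (Fin 5)), f e = f a + f b + f c := by
    intro f a b c hab hac hbc
    rw [show ({a,b,c}:Finset (Fin 5)) = insert a {b,c} from rfl,
      Finset.sum_insert (by simp [hab, hac]), Finset.sum_pair hbc]; ring
  have s4 : ∀ f : Fin 5 → ℝ,
      ∑ e ∈ ({0,1,2,3}:Finset (Fin 5)), f e = f 0 + f 1 + f 2 + f 3 := by
    intro f
    rw [show ({0,1,2,3}:Finset (Fin 5)) = insert 0 (insert 1 {2,3}) from rfl,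
      Finset.sum_insert (by decide), Finset.sum_insert (by decide),
      Finset.sum_pair (by decide)]; ring
  -- the four equations
  have h01 := hEq {0,1} (by decide)
  rw [e01, e01', s2 lam 0 1 (by decide), s3 lam' 0 1 4 (by decide) (by decide) (by decide)] at h01
  have h02 := hEq {0,2} (by decide)
  rw [e02, e02', s3 lam 0 2 4 (by decide) (by decide) (by decide),
    s2 lam' 0 2 (by decide)] at h02
  have h13 := hEq {1,3} (by decide)
  rw [e13, e13', s3 lam 1 3 4 (by decide) (by decide) (by decide),
    s2 lam' 1 3 (by decide)] at h13
  have hU := hEq Finset.univ (by decide)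
  rw [eU, eU', s4 lam, s4 lam'] at hU
  -- abbreviations
  set M : ℝ := lam 0 + lam 1 + lam 2 + lam 3 with hM_def
  -- Chebyshev correlation inequality applied to the two paths crossing the internal edge
  have hch := cheb_aux ν hν0 (lam 0 + lam 2 + lam 4) (lam 1 + lam 3 + lam 4)
    (by have := hlam 0; have := hlam 2; have := hlam 4; linarith)
    (by have := hlam 1; have := hlam 3; have := hlam 4; linarith)
  rw [h02, h13] at hch
  have hsum : (lam 0 + lam 2 + lam 4) + (lam 1 + lam 3 + lam 4) = M + 2 * lam 4 := by
    rw [hM_def]; ring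
  rw [hsum] at hch
  have hprodexp : Real.exp (-2 * (lam' 0 + lam' 2)) * Real.exp (-2 * (lam' 1 + lam' 3)) =
      Real.exp (-2 * (lam' 0 + lam' 1 + lam' 2 + lam' 3)) := by
    rw [← Real.exp_add]; ring_nf
  rw [hprodexp, ← hU] at hch
  -- monotonicity: the integral at M + 2*lam 4 is at most the one at M
  have intM : Integrable (fun t : ℝ => Real.exp (-2 * t * M)) ν :=
    expInt_aux ν hν0 M (by nlinarith [hlam 0, hlam 1, hlam 2, hlam 3])
  have intM2 : Integrable (fun t : ℝ => Real.exp (-2 * t * (M + 2 * lam 4))) ν :=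
    expInt_aux ν hν0 _ (by nlinarith [hlam 0, hlam 1, hlam 2, hlam 3, hlam 4])
  have hmono : (∫ t, Real.exp (-2 * t * (M + 2 * lam 4)) ∂ν) ≤
      ∫ t, Real.exp (-2 * t * M) ∂ν := by
    refine integral_mono_ae intM2 intM ?_
    filter_upwards [hae] with t ht
    exact Real.exp_le_exp.mpr (by nlinarith [hlam 4])
  -- hence equality, so the measure is concentrated at 0
  have hzero : ∫ t, (Real.exp (-2 * t * M) - Real.exp (-2 * t * (M + 2 * lam 4))) ∂ν = 0 := by
    rw [integral_sub intM intM2]; linarith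
  have hnn : 0 ≤ᵐ[ν] fun t => Real.exp (-2 * t * M) - Real.exp (-2 * t * (M + 2 * lam 4)) := by
    filter_upwards [hae] with t ht
    have : Real.exp (-2 * t * (M + 2 * lam 4)) ≤ Real.exp (-2 * t * M) :=
      Real.exp_le_exp.mpr (by nlinarith [hlam 4])
    simpa using sub_nonneg.mpr this
  have haez := (integral_eq_zero_iff_of_nonneg_ae hnn (intM.sub intM2)).mp hzero
  have ht0 : ∀ᵐ t ∂ν, t = 0 := by
    filter_upwards [haez, hae] with t h1 h2
    have h1' : Real.exp (-2 * t * M) - Real.exp (-2 * t * (M + 2 * lam 4)) = 0 := h1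
    have hexp_eq : Real.exp (-2 * t * M) = Real.exp (-2 * t * (M + 2 * lam 4)) := by linarith
    have harg : -2 * t * M = -2 * t * (M + 2 * lam 4) := Real.exp_injective hexp_eq
    have : t * lam 4 = 0 := by nlinarith
    rcases mul_eq_zero.mp this with h | h
    · exact h
    · exact absurd h (ne_of_gt (hlam 4))
  -- but then the mixture Fourier coordinate at {0,1} equals 1, contradiction
  have hone : (∫ t : ℝ, Real.exp (-2 * t * (lam 0 + lam 1)) ∂ν) = 1 := by
    have : (∫ t : ℝ, Real.exp (-2 * t * (lam 0 + lam 1)) ∂ν) = ∫ _ : ℝ, (1:ℝ) ∂ν := by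
      refine integral_congr_ae ?_
      filter_upwards [ht0] with t ht
      rw [ht]; simp
    rw [this]; simp
  rw [hone] at h01
  have : Real.exp (-2 * (lam' 0 + lam' 1 + lam' 4)) < 1 := by
    apply Real.exp_lt_one_iff.mpr
    nlinarith [hlam' 0, hlam' 1, hlam' 4]
  linarith
end

section
/- Let θ : Fin 5 → ℝ with 0 < θ e ≤ 1 for every e, and let q(θ) : Finset (Fin 3) → ℝ be the collapsed Fourier vector of the CFN quartet tree 01|23 with edge fidelities θ, namely q(θ) A = ∏_{e ∈ Fin 5 with |L e ∩ f A| odd} θ e, where L e = {e} for e = 0,1,2,3 and L 4 = {0,1}. Then q(θ) lies in the convex hull (over ℝ) of the set {v S : S ∈ Finset (Fin 4)} if and only if θ 4 ≥ θ 0 * θ 2 and θ 4 ≥ θ 0 * θ 3 and θ 4 ≥ θ 1 * θ 2 and θ 4 ≥ θ 1 * θ 3. (In phylogenetic terms: the site-pattern frequency vector of a resolved quartet tree is obtainable as a phylogenetic mixture on the four-taxon star tree exactly when the internal branch length is at most the sum of the branch lengths of every pair of non-adjacent pendant edges.) -/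
/-- The map from collapsed Fourier indices `A : Finset (Fin 3)` to even subsets of
`Fin 4`: the image of `A` under `Fin.castSucc`, with the element `3` inserted
when `|A|` is odd. -/
def uncollapse (A : Finset (Fin 3)) : Finset (Fin 4) :=
  if Even A.card then A.image Fin.castSucc else insert 3 (A.image Fin.castSucc)

/-- The collapsed Fourier vector of the star-tree mixture polytope vertex
corresponding to `S : Finset (Fin 4)`. -/
def starVertex (S : Finset (Fin 4)) : Finset (Fin 3) → ℝ :=
  fun A => if uncollapse A ⊆ S then 1 else 0

lemma starKey (p : Fin 4 → ℝ) (T : Finset (Fin 4)) :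
    ∑ S : Finset (Fin 4), ((∏ i ∈ S, p i) * ∏ i ∈ Sᶜ, (1 - p i)) * (if T ⊆ S then (1:ℝ) else 0)
      = ∏ i ∈ T, p i := by
  classical
  simp only [mul_ite, mul_one, mul_zero]
  rw [← Finset.sum_filter]
  have hbij : ∑ S ∈ Finset.univ.filter (fun S => T ⊆ S), ((∏ i ∈ S, p i) * ∏ i ∈ Sᶜ, (1 - p i))
      = ∑ t ∈ Tᶜ.powerset, (∏ i ∈ T, p i) * ((∏ i ∈ t, p i) * ∏ i ∈ Tᶜ \ t, (1 - p i)) := by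
    refine Finset.sum_nbij' (fun S => S \ T) (fun t => T ∪ t) ?_ ?_ ?_ ?_ ?_
    · intro S hS
      simp only [Finset.mem_powerset]
      intro x hx
      simp only [Finset.mem_sdiff] at hx
      simp [Finset.mem_compl, hx.2]
    · intro t ht
      simp only [Finset.mem_filter, Finset.mem_univ, true_and]
      exact Finset.subset_union_left
    · intro S hS
      simp only [Finset.mem_filter, Finset.mem_univ, true_and] at hS
      exact Finset.union_sdiff_of_subset hS
    · intro t ht
      simp only [Finset.mem_powerset] at ht
      ext x
      simp only [Finset.mem_sdiff, Finset.mem_union]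
      constructor
      · rintro ⟨h1 | h1, h2⟩
        · exact absurd h1 h2
        · exact h1
      · intro hx
        exact ⟨Or.inr hx, fun hxT => (Finset.mem_compl.1 (ht hx)) hxT⟩
    · intro S hS
      simp only [Finset.mem_filter, Finset.mem_univ, true_and] at hS
      have h1 : (∏ i ∈ S, p i) = (∏ i ∈ T, p i) * ∏ i ∈ S \ T, p i := by
        rw [mul_comm, Finset.prod_sdiff hS]
      have h2 : Sᶜ = Tᶜ \ (S \ T) := by
        ext x
        simp only [Finset.mem_compl, Finset.mem_sdiff, not_and, not_not]
        constructor
        · intro hx; exact ⟨fun hxT => hx (hS hxT), fun hxS => absurd hxS hx⟩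
        · intro ⟨hxT, hx⟩ hxS; exact hxT (hx hxS)
      rw [h1, h2]; ring
  rw [hbij, ← Finset.mul_sum, ← Finset.prod_add p (fun i => 1 - p i) Tᶜ]
  simp

lemma prodPoint_mem (p : Fin 4 → ℝ) (h0 : ∀ i, 0 ≤ p i) (h1 : ∀ i, p i ≤ 1) :
    (fun A => ∏ i ∈ uncollapse A, p i) ∈
      convexHull ℝ {q : Finset (Fin 3) → ℝ | ∃ S : Finset (Fin 4), q = starVertex S} := by
  classical
  have hsum := (convex_convexHull ℝ
      {q : Finset (Fin 3) → ℝ | ∃ S : Finset (Fin 4), q = starVertex S}).sum_mem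
    (t := (Finset.univ : Finset (Finset (Fin 4))))
    (w := fun S => (∏ i ∈ S, p i) * ∏ i ∈ Sᶜ, (1 - p i))
    (z := starVertex)
    (fun S _ => mul_nonneg (Finset.prod_nonneg fun i _ => h0 i)
      (Finset.prod_nonneg fun i _ => by linarith [h1 i]))
    (by simpa using starKey p ∅)
    (fun S _ => subset_convexHull ℝ _ ⟨S, rfl⟩)
  convert hsum using 1
  funext A
  rw [Finset.sum_apply]
  simp only [Pi.smul_apply, smul_eq_mul, starVertex]
  exact (starKey p (uncollapse A)).symm

lemma uprod (u : Finset (Fin 4)) (f : Fin 4 → ℝ) :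
    ∏ i ∈ u, f i = ∏ i : Fin 4, if i ∈ u then f i else 1 := by
  rw [Finset.prod_ite_mem, Finset.univ_inter]

set_option maxHeartbeats 2000000 in
theorem stmt5 (θ : Fin 5 → ℝ) (hθ : ∀ e, 0 < θ e ∧ θ e ≤ 1) :
    (fun A : Finset (Fin 3) =>
        ∏ e ∈ Finset.univ.filter fun e => Odd (quartetL e ∩ uncollapse A).card, θ e) ∈
      convexHull ℝ {p : Finset (Fin 3) → ℝ | ∃ S : Finset (Fin 4), p = starVertex S} ↔
    (θ 0 * θ 2 ≤ θ 4 ∧ θ 0 * θ 3 ≤ θ 4 ∧ θ 1 * θ 2 ≤ θ 4 ∧ θ 1 * θ 3 ≤ θ 4) := by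
  classical
  have h0 : ∀ e, 0 < θ e := fun e => (hθ e).1
  have h1 : ∀ e, θ e ≤ 1 := fun e => (hθ e).2
  constructor
  · -- necessity
    intro hmem
    have key : ∀ A1 : Finset (Fin 3),
        (∏ e ∈ Finset.univ.filter fun e =>
            Odd (quartetL e ∩ uncollapse ({0,1,2} : Finset (Fin 3))).card, θ e) ≤
        (∏ e ∈ Finset.univ.filter fun e => Odd (quartetL e ∩ uncollapse A1).card, θ e) := by
      intro A1
      have hconv : Convex ℝ {q : Finset (Fin 3) → ℝ |
          q ({0,1,2} : Finset (Fin 3)) ≤ q A1} := by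
        intro x hx y hy α β hα hβ hαβ
        simp only [Set.mem_setOf_eq, Pi.add_apply, Pi.smul_apply, smul_eq_mul] at *
        exact add_le_add (mul_le_mul_of_nonneg_left hx hα) (mul_le_mul_of_nonneg_left hy hβ)
      have hsub : {p : Finset (Fin 3) → ℝ | ∃ S : Finset (Fin 4), p = starVertex S} ⊆
          {q : Finset (Fin 3) → ℝ | q ({0,1,2} : Finset (Fin 3)) ≤ q A1} := by
        rintro _ ⟨S, rfl⟩
        simp only [starVertex, Set.mem_setOf_eq]
        by_cases h : uncollapse ({0,1,2} : Finset (Fin 3)) ⊆ S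
        · have hu : (Finset.univ : Finset (Fin 4)) ⊆ S := by
            have he : uncollapse ({0,1,2} : Finset (Fin 3)) = Finset.univ := by decide
            rwa [he] at h
          rw [if_pos h, if_pos ((Finset.subset_univ _).trans hu)]
        · rw [if_neg h]
          split <;> norm_num
      exact convexHull_min hsub hconv hmem
    have k02 := key {0, 2}
    have k0 := key {0}
    have k12 := key {1, 2}
    have k1 := key {1}
    simp (config := { decide := true }) [Finset.prod_filter, Fin.prod_univ_five] at k02 k0 k12 k1
    refine ⟨?_, ?_, ?_, ?_⟩
    · nlinarith [k1, mul_pos (h0 1) (h0 3)]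
    · nlinarith [k12, mul_pos (h0 1) (h0 2)]
    · nlinarith [k0, mul_pos (h0 0) (h0 3)]
    · nlinarith [k02, mul_pos (h0 0) (h0 2)]
  · -- sufficiency
    rintro ⟨hc1, hc2, hc3, hc4⟩
    obtain ⟨K, hK⟩ : ∃ K : ℝ, K = max (max (θ 0) (θ 1)) (θ 4) := ⟨_, rfl⟩
    have hK0 : 0 < K := hK ▸ lt_of_lt_of_le (h0 4) (le_max_right _ _)
    have hK1 : K ≤ 1 := hK ▸ max_le (max_le (h1 0) (h1 1)) (h1 4)
    have htK : θ 4 ≤ K := hK ▸ le_max_right _ _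
    have h0K : θ 0 ≤ K := hK ▸ le_trans (le_max_left _ _) (le_max_left _ _)
    have h1K : θ 1 ≤ K := hK ▸ le_trans (le_max_right _ _) (le_max_left _ _)
    have h2K : θ 2 * K ≤ θ 4 := by
      rw [hK, mul_comm, ← le_div_iff₀ (h0 2)]
      refine max_le (max_le ?_ ?_) ?_ <;> rw [le_div_iff₀ (h0 2)]
      · exact hc1
      · exact hc3
      · nlinarith [h0 4, h1 2]
    have h3K : θ 3 * K ≤ θ 4 := by
      rw [hK, mul_comm, ← le_div_iff₀ (h0 3)]
      refine max_le (max_le ?_ ?_) ?_ <;> rw [le_div_iff₀ (h0 3)]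
      · exact hc2
      · exact hc4
      · nlinarith [h0 4, h1 3]
    have hKne : K ≠ 0 := ne_of_gt hK0
    have h4ne : θ 4 ≠ 0 := ne_of_gt (h0 4)
    have hK2 : K ^ 2 ≤ 1 := by nlinarith
    have ht2 : θ 4 ^ 2 ≤ K ^ 2 := by nlinarith [h0 4]
    have hd : θ 4 ^ 2 / K ^ 2 ≤ 1 := by
      rw [div_le_one (by positivity)]; exact ht2
    have hd2 : θ 4 ^ 2 ≤ θ 4 ^ 2 / K ^ 2 := by
      rw [le_div_iff₀ (by positivity)]
      nlinarith [sq_nonneg (θ 4)]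
    obtain ⟨pp, hpp⟩ : ∃ pp : Fin 4 → Fin 4 → ℝ, pp =
      ![![θ 0 / K, θ 1 / K, θ 2 * K / θ 4, θ 3 * K / θ 4],
        ![θ 0 / K, θ 1 / K, 0, 0],
        ![0, 0, θ 2 * K / θ 4, θ 3 * K / θ 4],
        ![0, 0, 0, 0]] := ⟨_, rfl⟩
    obtain ⟨w, hw⟩ : ∃ w : Fin 4 → ℝ, w =
      ![θ 4 ^ 2, K ^ 2 - θ 4 ^ 2, θ 4 ^ 2 / K ^ 2 - θ 4 ^ 2,
        (1 - K ^ 2) * (1 - θ 4 ^ 2 / K ^ 2)] := ⟨_, rfl⟩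
    have hwn : ∀ j, 0 ≤ w j := by
      intro j
      fin_cases j <;> simp [hw] <;>
      first
        | positivity
        | linarith
        | exact mul_nonneg (by linarith) (by linarith)
    have hws : ∑ j : Fin 4, w j = 1 := by
      rw [Fin.sum_univ_four]
      simp only [hw, Matrix.cons_val_zero, Matrix.cons_val_one, Matrix.head_cons,
        Matrix.cons_val_two, Matrix.tail_cons, Matrix.cons_val_three]
      field_simp
      ring
    have hppb : ∀ j i, 0 ≤ pp j i ∧ pp j i ≤ 1 := by
      intro j i
      fin_cases j <;> fin_cases i <;> simp [hpp, Matrix.vecHead, Matrix.vecTail] <;>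
      constructor <;>
      first
        | exact div_nonneg (h0 _).le hK0.le
        | exact div_nonneg (mul_nonneg (h0 _).le hK0.le) (h0 4).le
        | (rw [div_le_one hK0]; first | exact h0K | exact h1K)
        | (rw [div_le_one (h0 4)]; first | exact h2K | exact h3K)
        | norm_num
    have hz : ∀ j : Fin 4,
        (fun A : Finset (Fin 3) => ∏ i : Fin 4, if i ∈ uncollapse A then pp j i else 1) ∈
        convexHull ℝ {q : Finset (Fin 3) → ℝ | ∃ S : Finset (Fin 4), q = starVertex S} := by
      intro j
      have := prodPoint_mem (pp j) (fun i => (hppb j i).1) (fun i => (hppb j i).2)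
      convert this using 1
      funext A
      exact (uprod (uncollapse A) (pp j)).symm
    have hsum := (convex_convexHull ℝ
        {q : Finset (Fin 3) → ℝ | ∃ S : Finset (Fin 4), q = starVertex S}).sum_mem
      (t := (Finset.univ : Finset (Fin 4))) (w := w)
      (z := fun j (A : Finset (Fin 3)) => ∏ i : Fin 4, if i ∈ uncollapse A then pp j i else 1)
      (fun j _ => hwn j) hws (fun j _ => hz j)
    convert hsum using 1
    funext A
    rw [Finset.sum_apply, Fin.sum_univ_four]
    simp only [Pi.smul_apply, smul_eq_mul]
    have hA : A ∈ (Finset.univ : Finset (Finset (Fin 3))) := Finset.mem_univ A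
    fin_cases hA <;>
    · simp (config := { decide := true }) only [hpp, hw, Finset.prod_filter,
        Fin.prod_univ_five, Fin.prod_univ_four, if_true, if_false,
        Matrix.cons_val_zero, Matrix.cons_val_one, Matrix.head_cons,
        Matrix.cons_val_two, Matrix.tail_cons, Matrix.cons_val_three,
        Matrix.head_fin_const, mul_one, one_mul]
      field_simp
      ring
end

section
/- In the real vector space (Fin 4 → Bool) → ℝ of functions on four-taxon CFN site patterns, let P₁ be the convex hull of {D 𝒮 : 𝒮 a partition of Fin 4 with 𝒮 ≠ {{0,2},{1,3}} and 𝒮 ≠ {{0,3},{1,2}}}, let P₂ be the convex hull of {D 𝒮 : 𝒮 ≠ {{0,1},{2,3}} and 𝒮 ≠ {{0,3},{1,2}}}, and let P₃ be the convex hull of {D 𝒮 : 𝒮 ≠ {{0,1},{2,3}} and 𝒮 ≠ {{0,2},{1,3}}}. Then P₁ ∩ P₂ ∩ P₃ equals the convex hull of {D 𝒮 : 𝒮 a star partition of Fin 4}. (P₁, P₂, P₃ are the polytopes of CFN phylogenetic mixtures on the three resolved quartet topologies 01|23, 02|13, 03|12 respectively, and the right-hand side is the polytope of mixtures on the four-taxon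 star tree.) -/
noncomputable def cfnP (P : Finset (Finset (Fin 4))) : (Fin 4 → Bool) → ℝ :=
  fun x => if ∀ B ∈ P, ∀ i ∈ B, ∀ j ∈ B, x i = x j then (1 / 2 : ℝ) ^ P.card else 0

theorem cfnDist_eq (𝒮 : Finpartition (Finset.univ : Finset (Fin 4))) :
    cfnDist 𝒮 = cfnP 𝒮.parts := rfl

def q0 : Finset (Finset (Fin 4)) := {{0}, {1}, {2}, {3}}
def q1 : Finset (Finset (Fin 4)) := {{0, 1}, {2}, {3}}
def q2 : Finset (Finset (Fin 4)) := {{0, 2}, {1}, {3}}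
def q3 : Finset (Finset (Fin 4)) := {{0, 3}, {1}, {2}}
def q4 : Finset (Finset (Fin 4)) := {{1, 2}, {0}, {3}}
def q5 : Finset (Finset (Fin 4)) := {{1, 3}, {0}, {2}}
def q6 : Finset (Finset (Fin 4)) := {{2, 3}, {0}, {1}}
def q7 : Finset (Finset (Fin 4)) := {{0, 1, 2}, {3}}
def q8 : Finset (Finset (Fin 4)) := {{0, 1, 3}, {2}}
def q9 : Finset (Finset (Fin 4)) := {{0, 2, 3}, {1}}
def q10 : Finset (Finset (Fin 4)) := {{1, 2, 3}, {0}}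
def q11 : Finset (Finset (Fin 4)) := {{0, 1, 2, 3}}
def q12 : Finset (Finset (Fin 4)) := {{0, 1}, {2, 3}}
def q13 : Finset (Finset (Fin 4)) := {{0, 2}, {1, 3}}
def q14 : Finset (Finset (Fin 4)) := {{0, 3}, {1, 2}}

def L15 : Finset (Finset (Finset (Fin 4))) :=
  {q0,q1,q2,q3,q4,q5,q6,q7,q8,q9,q10,q11,q12,q13,q14}

def A1 : Finset (Finset (Finset (Fin 4))) :=
  {q0,q1,q2,q3,q4,q5,q6,q7,q8,q9,q10,q11,q12}

theorem classify6 : ∀ b01 b02 b03 b12 b13 b23 : Bool,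
    let G : Fin 4 → Fin 4 → Bool :=
      ![![true,b01,b02,b03],![b01,true,b12,b13],![b02,b12,true,b23],![b03,b13,b23,true]]
    (∀ i j, G i j → ∀ k, G i k = G j k) →
    ({Finset.univ.filter (fun j => G 0 j), Finset.univ.filter (fun j => G 1 j),
      Finset.univ.filter (fun j => G 2 j), Finset.univ.filter (fun j => G 3 j)} :
      Finset (Finset (Fin 4))) ∈ L15 := by
  decide

theorem classify (𝒮 : Finpartition (Finset.univ : Finset (Fin 4))) : 𝒮.parts ∈ L15 := by
  classical
  set p : Fin 4 → Finset (Fin 4) := 𝒮.part with hp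
  have hmem : ∀ i j : Fin 4, (j ∈ p i ↔ p j = p i) := fun i j =>
    𝒮.mem_part_iff_part_eq_part (Finset.mem_univ j) (Finset.mem_univ i)
  have himg : 𝒮.parts = {p 0, p 1, p 2, p 3} := by
    apply Finset.ext; intro B
    constructor
    · intro hB
      obtain ⟨a, haB⟩ := 𝒮.nonempty_of_mem_parts hB
      have : p a = B := 𝒮.part_eq_of_mem hB haB
      fin_cases a <;> simp_all [Finset.mem_insert]
    · intro hB
      simp only [Finset.mem_insert, Finset.mem_singleton] at hB
      rcases hB with h|h|h|h <;> (subst h; exact 𝒮.part_mem.mpr (Finset.mem_univ _))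
  set G : Fin 4 → Fin 4 → Bool :=
    ![![true, decide (p 0 = p 1), decide (p 0 = p 2), decide (p 0 = p 3)],
      ![decide (p 0 = p 1), true, decide (p 1 = p 2), decide (p 1 = p 3)],
      ![decide (p 0 = p 2), decide (p 1 = p 2), true, decide (p 2 = p 3)],
      ![decide (p 0 = p 3), decide (p 1 = p 3), decide (p 2 = p 3), true]] with hG
  have hGd : ∀ i j, G i j = decide (p i = p j) := by
    intro i j
    fin_cases i <;> fin_cases j <;>
      simp [hG, Matrix.cons_val_zero, Matrix.cons_val_one, decide_eq_decide] <;> exact eq_comm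
  have hval : ∀ i, p i = Finset.univ.filter (fun j => G i j) := by
    intro i
    apply Finset.ext; intro j
    simp only [Finset.mem_filter, Finset.mem_univ, true_and, hGd, decide_eq_true_eq, hmem]
    exact eq_comm
  have htrans : ∀ i j, G i j → ∀ k, G i k = G j k := by
    intro i j hij k
    rw [hGd] at hij ⊢
    rw [hGd]
    rw [decide_eq_true_eq] at hij
    rw [hij]
  have := classify6 (decide (p 0 = p 1)) (decide (p 0 = p 2)) (decide (p 0 = p 3))
    (decide (p 1 = p 2)) (decide (p 1 = p 3)) (decide (p 2 = p 3)) htrans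
  rw [himg, hval 0, hval 1, hval 2, hval 3]
  exact this

def mkP (P : Finset (Finset (Fin 4)))
    (h1 : ∀ a ∈ P, ∀ b ∈ P, a = b ∨ Disjoint a b)
    (h2 : P.sup id = Finset.univ) (h3 : ⊥ ∉ P) :
    Finpartition (Finset.univ : Finset (Fin 4)) :=
  ⟨P, Finset.supIndep_iff_pairwiseDisjoint.mpr
    (fun a ha b hb hab => (h1 a (Finset.mem_coe.mp ha) b (Finset.mem_coe.mp hb)).resolve_left hab),
   h2, h3⟩

theorem star_mem0 :
    cfnP q0 ∈ {p : (Fin 4 → Bool) → ℝ |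
      ∃ 𝒮 : Finpartition (Finset.univ : Finset (Fin 4)), IsStarPartition 𝒮 ∧ p = cfnDist 𝒮} :=
  ⟨mkP q0 (by decide) (by decide) (by decide), by unfold IsStarPartition; decide, rfl⟩
theorem star_mem1 :
    cfnP q1 ∈ {p : (Fin 4 → Bool) → ℝ |
      ∃ 𝒮 : Finpartition (Finset.univ : Finset (Fin 4)), IsStarPartition 𝒮 ∧ p = cfnDist 𝒮} :=
  ⟨mkP q1 (by decide) (by decide) (by decide), by unfold IsStarPartition; decide, rfl⟩
theorem star_mem2 :
    cfnP q2 ∈ {p : (Fin 4 → Bool) → ℝ |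
      ∃ 𝒮 : Finpartition (Finset.univ : Finset (Fin 4)), IsStarPartition 𝒮 ∧ p = cfnDist 𝒮} :=
  ⟨mkP q2 (by decide) (by decide) (by decide), by unfold IsStarPartition; decide, rfl⟩
theorem star_mem3 :
    cfnP q3 ∈ {p : (Fin 4 → Bool) → ℝ |
      ∃ 𝒮 : Finpartition (Finset.univ : Finset (Fin 4)), IsStarPartition 𝒮 ∧ p = cfnDist 𝒮} :=
  ⟨mkP q3 (by decide) (by decide) (by decide), by unfold IsStarPartition; decide, rfl⟩
theorem star_mem4 :
    cfnP q4 ∈ {p : (Fin 4 → Bool) → ℝ |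
      ∃ 𝒮 : Finpartition (Finset.univ : Finset (Fin 4)), IsStarPartition 𝒮 ∧ p = cfnDist 𝒮} :=
  ⟨mkP q4 (by decide) (by decide) (by decide), by unfold IsStarPartition; decide, rfl⟩
theorem star_mem5 :
    cfnP q5 ∈ {p : (Fin 4 → Bool) → ℝ |
      ∃ 𝒮 : Finpartition (Finset.univ : Finset (Fin 4)), IsStarPartition 𝒮 ∧ p = cfnDist 𝒮} :=
  ⟨mkP q5 (by decide) (by decide) (by decide), by unfold IsStarPartition; decide, rfl⟩
theorem star_mem6 :
    cfnP q6 ∈ {p : (Fin 4 → Bool) → ℝ |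
      ∃ 𝒮 : Finpartition (Finset.univ : Finset (Fin 4)), IsStarPartition 𝒮 ∧ p = cfnDist 𝒮} :=
  ⟨mkP q6 (by decide) (by decide) (by decide), by unfold IsStarPartition; decide, rfl⟩
theorem star_mem7 :
    cfnP q7 ∈ {p : (Fin 4 → Bool) → ℝ |
      ∃ 𝒮 : Finpartition (Finset.univ : Finset (Fin 4)), IsStarPartition 𝒮 ∧ p = cfnDist 𝒮} :=
  ⟨mkP q7 (by decide) (by decide) (by decide), by unfold IsStarPartition; decide, rfl⟩
theorem star_mem8 :
    cfnP q8 ∈ {p : (Fin 4 → Bool) → ℝ |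
      ∃ 𝒮 : Finpartition (Finset.univ : Finset (Fin 4)), IsStarPartition 𝒮 ∧ p = cfnDist 𝒮} :=
  ⟨mkP q8 (by decide) (by decide) (by decide), by unfold IsStarPartition; decide, rfl⟩
theorem star_mem9 :
    cfnP q9 ∈ {p : (Fin 4 → Bool) → ℝ |
      ∃ 𝒮 : Finpartition (Finset.univ : Finset (Fin 4)), IsStarPartition 𝒮 ∧ p = cfnDist 𝒮} :=
  ⟨mkP q9 (by decide) (by decide) (by decide), by unfold IsStarPartition; decide, rfl⟩
theorem star_mem10 :
    cfnP q10 ∈ {p : (Fin 4 → Bool) → ℝ |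
      ∃ 𝒮 : Finpartition (Finset.univ : Finset (Fin 4)), IsStarPartition 𝒮 ∧ p = cfnDist 𝒮} :=
  ⟨mkP q10 (by decide) (by decide) (by decide), by unfold IsStarPartition; decide, rfl⟩
theorem star_mem11 :
    cfnP q11 ∈ {p : (Fin 4 → Bool) → ℝ |
      ∃ 𝒮 : Finpartition (Finset.univ : Finset (Fin 4)), IsStarPartition 𝒮 ∧ p = cfnDist 𝒮} :=
  ⟨mkP q11 (by decide) (by decide) (by decide), by unfold IsStarPartition; decide, rfl⟩

noncomputable def M02 (p : (Fin 4 → Bool) → ℝ) : ℝ :=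
  p ![false,false,true,true] +
  p ![false,true,true,false] +
  p ![true,false,false,true] +
  p ![true,true,false,false] - p ![false,false,false,true] - p ![false,true,false,false] - p ![true,false,true,true] - p ![true,true,true,false]

theorem M02_add (f g : (Fin 4 → Bool) → ℝ) : M02 (f + g) = M02 f + M02 g := by
  simp only [M02, Pi.add_apply]; ring

theorem M02_smul (c : ℝ) (f : (Fin 4 → Bool) → ℝ) : M02 (c • f) = c * M02 f := by
  simp only [M02, Pi.smul_apply, smul_eq_mul]; ring

theorem M02_convex : Convex ℝ {p : (Fin 4 → Bool) → ℝ | M02 p ≤ 0} := by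
  intro f hf g hg a b ha hb hab
  simp only [Set.mem_setOf_eq] at hf hg ⊢
  have : M02 (a • f + b • g) = a * M02 f + b * M02 g := by
    rw [M02_add, M02_smul, M02_smul]
  rw [this]
  nlinarith [mul_le_mul_of_nonneg_left hf ha, mul_le_mul_of_nonneg_left hg hb]
theorem eM02_0 : M02 (cfnP q0) = 0 := by
  simp (config := { decide := true }) only [M02, cfnP]
  norm_num [show q0.card = 4 from by decide]
theorem eM02_1 : M02 (cfnP q1) = 0 := by
  simp (config := { decide := true }) only [M02, cfnP]
  norm_num [show q1.card = 3 from by decide]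
theorem eM02_2 : M02 (cfnP q2) = -(1/2) := by
  simp (config := { decide := true }) only [M02, cfnP]
  norm_num [show q2.card = 3 from by decide]
theorem eM02_3 : M02 (cfnP q3) = 0 := by
  simp (config := { decide := true }) only [M02, cfnP]
  norm_num [show q3.card = 3 from by decide]
theorem eM02_4 : M02 (cfnP q4) = 0 := by
  simp (config := { decide := true }) only [M02, cfnP]
  norm_num [show q4.card = 3 from by decide]
theorem eM02_5 : M02 (cfnP q5) = 0 := by
  simp (config := { decide := true }) only [M02, cfnP]
  norm_num [show q5.card = 3 from by decide]
theorem eM02_6 : M02 (cfnP q6) = 0 := by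
  simp (config := { decide := true }) only [M02, cfnP]
  norm_num [show q6.card = 3 from by decide]
theorem eM02_7 : M02 (cfnP q7) = -(1/2) := by
  simp (config := { decide := true }) only [M02, cfnP]
  norm_num [show q7.card = 2 from by decide]
theorem eM02_8 : M02 (cfnP q8) = 0 := by
  simp (config := { decide := true }) only [M02, cfnP]
  norm_num [show q8.card = 2 from by decide]
theorem eM02_9 : M02 (cfnP q9) = -(1/2) := by
  simp (config := { decide := true }) only [M02, cfnP]
  norm_num [show q9.card = 2 from by decide]
theorem eM02_10 : M02 (cfnP q10) = 0 := by
  simp (config := { decide := true }) only [M02, cfnP]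
  norm_num [show q10.card = 2 from by decide]
theorem eM02_11 : M02 (cfnP q11) = 0 := by
  simp (config := { decide := true }) only [M02, cfnP]
  norm_num [show q11.card = 1 from by decide]
theorem eM02_12 : M02 (cfnP q12) = 1/2 := by
  simp (config := { decide := true }) only [M02, cfnP]
  norm_num [show q12.card = 2 from by decide]
theorem eM02_13 : M02 (cfnP q13) = 0 := by
  simp (config := { decide := true }) only [M02, cfnP]
  norm_num [show q13.card = 2 from by decide]
theorem eM02_14 : M02 (cfnP q14) = 1/2 := by
  simp (config := { decide := true }) only [M02, cfnP]
  norm_num [show q14.card = 2 from by decide]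

noncomputable def M13 (p : (Fin 4 → Bool) → ℝ) : ℝ :=
  p ![false,false,true,true] +
  p ![false,true,true,false] +
  p ![true,false,false,true] +
  p ![true,true,false,false] - p ![false,false,true,false] - p ![false,true,true,true] - p ![true,false,false,false] - p ![true,true,false,true]

theorem M13_add (f g : (Fin 4 → Bool) → ℝ) : M13 (f + g) = M13 f + M13 g := by
  simp only [M13, Pi.add_apply]; ring

theorem M13_smul (c : ℝ) (f : (Fin 4 → Bool) → ℝ) : M13 (c • f) = c * M13 f := by
  simp only [M13, Pi.smul_apply, smul_eq_mul]; ring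

theorem M13_convex : Convex ℝ {p : (Fin 4 → Bool) → ℝ | M13 p ≤ 0} := by
  intro f hf g hg a b ha hb hab
  simp only [Set.mem_setOf_eq] at hf hg ⊢
  have : M13 (a • f + b • g) = a * M13 f + b * M13 g := by
    rw [M13_add, M13_smul, M13_smul]
  rw [this]
  nlinarith [mul_le_mul_of_nonneg_left hf ha, mul_le_mul_of_nonneg_left hg hb]
theorem eM13_0 : M13 (cfnP q0) = 0 := by
  simp (config := { decide := true }) only [M13, cfnP]
  norm_num [show q0.card = 4 from by decide]
theorem eM13_1 : M13 (cfnP q1) = 0 := by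
  simp (config := { decide := true }) only [M13, cfnP]
  norm_num [show q1.card = 3 from by decide]
theorem eM13_2 : M13 (cfnP q2) = 0 := by
  simp (config := { decide := true }) only [M13, cfnP]
  norm_num [show q2.card = 3 from by decide]
theorem eM13_3 : M13 (cfnP q3) = 0 := by
  simp (config := { decide := true }) only [M13, cfnP]
  norm_num [show q3.card = 3 from by decide]
theorem eM13_4 : M13 (cfnP q4) = 0 := by
  simp (config := { decide := true }) only [M13, cfnP]
  norm_num [show q4.card = 3 from by decide]
theorem eM13_5 : M13 (cfnP q5) = -(1/2) := by
  simp (config := { decide := true }) only [M13, cfnP]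
  norm_num [show q5.card = 3 from by decide]
theorem eM13_6 : M13 (cfnP q6) = 0 := by
  simp (config := { decide := true }) only [M13, cfnP]
  norm_num [show q6.card = 3 from by decide]
theorem eM13_7 : M13 (cfnP q7) = 0 := by
  simp (config := { decide := true }) only [M13, cfnP]
  norm_num [show q7.card = 2 from by decide]
theorem eM13_8 : M13 (cfnP q8) = -(1/2) := by
  simp (config := { decide := true }) only [M13, cfnP]
  norm_num [show q8.card = 2 from by decide]
theorem eM13_9 : M13 (cfnP q9) = 0 := by
  simp (config := { decide := true }) only [M13, cfnP]
  norm_num [show q9.card = 2 from by decide]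
theorem eM13_10 : M13 (cfnP q10) = -(1/2) := by
  simp (config := { decide := true }) only [M13, cfnP]
  norm_num [show q10.card = 2 from by decide]
theorem eM13_11 : M13 (cfnP q11) = 0 := by
  simp (config := { decide := true }) only [M13, cfnP]
  norm_num [show q11.card = 1 from by decide]
theorem eM13_12 : M13 (cfnP q12) = 1/2 := by
  simp (config := { decide := true }) only [M13, cfnP]
  norm_num [show q12.card = 2 from by decide]
theorem eM13_13 : M13 (cfnP q13) = 0 := by
  simp (config := { decide := true }) only [M13, cfnP]
  norm_num [show q13.card = 2 from by decide]
theorem eM13_14 : M13 (cfnP q14) = 1/2 := by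
  simp (config := { decide := true }) only [M13, cfnP]
  norm_num [show q14.card = 2 from by decide]

noncomputable def M03 (p : (Fin 4 → Bool) → ℝ) : ℝ :=
  p ![false,false,true,true] +
  p ![false,true,false,true] +
  p ![true,false,true,false] +
  p ![true,true,false,false] - p ![false,false,true,false] - p ![false,true,false,false] - p ![true,false,true,true] - p ![true,true,false,true]

theorem M03_add (f g : (Fin 4 → Bool) → ℝ) : M03 (f + g) = M03 f + M03 g := by
  simp only [M03, Pi.add_apply]; ring

theorem M03_smul (c : ℝ) (f : (Fin 4 → Bool) → ℝ) : M03 (c • f) = c * M03 f := by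
  simp only [M03, Pi.smul_apply, smul_eq_mul]; ring

theorem M03_convex : Convex ℝ {p : (Fin 4 → Bool) → ℝ | M03 p ≤ 0} := by
  intro f hf g hg a b ha hb hab
  simp only [Set.mem_setOf_eq] at hf hg ⊢
  have : M03 (a • f + b • g) = a * M03 f + b * M03 g := by
    rw [M03_add, M03_smul, M03_smul]
  rw [this]
  nlinarith [mul_le_mul_of_nonneg_left hf ha, mul_le_mul_of_nonneg_left hg hb]
theorem eM03_0 : M03 (cfnP q0) = 0 := by
  simp (config := { decide := true }) only [M03, cfnP]
  norm_num [show q0.card = 4 from by decide]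
theorem eM03_1 : M03 (cfnP q1) = 0 := by
  simp (config := { decide := true }) only [M03, cfnP]
  norm_num [show q1.card = 3 from by decide]
theorem eM03_2 : M03 (cfnP q2) = 0 := by
  simp (config := { decide := true }) only [M03, cfnP]
  norm_num [show q2.card = 3 from by decide]
theorem eM03_3 : M03 (cfnP q3) = -(1/2) := by
  simp (config := { decide := true }) only [M03, cfnP]
  norm_num [show q3.card = 3 from by decide]
theorem eM03_4 : M03 (cfnP q4) = 0 := by
  simp (config := { decide := true }) only [M03, cfnP]
  norm_num [show q4.card = 3 from by decide]
theorem eM03_5 : M03 (cfnP q5) = 0 := by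
  simp (config := { decide := true }) only [M03, cfnP]
  norm_num [show q5.card = 3 from by decide]
theorem eM03_6 : M03 (cfnP q6) = 0 := by
  simp (config := { decide := true }) only [M03, cfnP]
  norm_num [show q6.card = 3 from by decide]
theorem eM03_7 : M03 (cfnP q7) = 0 := by
  simp (config := { decide := true }) only [M03, cfnP]
  norm_num [show q7.card = 2 from by decide]
theorem eM03_8 : M03 (cfnP q8) = -(1/2) := by
  simp (config := { decide := true }) only [M03, cfnP]
  norm_num [show q8.card = 2 from by decide]
theorem eM03_9 : M03 (cfnP q9) = -(1/2) := by
  simp (config := { decide := true }) only [M03, cfnP]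
  norm_num [show q9.card = 2 from by decide]
theorem eM03_10 : M03 (cfnP q10) = 0 := by
  simp (config := { decide := true }) only [M03, cfnP]
  norm_num [show q10.card = 2 from by decide]
theorem eM03_11 : M03 (cfnP q11) = 0 := by
  simp (config := { decide := true }) only [M03, cfnP]
  norm_num [show q11.card = 1 from by decide]
theorem eM03_12 : M03 (cfnP q12) = 1/2 := by
  simp (config := { decide := true }) only [M03, cfnP]
  norm_num [show q12.card = 2 from by decide]
theorem eM03_13 : M03 (cfnP q13) = 1/2 := by
  simp (config := { decide := true }) only [M03, cfnP]
  norm_num [show q13.card = 2 from by decide]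
theorem eM03_14 : M03 (cfnP q14) = 0 := by
  simp (config := { decide := true }) only [M03, cfnP]
  norm_num [show q14.card = 2 from by decide]

noncomputable def M12 (p : (Fin 4 → Bool) → ℝ) : ℝ :=
  p ![false,false,true,true] +
  p ![false,true,false,true] +
  p ![true,false,true,false] +
  p ![true,true,false,false] - p ![false,false,false,true] - p ![false,true,true,true] - p ![true,false,false,false] - p ![true,true,true,false]

theorem M12_add (f g : (Fin 4 → Bool) → ℝ) : M12 (f + g) = M12 f + M12 g := by
  simp only [M12, Pi.add_apply]; ring

theorem M12_smul (c : ℝ) (f : (Fin 4 → Bool) → ℝ) : M12 (c • f) = c * M12 f := by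
  simp only [M12, Pi.smul_apply, smul_eq_mul]; ring

theorem M12_convex : Convex ℝ {p : (Fin 4 → Bool) → ℝ | M12 p ≤ 0} := by
  intro f hf g hg a b ha hb hab
  simp only [Set.mem_setOf_eq] at hf hg ⊢
  have : M12 (a • f + b • g) = a * M12 f + b * M12 g := by
    rw [M12_add, M12_smul, M12_smul]
  rw [this]
  nlinarith [mul_le_mul_of_nonneg_left hf ha, mul_le_mul_of_nonneg_left hg hb]
theorem eM12_0 : M12 (cfnP q0) = 0 := by
  simp (config := { decide := true }) only [M12, cfnP]
  norm_num [show q0.card = 4 from by decide]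
theorem eM12_1 : M12 (cfnP q1) = 0 := by
  simp (config := { decide := true }) only [M12, cfnP]
  norm_num [show q1.card = 3 from by decide]
theorem eM12_2 : M12 (cfnP q2) = 0 := by
  simp (config := { decide := true }) only [M12, cfnP]
  norm_num [show q2.card = 3 from by decide]
theorem eM12_3 : M12 (cfnP q3) = 0 := by
  simp (config := { decide := true }) only [M12, cfnP]
  norm_num [show q3.card = 3 from by decide]
theorem eM12_4 : M12 (cfnP q4) = -(1/2) := by
  simp (config := { decide := true }) only [M12, cfnP]
  norm_num [show q4.card = 3 from by decide]
theorem eM12_5 : M12 (cfnP q5) = 0 := by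
  simp (config := { decide := true }) only [M12, cfnP]
  norm_num [show q5.card = 3 from by decide]
theorem eM12_6 : M12 (cfnP q6) = 0 := by
  simp (config := { decide := true }) only [M12, cfnP]
  norm_num [show q6.card = 3 from by decide]
theorem eM12_7 : M12 (cfnP q7) = -(1/2) := by
  simp (config := { decide := true }) only [M12, cfnP]
  norm_num [show q7.card = 2 from by decide]
theorem eM12_8 : M12 (cfnP q8) = 0 := by
  simp (config := { decide := true }) only [M12, cfnP]
  norm_num [show q8.card = 2 from by decide]
theorem eM12_9 : M12 (cfnP q9) = 0 := by
  simp (config := { decide := true }) only [M12, cfnP]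
  norm_num [show q9.card = 2 from by decide]
theorem eM12_10 : M12 (cfnP q10) = -(1/2) := by
  simp (config := { decide := true }) only [M12, cfnP]
  norm_num [show q10.card = 2 from by decide]
theorem eM12_11 : M12 (cfnP q11) = 0 := by
  simp (config := { decide := true }) only [M12, cfnP]
  norm_num [show q11.card = 1 from by decide]
theorem eM12_12 : M12 (cfnP q12) = 1/2 := by
  simp (config := { decide := true }) only [M12, cfnP]
  norm_num [show q12.card = 2 from by decide]
theorem eM12_13 : M12 (cfnP q13) = 1/2 := by
  simp (config := { decide := true }) only [M12, cfnP]
  norm_num [show q13.card = 2 from by decide]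
theorem eM12_14 : M12 (cfnP q14) = 0 := by
  simp (config := { decide := true }) only [M12, cfnP]
  norm_num [show q14.card = 2 from by decide]

theorem idI : cfnP q12 + cfnP q2 + cfnP q3 + cfnP q4 + cfnP q5 = cfnP q11 + (4:ℝ) • cfnP q0 := by
  funext pt
  obtain ⟨b0,b1,b2,b3, rfl⟩ : ∃ b0 b1 b2 b3, pt = ![b0,b1,b2,b3] :=
    ⟨pt 0, pt 1, pt 2, pt 3, by funext i; fin_cases i <;> rfl⟩
  simp only [Pi.add_apply, Pi.smul_apply, smul_eq_mul]
  cases b0 <;> cases b1 <;> cases b2 <;> cases b3 <;>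
    · simp (config := { decide := true }) only [cfnP]
      norm_num [show q0.card = 4 from by decide, show q1.card = 3 from by decide,
        show q2.card = 3 from by decide, show q3.card = 3 from by decide,
        show q4.card = 3 from by decide, show q5.card = 3 from by decide,
        show q6.card = 3 from by decide, show q7.card = 2 from by decide,
        show q8.card = 2 from by decide, show q9.card = 2 from by decide,
        show q10.card = 2 from by decide, show q11.card = 1 from by decide,
        show q12.card = 2 from by decide]

theorem idII7 : cfnP q7 + (2:ℝ) • cfnP q0 = cfnP q1 + cfnP q2 + cfnP q4 := by
  funext pt
  obtain ⟨b0,b1,b2,b3, rfl⟩ : ∃ b0 b1 b2 b3, pt = ![b0,b1,b2,b3] :=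
    ⟨pt 0, pt 1, pt 2, pt 3, by funext i; fin_cases i <;> rfl⟩
  simp only [Pi.add_apply, Pi.smul_apply, smul_eq_mul]
  cases b0 <;> cases b1 <;> cases b2 <;> cases b3 <;>
    · simp (config := { decide := true }) only [cfnP]
      norm_num [show q0.card = 4 from by decide, show q1.card = 3 from by decide,
        show q2.card = 3 from by decide, show q3.card = 3 from by decide,
        show q4.card = 3 from by decide, show q5.card = 3 from by decide,
        show q6.card = 3 from by decide, show q7.card = 2 from by decide,
        show q8.card = 2 from by decide, show q9.card = 2 from by decide,
        show q10.card = 2 from by decide, show q11.card = 1 from by decide,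
        show q12.card = 2 from by decide]

theorem idII8 : cfnP q8 + (2:ℝ) • cfnP q0 = cfnP q1 + cfnP q3 + cfnP q5 := by
  funext pt
  obtain ⟨b0,b1,b2,b3, rfl⟩ : ∃ b0 b1 b2 b3, pt = ![b0,b1,b2,b3] :=
    ⟨pt 0, pt 1, pt 2, pt 3, by funext i; fin_cases i <;> rfl⟩
  simp only [Pi.add_apply, Pi.smul_apply, smul_eq_mul]
  cases b0 <;> cases b1 <;> cases b2 <;> cases b3 <;>
    · simp (config := { decide := true }) only [cfnP]
      norm_num [show q0.card = 4 from by decide, show q1.card = 3 from by decide,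
        show q2.card = 3 from by decide, show q3.card = 3 from by decide,
        show q4.card = 3 from by decide, show q5.card = 3 from by decide,
        show q6.card = 3 from by decide, show q7.card = 2 from by decide,
        show q8.card = 2 from by decide, show q9.card = 2 from by decide,
        show q10.card = 2 from by decide, show q11.card = 1 from by decide,
        show q12.card = 2 from by decide]

theorem idII9 : cfnP q9 + (2:ℝ) • cfnP q0 = cfnP q2 + cfnP q3 + cfnP q6 := by
  funext pt
  obtain ⟨b0,b1,b2,b3, rfl⟩ : ∃ b0 b1 b2 b3, pt = ![b0,b1,b2,b3] :=
    ⟨pt 0, pt 1, pt 2, pt 3, by funext i; fin_cases i <;> rfl⟩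
  simp only [Pi.add_apply, Pi.smul_apply, smul_eq_mul]
  cases b0 <;> cases b1 <;> cases b2 <;> cases b3 <;>
    · simp (config := { decide := true }) only [cfnP]
      norm_num [show q0.card = 4 from by decide, show q1.card = 3 from by decide,
        show q2.card = 3 from by decide, show q3.card = 3 from by decide,
        show q4.card = 3 from by decide, show q5.card = 3 from by decide,
        show q6.card = 3 from by decide, show q7.card = 2 from by decide,
        show q8.card = 2 from by decide, show q9.card = 2 from by decide,
        show q10.card = 2 from by decide, show q11.card = 1 from by decide,
        show q12.card = 2 from by decide]

theorem idII10 : cfnP q10 + (2:ℝ) • cfnP q0 = cfnP q4 + cfnP q5 + cfnP q6 := by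
  funext pt
  obtain ⟨b0,b1,b2,b3, rfl⟩ : ∃ b0 b1 b2 b3, pt = ![b0,b1,b2,b3] :=
    ⟨pt 0, pt 1, pt 2, pt 3, by funext i; fin_cases i <;> rfl⟩
  simp only [Pi.add_apply, Pi.smul_apply, smul_eq_mul]
  cases b0 <;> cases b1 <;> cases b2 <;> cases b3 <;>
    · simp (config := { decide := true }) only [cfnP]
      norm_num [show q0.card = 4 from by decide, show q1.card = 3 from by decide,
        show q2.card = 3 from by decide, show q3.card = 3 from by decide,
        show q4.card = 3 from by decide, show q5.card = 3 from by decide,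
        show q6.card = 3 from by decide, show q7.card = 2 from by decide,
        show q8.card = 2 from by decide, show q9.card = 2 from by decide,
        show q10.card = 2 from by decide, show q11.card = 1 from by decide,
        show q12.card = 2 from by decide]

theorem mem12 (T : Set ((Fin 4 → Bool) → ℝ)) (f : Fin 12 → (Fin 4 → Bool) → ℝ)
    (hf : ∀ i, f i ∈ T) (c : Fin 12 → ℝ) (hc : ∀ i, 0 ≤ c i)
    (hs : ∑ i, c i = 1) : ∑ i, c i • f i ∈ convexHull ℝ T :=
  (convex_convexHull ℝ T).sum_mem (fun i _ => hc i) hs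
    (fun i _ => subset_convexHull ℝ T (hf i))


set_option maxRecDepth 8000 in
theorem not_star_aux (𝒮 : Finpartition (Finset.univ : Finset (Fin 4)))
    (hs : IsStarPartition 𝒮) :
    𝒮.parts ≠ q12 ∧ 𝒮.parts ≠ q13 ∧ 𝒮.parts ≠ q14 := by
  unfold IsStarPartition at hs
  refine ⟨fun h => ?_, fun h => ?_, fun h => ?_⟩ <;> (rw [h] at hs; revert hs; decide)

theorem memA1 : ∀ P ∈ L15, P ≠ q13 → P ≠ q14 → P ∈ A1 := by
  intro P h h13 h14
  simp only [L15, Finset.mem_insert, Finset.mem_singleton] at h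
  rcases h with h|h|h|h|h|h|h|h|h|h|h|h|h|h|h <;>
    first
      | exact absurd h h13
      | exact absurd h h14
      | (subst h
         repeat first
           | exact Finset.mem_insert_self _ _
           | exact Finset.mem_singleton_self _
           | apply Finset.mem_insert_of_mem)

theorem max3 (x y : ℝ) : max 0 (max x y) = 0 ∨ max 0 (max x y) = x ∨ max 0 (max x y) = y := by
  rcases max_choice 0 (max x y) with h|h
  · exact Or.inl h
  · rcases max_choice x y with h2|h2
    · exact Or.inr (Or.inl (h.trans h2))
    · exact Or.inr (Or.inr (h.trans h2))

set_option maxHeartbeats 2000000 in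
set_option maxRecDepth 8000 in
/-- The intersection of the CFN mixture polytopes of the three resolved quartet
topologies equals the CFN mixture polytope of the four-taxon star tree. -/
theorem stmt6 :
    (convexHull ℝ
        {p : (Fin 4 → Bool) → ℝ |
          ∃ 𝒮 : Finpartition (Finset.univ : Finset (Fin 4)),
            𝒮.parts ≠ ({{0, 2}, {1, 3}} : Finset (Finset (Fin 4))) ∧
            𝒮.parts ≠ ({{0, 3}, {1, 2}} : Finset (Finset (Fin 4))) ∧
            p = cfnDist 𝒮}) ∩
      (convexHull ℝ
        {p : (Fin 4 → Bool) → ℝ |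
          ∃ 𝒮 : Finpartition (Finset.univ : Finset (Fin 4)),
            𝒮.parts ≠ ({{0, 1}, {2, 3}} : Finset (Finset (Fin 4))) ∧
            𝒮.parts ≠ ({{0, 3}, {1, 2}} : Finset (Finset (Fin 4))) ∧
            p = cfnDist 𝒮}) ∩
      (convexHull ℝ
        {p : (Fin 4 → Bool) → ℝ |
          ∃ 𝒮 : Finpartition (Finset.univ : Finset (Fin 4)),
            𝒮.parts ≠ ({{0, 1}, {2, 3}} : Finset (Finset (Fin 4))) ∧
            𝒮.parts ≠ ({{0, 2}, {1, 3}} : Finset (Finset (Fin 4))) ∧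
            p = cfnDist 𝒮}) =
    convexHull ℝ
      {p : (Fin 4 → Bool) → ℝ |
        ∃ 𝒮 : Finpartition (Finset.univ : Finset (Fin 4)),
          IsStarPartition 𝒮 ∧ p = cfnDist 𝒮} := by
  classical
  apply Set.Subset.antisymm
  · rintro x ⟨⟨h1, h2⟩, h3⟩
    -- linear inequalities from the second hull
    have hM02 : M02 x ≤ 0 := by
      refine convexHull_min ?_ M02_convex h2
      rintro p ⟨𝒮, hA, hB, rfl⟩
      have hc := classify 𝒮
      simp only [L15, Finset.mem_insert, Finset.mem_singleton] at hc
      simp only [Set.mem_setOf_eq, cfnDist_eq]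
      rcases hc with h|h|h|h|h|h|h|h|h|h|h|h|h|h|h <;>
        first
          | exact absurd h hA
          | exact absurd h hB
          | (rw [h]; norm_num [eM02_0, eM02_1, eM02_2, eM02_3, eM02_4, eM02_5, eM02_6,
              eM02_7, eM02_8, eM02_9, eM02_10, eM02_11, eM02_13])
    have hM13 : M13 x ≤ 0 := by
      refine convexHull_min ?_ M13_convex h2
      rintro p ⟨𝒮, hA, hB, rfl⟩
      have hc := classify 𝒮
      simp only [L15, Finset.mem_insert, Finset.mem_singleton] at hc
      simp only [Set.mem_setOf_eq, cfnDist_eq]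
      rcases hc with h|h|h|h|h|h|h|h|h|h|h|h|h|h|h <;>
        first
          | exact absurd h hA
          | exact absurd h hB
          | (rw [h]; norm_num [eM13_0, eM13_1, eM13_2, eM13_3, eM13_4, eM13_5, eM13_6,
              eM13_7, eM13_8, eM13_9, eM13_10, eM13_11, eM13_13])
    have hM03 : M03 x ≤ 0 := by
      refine convexHull_min ?_ M03_convex h3
      rintro p ⟨𝒮, hA, hB, rfl⟩
      have hc := classify 𝒮
      simp only [L15, Finset.mem_insert, Finset.mem_singleton] at hc
      simp only [Set.mem_setOf_eq, cfnDist_eq]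
      rcases hc with h|h|h|h|h|h|h|h|h|h|h|h|h|h|h <;>
        first
          | exact absurd h hA
          | exact absurd h hB
          | (rw [h]; norm_num [eM03_0, eM03_1, eM03_2, eM03_3, eM03_4, eM03_5, eM03_6,
              eM03_7, eM03_8, eM03_9, eM03_10, eM03_11, eM03_14])
    have hM12 : M12 x ≤ 0 := by
      refine convexHull_min ?_ M12_convex h3
      rintro p ⟨𝒮, hA, hB, rfl⟩
      have hc := classify 𝒮
      simp only [L15, Finset.mem_insert, Finset.mem_singleton] at hc
      simp only [Set.mem_setOf_eq, cfnDist_eq]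
      rcases hc with h|h|h|h|h|h|h|h|h|h|h|h|h|h|h <;>
        first
          | exact absurd h hA
          | exact absurd h hB
          | (rw [h]; norm_num [eM12_0, eM12_1, eM12_2, eM12_3, eM12_4, eM12_5, eM12_6,
              eM12_7, eM12_8, eM12_9, eM12_10, eM12_11, eM12_14])
    -- representation from the first hull
    rw [convexHull_eq] at h1
    obtain ⟨ι, t, w, z, hw0, hw1, hz, hxc⟩ := h1
    have hxs : ∑ i ∈ t, w i • z i = x := by
      rw [← Finset.centerMass_eq_of_sum_1 _ _ hw1]; exact hxc
    have hz' : ∀ i, ∃ P, i ∈ t → (P ∈ A1 ∧ z i = cfnP P) := by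
      intro i
      by_cases hi : i ∈ t
      · obtain ⟨𝒮, hA, hB, hzi⟩ := hz i hi
        exact ⟨𝒮.parts, fun _ => ⟨memA1 _ (classify 𝒮) hA hB, by rw [hzi, cfnDist_eq]⟩⟩
      · exact ⟨q0, fun h => absurd h hi⟩
    choose Fp hFp using hz'
    have hmaps : ∀ i ∈ t, Fp i ∈ A1 := fun i hi => (hFp i hi).1
    set lam : Finset (Finset (Fin 4)) → ℝ :=
      fun P => ∑ i ∈ t.filter (fun i => Fp i = P), w i with hlamdef
    have hlam0 : ∀ P, 0 ≤ lam P := fun P =>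
      Finset.sum_nonneg fun i hi => hw0 i (Finset.mem_filter.mp hi).1
    have hsum1 : ∑ P ∈ A1, lam P = 1 := by
      rw [← hw1]; exact Finset.sum_fiberwise_of_maps_to hmaps w
    have hrep : ∑ P ∈ A1, lam P • cfnP P = x := by
      rw [← hxs, ← Finset.sum_fiberwise_of_maps_to hmaps (fun i => w i • z i)]
      refine Finset.sum_congr rfl fun P _ => ?_
      rw [Finset.sum_smul]
      refine Finset.sum_congr rfl fun i hi => ?_
      obtain ⟨hit, hFi⟩ := Finset.mem_filter.mp hi
      rw [(hFp i hit).2, hFi]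
    rw [show A1 = {q0,q1,q2,q3,q4,q5,q6,q7,q8,q9,q10,q11,q12} from rfl] at hsum1 hrep
    rw [Finset.sum_insert (by decide), Finset.sum_insert (by decide), Finset.sum_insert (by decide), Finset.sum_insert (by decide), Finset.sum_insert (by decide), Finset.sum_insert (by decide), Finset.sum_insert (by decide), Finset.sum_insert (by decide), Finset.sum_insert (by decide), Finset.sum_insert (by decide), Finset.sum_insert (by decide), Finset.sum_insert (by decide), Finset.sum_singleton] at hsum1
    rw [Finset.sum_insert (by decide), Finset.sum_insert (by decide), Finset.sum_insert (by decide), Finset.sum_insert (by decide), Finset.sum_insert (by decide), Finset.sum_insert (by decide), Finset.sum_insert (by decide), Finset.sum_insert (by decide), Finset.sum_insert (by decide), Finset.sum_insert (by decide), Finset.sum_insert (by decide), Finset.sum_insert (by decide), Finset.sum_singleton] at hrep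
    -- coefficient inequalities
    rw [← hrep] at hM02 hM13 hM03 hM12
    simp only [M02_add, M02_smul, eM02_0, eM02_1, eM02_2, eM02_3, eM02_4, eM02_5, eM02_6,
      eM02_7, eM02_8, eM02_9, eM02_10, eM02_11, eM02_12] at hM02
    simp only [M13_add, M13_smul, eM13_0, eM13_1, eM13_2, eM13_3, eM13_4, eM13_5, eM13_6,
      eM13_7, eM13_8, eM13_9, eM13_10, eM13_11, eM13_12] at hM13
    simp only [M03_add, M03_smul, eM03_0, eM03_1, eM03_2, eM03_3, eM03_4, eM03_5, eM03_6,
      eM03_7, eM03_8, eM03_9, eM03_10, eM03_11, eM03_12] at hM03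
    simp only [M12_add, M12_smul, eM12_0, eM12_1, eM12_2, eM12_3, eM12_4, eM12_5, eM12_6,
      eM12_7, eM12_8, eM12_9, eM12_10, eM12_11, eM12_12] at hM12
    have I1 : lam q12 ≤ lam q2 + lam q7 + lam q9 := by linarith
    have I2 : lam q12 ≤ lam q3 + lam q8 + lam q9 := by linarith
    have I3 : lam q12 ≤ lam q4 + lam q7 + lam q10 := by linarith
    have I4 : lam q12 ≤ lam q5 + lam q8 + lam q10 := by linarith
    -- the combinatorial construction
    obtain ⟨b1, hb1⟩ : ∃ r : ℝ, r = max (lam q12 - lam q2) 0 := ⟨_, rfl⟩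
    obtain ⟨b2, hb2⟩ : ∃ r : ℝ, r = max (lam q12 - lam q3) 0 := ⟨_, rfl⟩
    obtain ⟨b3, hb3⟩ : ∃ r : ℝ, r = max (lam q12 - lam q4) 0 := ⟨_, rfl⟩
    obtain ⟨b4, hb4⟩ : ∃ r : ℝ, r = max (lam q12 - lam q5) 0 := ⟨_, rfl⟩
    have hb1l : lam q12 - lam q2 ≤ b1 := by rw [hb1]; exact le_max_left _ _
    have hb1n : (0:ℝ) ≤ b1 := by rw [hb1]; exact le_max_right _ _
    have hb1u : b1 ≤ lam q7 + lam q9 := by rw [hb1]; exact max_le (by linarith) (by linarith [hlam0 q7, hlam0 q9])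
    have hb1a : b1 ≤ lam q12 := by rw [hb1]; exact max_le (by linarith [hlam0 q2]) (hlam0 q12)
    have hb2l : lam q12 - lam q3 ≤ b2 := by rw [hb2]; exact le_max_left _ _
    have hb2n : (0:ℝ) ≤ b2 := by rw [hb2]; exact le_max_right _ _
    have hb2u : b2 ≤ lam q8 + lam q9 := by rw [hb2]; exact max_le (by linarith) (by linarith [hlam0 q8, hlam0 q9])
    have hb2a : b2 ≤ lam q12 := by rw [hb2]; exact max_le (by linarith [hlam0 q3]) (hlam0 q12)
    have hb3l : lam q12 - lam q4 ≤ b3 := by rw [hb3]; exact le_max_left _ _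
    have hb3n : (0:ℝ) ≤ b3 := by rw [hb3]; exact le_max_right _ _
    have hb3u : b3 ≤ lam q7 + lam q10 := by rw [hb3]; exact max_le (by linarith) (by linarith [hlam0 q7, hlam0 q10])
    have hb3a : b3 ≤ lam q12 := by rw [hb3]; exact max_le (by linarith [hlam0 q4]) (hlam0 q12)
    have hb4l : lam q12 - lam q5 ≤ b4 := by rw [hb4]; exact le_max_left _ _
    have hb4n : (0:ℝ) ≤ b4 := by rw [hb4]; exact le_max_right _ _
    have hb4u : b4 ≤ lam q8 + lam q10 := by rw [hb4]; exact max_le (by linarith) (by linarith [hlam0 q8, hlam0 q10])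
    have hb4a : b4 ≤ lam q12 := by rw [hb4]; exact max_le (by linarith [hlam0 q5]) (hlam0 q12)
    obtain ⟨u7, hu7⟩ : ∃ r : ℝ, r = max 0 (max (b1 - lam q9) (b3 - lam q10)) := ⟨_, rfl⟩
    obtain ⟨u8, hu8⟩ : ∃ r : ℝ, r = max 0 (max (b2 - lam q9) (b4 - lam q10)) := ⟨_, rfl⟩
    obtain ⟨u9, hu9⟩ : ∃ r : ℝ, r = max 0 (max (b1 - u7) (b2 - u8)) := ⟨_, rfl⟩
    obtain ⟨u10, hu10⟩ : ∃ r : ℝ, r = max 0 (max (b3 - u7) (b4 - u8)) := ⟨_, rfl⟩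
    have hu7n : (0:ℝ) ≤ u7 := by rw [hu7]; exact le_max_left _ _
    have hu7l1 : b1 - lam q9 ≤ u7 := by rw [hu7]; exact le_trans (le_max_left _ _) (le_max_right _ _)
    have hu7l2 : b3 - lam q10 ≤ u7 := by rw [hu7]; exact le_trans (le_max_right _ _) (le_max_right _ _)
    have hu7u : u7 ≤ lam q7 := by
      rw [hu7]; exact max_le (hlam0 q7) (max_le (by linarith) (by linarith))
    have hu8n : (0:ℝ) ≤ u8 := by rw [hu8]; exact le_max_left _ _
    have hu8l1 : b2 - lam q9 ≤ u8 := by rw [hu8]; exact le_trans (le_max_left _ _) (le_max_right _ _)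
    have hu8l2 : b4 - lam q10 ≤ u8 := by rw [hu8]; exact le_trans (le_max_right _ _) (le_max_right _ _)
    have hu8u : u8 ≤ lam q8 := by
      rw [hu8]; exact max_le (hlam0 q8) (max_le (by linarith) (by linarith))
    have hu9n : (0:ℝ) ≤ u9 := by rw [hu9]; exact le_max_left _ _
    have hu9l1 : b1 - u7 ≤ u9 := by rw [hu9]; exact le_trans (le_max_left _ _) (le_max_right _ _)
    have hu9l2 : b2 - u8 ≤ u9 := by rw [hu9]; exact le_trans (le_max_right _ _) (le_max_right _ _)
    have hu9u : u9 ≤ lam q9 := by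
      rw [hu9]; exact max_le (hlam0 q9) (max_le (by linarith) (by linarith))
    have hu10n : (0:ℝ) ≤ u10 := by rw [hu10]; exact le_max_left _ _
    have hu10l1 : b3 - u7 ≤ u10 := by rw [hu10]; exact le_trans (le_max_left _ _) (le_max_right _ _)
    have hu10l2 : b4 - u8 ≤ u10 := by rw [hu10]; exact le_trans (le_max_right _ _) (le_max_right _ _)
    have hu10u : u10 ≤ lam q10 := by
      rw [hu10]; exact max_le (hlam0 q10) (max_le (by linarith) (by linarith))
    have hsu : u7 + u8 + u9 + u10 ≤ 2 * lam q12 := by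
      have hc7 := max3 (b1 - lam q9) (b3 - lam q10)
      have hc8 := max3 (b2 - lam q9) (b4 - lam q10)
      have hc9 := max3 (b1 - u7) (b2 - u8)
      have hc10 := max3 (b3 - u7) (b4 - u8)
      rw [← hu7] at hc7
      rw [← hu8] at hc8
      rw [← hu9] at hc9
      rw [← hu10] at hc10
      rcases hc7 with h7|h7|h7 <;> rcases hc8 with h8|h8|h8 <;>
        rcases hc9 with h9|h9|h9 <;> rcases hc10 with h10|h10|h10 <;>
        linarith [hlam0 q9, hlam0 q10]
    -- final convex combination
    have hxeq : x = ∑ i : Fin 12, (![((lam q0 + 4*lam q12 - 2*(u7+u8+u9+u10)) : ℝ), ((lam q1 + u7 + u8) : ℝ), ((lam q2 - lam q12 + u7 + u9) : ℝ), ((lam q3 - lam q12 + u8 + u9) : ℝ), ((lam q4 - lam q12 + u7 + u10) : ℝ), ((lam q5 - lam q12 + u8 + u10) : ℝ), ((lam q6 + u9 + u10) : ℝ), ((lam q7 - u7) : ℝ), ((lam q8 - u8) : ℝ), ((lam q9 - u9) : ℝ), ((lam q10 - u10) : ℝ), ((lam q11 + lam q12) : ℝ)] : Fin 12 → ℝ)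 i • (![cfnP q0, cfnP q1, cfnP q2, cfnP q3, cfnP q4, cfnP q5, cfnP q6, cfnP q7, cfnP q8, cfnP q9, cfnP q10, cfnP q11] : Fin 12 → (Fin 4 → Bool) → ℝ) i := by
      simp only [Fin.sum_univ_succ, Finset.univ_unique, Fin.default_eq_zero,
        Finset.sum_singleton, Matrix.cons_val_zero, Matrix.cons_val_succ]
      rw [← hrep]
      funext pt
      obtain ⟨c0,c1,c2,c3, rfl⟩ : ∃ c0 c1 c2 c3, pt = ![c0,c1,c2,c3] :=
        ⟨pt 0, pt 1, pt 2, pt 3, by funext i; fin_cases i <;> rfl⟩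
      simp only [Pi.add_apply, Pi.smul_apply, smul_eq_mul]
      cases c0 <;> cases c1 <;> cases c2 <;> cases c3 <;>
        · simp (config := { decide := true }) only [cfnP]
          norm_num [show q0.card = 4 from by decide, show q1.card = 3 from by decide,
            show q2.card = 3 from by decide, show q3.card = 3 from by decide,
            show q4.card = 3 from by decide, show q5.card = 3 from by decide,
            show q6.card = 3 from by decide, show q7.card = 2 from by decide,
            show q8.card = 2 from by decide, show q9.card = 2 from by decide,
            show q10.card = 2 from by decide, show q11.card = 1 from by decide,
            show q12.card = 2 from by decide]
          ring
    rw [hxeq]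
    apply mem12
    · intro i
      fin_cases i
      · exact star_mem0
      · exact star_mem1
      · exact star_mem2
      · exact star_mem3
      · exact star_mem4
      · exact star_mem5
      · exact star_mem6
      · exact star_mem7
      · exact star_mem8
      · exact star_mem9
      · exact star_mem10
      · exact star_mem11
    · intro i
      fin_cases i
      · show (0:ℝ) ≤ lam q0 + 4 * lam q12 - 2 * (u7 + u8 + u9 + u10)
        linarith [hlam0 q0]
      · show (0:ℝ) ≤ lam q1 + u7 + u8
        linarith [hlam0 q1]
      · show (0:ℝ) ≤ lam q2 - lam q12 + u7 + u9
        linarith [hlam0 q2]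
      · show (0:ℝ) ≤ lam q3 - lam q12 + u8 + u9
        linarith [hlam0 q3]
      · show (0:ℝ) ≤ lam q4 - lam q12 + u7 + u10
        linarith [hlam0 q4]
      · show (0:ℝ) ≤ lam q5 - lam q12 + u8 + u10
        linarith [hlam0 q5]
      · show (0:ℝ) ≤ lam q6 + u9 + u10
        linarith [hlam0 q6]
      · show (0:ℝ) ≤ lam q7 - u7
        linarith
      · show (0:ℝ) ≤ lam q8 - u8
        linarith
      · show (0:ℝ) ≤ lam q9 - u9
        linarith
      · show (0:ℝ) ≤ lam q10 - u10
        linarith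
      · show (0:ℝ) ≤ lam q11 + lam q12
        linarith [hlam0 q11, hlam0 q12]
    · simp only [Fin.sum_univ_succ, Finset.univ_unique, Fin.default_eq_zero,
        Finset.sum_singleton, Matrix.cons_val_zero, Matrix.cons_val_succ]
      linarith
  · -- easy direction
    refine Set.subset_inter (Set.subset_inter ?_ ?_) ?_ <;> refine convexHull_mono ?_
    · rintro p ⟨𝒮, hs, rfl⟩
      obtain ⟨hA, hB, hC⟩ := not_star_aux 𝒮 hs
      exact ⟨𝒮, hB, hC, rfl⟩
    · rintro p ⟨𝒮, hs, rfl⟩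
      obtain ⟨hA, hB, hC⟩ := not_star_aux 𝒮 hs
      exact ⟨𝒮, hA, hC, rfl⟩
    · rintro p ⟨𝒮, hs, rfl⟩
      obtain ⟨hA, hB, hC⟩ := not_star_aux 𝒮 hs
      exact ⟨𝒮, hA, hB, rfl⟩
end

section
/- There do not exist a real α with 0 < α < 1 and functions θ, θ̃, θ' : Fin 7 → ℝ with all values in the open interval (0,1), such that for every A : Finset (Fin 5) of even cardinality, α * ∏_{e ∈ Fin 7 with |L e ∩ A| odd} θ e + (1 − α) * ∏_{e ∈ Fin 7 with |L e ∩ A| odd} θ̃ e = ∏_{e ∈ Fin 7 with |L' e ∩ A| odd} θ' e, where L is the leaf-side structure of the five-leaf tree with cherries {0,1} and {2,3} and central leaf 4, and L' is that of the five-leaf tree with cherries {0,2} and {1,3} and central leaf 4. (In the paper's notation: W₁₂₃₄₅ cannot be mixed with two classes to mimic W₁₃₂₄₅ under the CFN model.) -/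
/-- Leaf-side map of the five-leaf binary tree with cherries `{0,1}` and `{2,3}` and
central leaf `4` (the tree `W₁₂₃₄₅`): edges `0,…,4` are pendant, edges `5,6` internal. -/
def W12345 : Fin 7 → Finset (Fin 5)
  | 0 => {0}
  | 1 => {1}
  | 2 => {2}
  | 3 => {3}
  | 4 => {4}
  | 5 => {0, 1}
  | 6 => {2, 3}

/-- Leaf-side map of the five-leaf binary tree with cherries `{0,2}` and `{1,3}` and
central leaf `4` (the tree `W₁₃₂₄₅`). -/
def W13245 : Fin 7 → Finset (Fin 5)
  | 0 => {0}
  | 1 => {1}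
  | 2 => {2}
  | 3 => {3}
  | 4 => {4}
  | 5 => {0, 2}
  | 6 => {1, 3}

set_option maxHeartbeats 1000000

private lemma sqpos {x : ℝ} (h0 : 0 < x) (h1 : x < 1) : 0 < 1 - x^2 := by nlinarith
private lemma sqpos2 {x y : ℝ} (hx0 : 0 < x) (hx1 : x < 1) (hy0 : 0 < y) (hy1 : y < 1) :
    0 < 1 - (x*y)^2 := by
  have hxy0 : 0 < x*y := mul_pos hx0 hy0
  have hxy1 : x*y < 1 := by nlinarith [mul_lt_mul_of_pos_right hx1 hy0]
  nlinarith [mul_pos hxy0 (sub_pos.2 hxy1)]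

/-- A two-class CFN mixture on the tree `W₁₂₃₄₅` cannot mimic the tree `W₁₃₂₄₅`. -/
theorem stmt8 :
    ¬ ∃ (α : ℝ) (θ θt θ' : Fin 7 → ℝ),
      0 < α ∧ α < 1 ∧
      (∀ e, θ e ∈ Set.Ioo (0 : ℝ) 1) ∧ (∀ e, θt e ∈ Set.Ioo (0 : ℝ) 1) ∧
      (∀ e, θ' e ∈ Set.Ioo (0 : ℝ) 1) ∧
      ∀ A : Finset (Fin 5), Even A.card →
        α * (∏ e ∈ Finset.univ.filter fun e => Odd (W12345 e ∩ A).card, θ e) +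
          (1 - α) * (∏ e ∈ Finset.univ.filter fun e => Odd (W12345 e ∩ A).card, θt e) =
        ∏ e ∈ Finset.univ.filter fun e => Odd (W13245 e ∩ A).card, θ' e := by
  rintro ⟨α, θ, θt, θ', hα, hα1, hθ, hθt, hθ', h⟩

  have h01 := h {0,1} (by decide)
  rw [show (Finset.univ.filter fun e => Odd (W12345 e ∩ ({0,1}:Finset (Fin 5))).card) = ({0,1}:Finset (Fin 7)) by decide,
      show (Finset.univ.filter fun e => Odd (W13245 e ∩ ({0,1}:Finset (Fin 5))).card) = ({0,1,5,6}:Finset (Fin 7)) by decide] at h01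
  simp [Finset.prod_insert, Finset.mem_insert] at h01
  have h02 := h {0,2} (by decide)
  rw [show (Finset.univ.filter fun e => Odd (W12345 e ∩ ({0,2}:Finset (Fin 5))).card) = ({0,2,5,6}:Finset (Fin 7)) by decide,
      show (Finset.univ.filter fun e => Odd (W13245 e ∩ ({0,2}:Finset (Fin 5))).card) = ({0,2}:Finset (Fin 7)) by decide] at h02
  simp [Finset.prod_insert, Finset.mem_insert] at h02
  have h13 := h {1,3} (by decide)
  rw [show (Finset.univ.filter fun e => Odd (W12345 e ∩ ({1,3}:Finset (Fin 5))).card) = ({1,3,5,6}:Finset (Fin 7)) by decide,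
      show (Finset.univ.filter fun e => Odd (W13245 e ∩ ({1,3}:Finset (Fin 5))).card) = ({1,3}:Finset (Fin 7)) by decide] at h13
  simp [Finset.prod_insert, Finset.mem_insert] at h13
  have h24 := h {2,4} (by decide)
  rw [show (Finset.univ.filter fun e => Odd (W12345 e ∩ ({2,4}:Finset (Fin 5))).card) = ({2,4,6}:Finset (Fin 7)) by decide,
      show (Finset.univ.filter fun e => Odd (W13245 e ∩ ({2,4}:Finset (Fin 5))).card) = ({2,4,5}:Finset (Fin 7)) by decide] at h24
  simp [Finset.prod_insert, Finset.mem_insert] at h24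
  have h34 := h {3,4} (by decide)
  rw [show (Finset.univ.filter fun e => Odd (W12345 e ∩ ({3,4}:Finset (Fin 5))).card) = ({3,4,6}:Finset (Fin 7)) by decide,
      show (Finset.univ.filter fun e => Odd (W13245 e ∩ ({3,4}:Finset (Fin 5))).card) = ({3,4,6}:Finset (Fin 7)) by decide] at h34
  simp [Finset.prod_insert, Finset.mem_insert] at h34
  have h0123 := h {0,1,2,3} (by decide)
  rw [show (Finset.univ.filter fun e => Odd (W12345 e ∩ ({0,1,2,3}:Finset (Fin 5))).card) = ({0,1,2,3}:Finset (Fin 7)) by decide,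
      show (Finset.univ.filter fun e => Odd (W13245 e ∩ ({0,1,2,3}:Finset (Fin 5))).card) = ({0,1,2,3}:Finset (Fin 7)) by decide] at h0123
  simp [Finset.prod_insert, Finset.mem_insert] at h0123
  have h0124 := h {0,1,2,4} (by decide)
  rw [show (Finset.univ.filter fun e => Odd (W12345 e ∩ ({0,1,2,4}:Finset (Fin 5))).card) = ({0,1,2,4,6}:Finset (Fin 7)) by decide,
      show (Finset.univ.filter fun e => Odd (W13245 e ∩ ({0,1,2,4}:Finset (Fin 5))).card) = ({0,1,2,4,6}:Finset (Fin 7)) by decide] at h0124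
  simp [Finset.prod_insert, Finset.mem_insert] at h0124
  have h0134 := h {0,1,3,4} (by decide)
  rw [show (Finset.univ.filter fun e => Odd (W12345 e ∩ ({0,1,3,4}:Finset (Fin 5))).card) = ({0,1,3,4,6}:Finset (Fin 7)) by decide,
      show (Finset.univ.filter fun e => Odd (W13245 e ∩ ({0,1,3,4}:Finset (Fin 5))).card) = ({0,1,3,4,5}:Finset (Fin 7)) by decide] at h0134
  simp [Finset.prod_insert, Finset.mem_insert] at h0134
  have h0234 := h {0,2,3,4} (by decide)
  rw [show (Finset.univ.filter fun e => Odd (W12345 e ∩ ({0,2,3,4}:Finset (Fin 5))).card) = ({0,2,3,4,5}:Finset (Fin 7)) by decide,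
      show (Finset.univ.filter fun e => Odd (W13245 e ∩ ({0,2,3,4}:Finset (Fin 5))).card) = ({0,2,3,4,6}:Finset (Fin 7)) by decide] at h0234
  simp [Finset.prod_insert, Finset.mem_insert] at h0234
  have h1234 := h {1,2,3,4} (by decide)
  rw [show (Finset.univ.filter fun e => Odd (W12345 e ∩ ({1,2,3,4}:Finset (Fin 5))).card) = ({1,2,3,4,5}:Finset (Fin 7)) by decide,
      show (Finset.univ.filter fun e => Odd (W13245 e ∩ ({1,2,3,4}:Finset (Fin 5))).card) = ({1,2,3,4,5}:Finset (Fin 7)) by decide] at h1234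
  simp [Finset.prod_insert, Finset.mem_insert] at h1234
  -- positivity facts
  have hαα : 0 < α * (1 - α) := mul_pos hα (by linarith)
  have p0 := (hθ' 0).1; have p1 := (hθ' 1).1; have p2 := (hθ' 2).1
  have p3 := (hθ' 3).1; have p4 := (hθ' 4).1; have p5 := (hθ' 5).1
  have p6 := (hθ' 6).1
  have p5u := (hθ' 5).2; have p6u := (hθ' 6).2
  have a0 := (hθ 0).1; have a1 := (hθ 1).1; have a2 := (hθ 2).1
  have a3 := (hθ 3).1; have a4 := (hθ 4).1; have a5 := (hθ 5).1
  have a6 := (hθ 6).1; have a5u := (hθ 5).2; have a6u := (hθ 6).2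
  have b0 := (hθt 0).1; have b1 := (hθt 1).1; have b2 := (hθt 2).1
  have b3 := (hθt 3).1; have b4 := (hθt 4).1; have b5 := (hθt 5).1
  have b6 := (hθt 6).1; have b5u := (hθt 5).2; have b6u := (hθt 6).2
  -- key identities
  have e5 : α*(1-α)*((θ 0*θ 2*θ 5*θ 6 - θt 0*θt 2*θt 5*θt 6) * (θ 1*θ 3*θ 5*θ 6 - θt 1*θt 3*θt 5*θt 6))
      = -(α*(θ 0*θ 1*θ 2*θ 3)*(1-(θ 5*θ 6)^2) + (1-α)*(θt 0*θt 1*θt 2*θt 3)*(1-(θt 5*θt 6)^2)) := by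
    linear_combination h0123 - (θ' 1*θ' 3)*h02 - (α*(θ 0*(θ 2*(θ 5*θ 6)))+(1-α)*(θt 0*(θt 2*(θt 5*θt 6))))*h13
  have e3 : α*(1-α)*((θ 0*θ 2*θ 5*θ 6 - θt 0*θt 2*θt 5*θt 6) * (θ 3*θ 4*θ 6 - θt 3*θt 4*θt 6))
      = -(α*(θ 0*θ 2*θ 3*θ 4*θ 5)*(1-(θ 6)^2) + (1-α)*(θt 0*θt 2*θt 3*θt 4*θt 5)*(1-(θt 6)^2)) := by
    linear_combination h0234 - (θ' 3*(θ' 4*θ' 6))*h02 - (α*(θ 0*(θ 2*(θ 5*θ 6)))+(1-α)*(θt 0*(θt 2*(θt 5*θt 6))))*h34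
  have e4 : α*(1-α)*((θ 1*θ 3*θ 5*θ 6 - θt 1*θt 3*θt 5*θt 6) * (θ 2*θ 4*θ 6 - θt 2*θt 4*θt 6))
      = -(α*(θ 1*θ 2*θ 3*θ 4*θ 5)*(1-(θ 6)^2) + (1-α)*(θt 1*θt 2*θt 3*θt 4*θt 5)*(1-(θt 6)^2)) := by
    linear_combination h1234 - (θ' 2*(θ' 4*θ' 5))*h13 - (α*(θ 1*(θ 3*(θ 5*θ 6)))+(1-α)*(θt 1*(θt 3*(θt 5*θt 6))))*h24
  have e6 : α*(1-α)*((θ 2*θ 4*θ 6 - θt 2*θt 4*θt 6) * (θ 0*θ 1 - θt 0*θt 1))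
      = θ' 0*θ' 1*θ' 2*θ' 4*θ' 6*(1-(θ' 5)^2) := by
    linear_combination h0124 - (θ' 0*(θ' 1*(θ' 5*θ' 6)))*h24 - (α*(θ 2*(θ 4*θ 6))+(1-α)*(θt 2*(θt 4*θt 6)))*h01
  have e7 : α*(1-α)*((θ 3*θ 4*θ 6 - θt 3*θt 4*θt 6) * (θ 0*θ 1 - θt 0*θt 1))
      = θ' 0*θ' 1*θ' 3*θ' 4*θ' 5*(1-(θ' 6)^2) := by
    linear_combination h0134 - (θ' 0*(θ' 1*(θ' 5*θ' 6)))*h34 - (α*(θ 3*(θ 4*θ 6))+(1-α)*(θt 3*(θt 4*θt 6)))*h01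
  -- positivity of right-hand sides
  have r6 : 0 < θ' 0*θ' 1*θ' 2*θ' 4*θ' 6*(1-(θ' 5)^2) := by
    have h1 : 0 < 1 - (θ' 5)^2 := sqpos p5 p5u
    have h2 := mul_pos (mul_pos (mul_pos (mul_pos p0 p1) p2) p4) p6
    exact mul_pos h2 h1
  have r7 : 0 < θ' 0*θ' 1*θ' 3*θ' 4*θ' 5*(1-(θ' 6)^2) := by
    have h1 : 0 < 1 - (θ' 6)^2 := sqpos p6 p6u
    have h2 := mul_pos (mul_pos (mul_pos (mul_pos p0 p1) p3) p4) p5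
    exact mul_pos h2 h1
  have r5 : 0 < α*(θ 0*θ 1*θ 2*θ 3)*(1-(θ 5*θ 6)^2) + (1-α)*(θt 0*θt 1*θt 2*θt 3)*(1-(θt 5*θt 6)^2) := by
    have h1 : 0 < 1 - (θ 5*θ 6)^2 := sqpos2 a5 a5u a6 a6u
    have h2 : 0 < 1 - (θt 5*θt 6)^2 := sqpos2 b5 b5u b6 b6u
    have m1 := mul_pos (mul_pos hα (mul_pos (mul_pos (mul_pos a0 a1) a2) a3)) h1
    have m2 := mul_pos (mul_pos (show (0:ℝ) < 1 - α by linarith) (mul_pos (mul_pos (mul_pos b0 b1) b2) b3)) h2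
    linarith
  have r3 : 0 < α*(θ 0*θ 2*θ 3*θ 4*θ 5)*(1-(θ 6)^2) + (1-α)*(θt 0*θt 2*θt 3*θt 4*θt 5)*(1-(θt 6)^2) := by
    have h1 : 0 < 1 - (θ 6)^2 := sqpos a6 a6u
    have h2 : 0 < 1 - (θt 6)^2 := sqpos b6 b6u
    have m1 := mul_pos (mul_pos hα (mul_pos (mul_pos (mul_pos (mul_pos a0 a2) a3) a4) a5)) h1
    have m2 := mul_pos (mul_pos (show (0:ℝ) < 1 - α by linarith) (mul_pos (mul_pos (mul_pos (mul_pos b0 b2) b3) b4) b5)) h2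
    linarith
  have r4 : 0 < α*(θ 1*θ 2*θ 3*θ 4*θ 5)*(1-(θ 6)^2) + (1-α)*(θt 1*θt 2*θt 3*θt 4*θt 5)*(1-(θt 6)^2) := by
    have h1 : 0 < 1 - (θ 6)^2 := sqpos a6 a6u
    have h2 : 0 < 1 - (θt 6)^2 := sqpos b6 b6u
    have m1 := mul_pos (mul_pos hα (mul_pos (mul_pos (mul_pos (mul_pos a1 a2) a3) a4) a5)) h1
    have m2 := mul_pos (mul_pos (show (0:ℝ) < 1 - α by linarith) (mul_pos (mul_pos (mul_pos (mul_pos b1 b2) b3) b4) b5)) h2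
    linarith
  -- sign facts for the differences
  set d01 := θ 0*θ 1 - θt 0*θt 1 with hd01def
  set d02 := θ 0*θ 2*θ 5*θ 6 - θt 0*θt 2*θt 5*θt 6 with hd02def
  set d13 := θ 1*θ 3*θ 5*θ 6 - θt 1*θt 3*θt 5*θt 6 with hd13def
  set d24 := θ 2*θ 4*θ 6 - θt 2*θt 4*θt 6 with hd24def
  set d34 := θ 3*θ 4*θ 6 - θt 3*θt 4*θt 6 with hd34def
  have s5 : d02 * d13 < 0 := by
    by_contra hc
    push_neg at hc
    have := mul_nonneg hαα.le hc
    linarith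
  have s3 : d02 * d34 < 0 := by
    by_contra hc
    push_neg at hc
    have := mul_nonneg hαα.le hc
    linarith
  have s4 : d13 * d24 < 0 := by
    by_contra hc
    push_neg at hc
    have := mul_nonneg hαα.le hc
    linarith
  have s6 : 0 < d24 * d01 := by
    by_contra hc
    push_neg at hc
    have := mul_nonpos_of_nonneg_of_nonpos hαα.le hc
    linarith
  have s7 : 0 < d34 * d01 := by
    by_contra hc
    push_neg at hc
    have := mul_nonpos_of_nonneg_of_nonpos hαα.le hc
    linarith
  have hA0 : d01 ≠ 0 := by
    intro hz
    rw [hz, mul_zero] at s6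
    exact lt_irrefl 0 s6
  have P1 : 0 < (d02*d34)*(d13*d24) := mul_pos_of_neg_of_neg s3 s4
  have P2 : 0 < (d24*d01)*(d34*d01) := mul_pos s6 s7
  have P3 : 0 < ((d02*d34)*(d13*d24))*(d01*d01) := mul_pos P1 (mul_self_pos.2 hA0)
  have P4 : (d02*d13)*((d24*d01)*(d34*d01)) < 0 := mul_neg_of_neg_of_pos s5 P2
  linarith [P3, P4]
end

section
/- There do not exist a real α with 0 < α < 1 and functions θ, θ̃, θ' : Fin 7 → ℝ with all values in the open interval (0,1), such that for every A : Finset (Fin 5) of even cardinality, α * ∏_{e ∈ Fin 7 with |L e ∩ A| odd} θ e + (1 − α) * ∏_{e ∈ Fin 7 with |L e ∩ A| odd} θ̃ e = ∏_{e ∈ Fin 7 with |L' e ∩ A| odd} θ' e, where L is the leaf-side structure of the five-leaf tree with cherries {0,1} and {2,3} and central leaf 4, and L' is that of the five-leaf tree with cherries {0,2} and {1,4} and central leaf 3. (In the paper's notation: W₁₂₃₄₅ cannot be mixed with two classes to mimic W₁₃₂₅₄ under the CFN model.) -/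
set_option maxHeartbeats 1000000

private lemma ppos {k X : ℝ} (hk : 0 < k) (h : 0 < k * X) : 0 < X := by
  rcases mul_pos_iff.mp h with ⟨_, h2⟩ | ⟨h1, _⟩
  · exact h2
  · linarith

private lemma pneg {k X : ℝ} (hk : 0 < k) (h : k * X < 0) : X < 0 := by
  rcases mul_neg_iff.mp h with ⟨_, h2⟩ | ⟨h1, _⟩
  · exact h2
  · linarith

lemma cfn_core (al s t w x a0 a1 a2 a3 a4 b0 b1 b2 b3 b4 p0 p1 p2 p3 p4 p5 p6 : ℝ)
    (hal0 : 0 < al) (hal1 : al < 1)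
    (ha0 : 0 < a0) (ha1 : 0 < a1) (ha2 : 0 < a2) (ha3 : 0 < a3) (ha4 : 0 < a4)
    (hb0 : 0 < b0) (hb1 : 0 < b1) (hb2 : 0 < b2) (hb3 : 0 < b3) (hb4 : 0 < b4)
    (hs : 0 < s) (ht : 0 < t) (hw : 0 < w) (hx : 0 < x)
    (hs1 : s < 1) (ht1 : t < 1) (hw1 : w < 1) (hx1 : x < 1)
    (hp0 : 0 < p0) (hp1 : 0 < p1) (hp2 : 0 < p2) (hp3 : 0 < p3) (hp4 : 0 < p4)
    (hp5 : 0 < p5) (hp6 : 0 < p6) (hp5' : p5 < 1) (hp6' : p6 < 1)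
    (hd : a1 * b0 < a0 * b1)
    (hE01 : al * (a0 * a1) + (1 - al) * (b0 * b1) = p0 * p1 * p5 * p6)
    (hE02 : al * (a0 * a2 * s * w) + (1 - al) * (b0 * b2 * t * x) = p0 * p2)
    (hE03 : al * (a0 * a3 * s * w) + (1 - al) * (b0 * b3 * t * x) = p0 * p3 * p5)
    (hE04 : al * (a0 * a4 * s) + (1 - al) * (b0 * b4 * t) = p0 * p4 * p5 * p6)
    (hE12 : al * (a1 * a2 * s * w) + (1 - al) * (b1 * b2 * t * x) = p1 * p2 * p5 * p6)
    (hE13 : al * (a1 * a3 * s * w) + (1 - al) * (b1 * b3 * t * x) = p1 * p3 * p6)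
    (hE14 : al * (a1 * a4 * s) + (1 - al) * (b1 * b4 * t) = p1 * p4)
    (hE23 : al * (a2 * a3) + (1 - al) * (b2 * b3) = p2 * p3 * p5)
    (hE24 : al * (a2 * a4 * w) + (1 - al) * (b2 * b4 * x) = p2 * p4 * p5 * p6)
    (hE34 : al * (a3 * a4 * w) + (1 - al) * (b3 * b4 * x) = p3 * p4 * p6)
    (hE0123 : al * (a0 * a1 * a2 * a3) + (1 - al) * (b0 * b1 * b2 * b3) = p0 * p1 * p2 * p3 * p6)
    (hE0234 : al * (a0 * a2 * a3 * a4 * s) + (1 - al) * (b0 * b2 * b3 * b4 * t) = p0 * p2 * p3 * p4 * p6)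
    (hE1234 : al * (a1 * a2 * a3 * a4 * s) + (1 - al) * (b1 * b2 * b3 * b4 * t) = p1 * p2 * p3 * p4 * p5)
    (hE0134 : al * (a0 * a1 * a3 * a4 * w) + (1 - al) * (b0 * b1 * b3 * b4 * x) = p0 * p1 * p3 * p4 * p5) :
    False := by
  have hbe : (0:ℝ) < 1 - al := by linarith
  have hD01 : 0 < a0 * b1 - a1 * b0 := by linarith
  have hp52 : (0:ℝ) < 1 - p5 ^ 2 := by nlinarith only [hp5, hp5']
  have hp62 : (0:ℝ) < 1 - p6 ^ 2 := by nlinarith only [hp6, hp6']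
  -- S1 : D01 * D23 > 0, hence D23 > 0
  have hid1 : (al * (1 - al) * (s * t * w * x) * (a0 * b1 - a1 * b0)) * (a2 * b3 - a3 * b2)
      = p0 * p1 * p2 * p3 * p6 * (1 - p5 ^ 2) := by
    linear_combination (al * (a1 * a3 * s * w) + (1 - al) * (b1 * b3 * t * x)) * hE02
      + (p0 * p2) * hE13 - (al * (a1 * a2 * s * w) + (1 - al) * (b1 * b2 * t * x)) * hE03
      - (p0 * p3 * p5) * hE12
  have hR1 : 0 < p0 * p1 * p2 * p3 * p6 * (1 - p5 ^ 2) :=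
    mul_pos (mul_pos (mul_pos (mul_pos (mul_pos hp0 hp1) hp2) hp3) hp6) hp52
  have hD23 : 0 < a2 * b3 - a3 * b2 :=
    ppos (mul_pos (mul_pos (mul_pos hal0 hbe)
      (mul_pos (mul_pos (mul_pos hs ht) hw) hx)) hD01) (by rw [hid1]; exact hR1)
  -- S3 (P1)
  have hid3 : (al * (1 - al)) * ((a0 * a1 - b0 * b1) * (a2 * a3 - b2 * b3))
      = p0 * p1 * p2 * p3 * p6 * (1 - p5 ^ 2) := by
    linear_combination hE0123 - (al * (a2 * a3) + (1 - al) * (b2 * b3)) * hE01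
      - (p0 * p1 * p5 * p6) * hE23
  have hP1 : 0 < (a0 * a1 - b0 * b1) * (a2 * a3 - b2 * b3) :=
    ppos (mul_pos hal0 hbe) (by rw [hid3]; exact hR1)
  -- S4 : s*a1*b4 = t*a4*b1
  have hid4 : (al * (1 - al) * (w * x) * (a2 * b3 - a3 * b2)) * (s * (a1 * b4) - t * (a4 * b1)) = 0 := by
    linear_combination (al * (a3 * a4 * w) + (1 - al) * (b3 * b4 * x)) * hE12
      + (p1 * p2 * p5 * p6) * hE34 - (al * (a2 * a4 * w) + (1 - al) * (b2 * b4 * x)) * hE13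
      - (p1 * p3 * p6) * hE24
  have hk4 : 0 < al * (1 - al) * (w * x) * (a2 * b3 - a3 * b2) :=
    mul_pos (mul_pos (mul_pos hal0 hbe) (mul_pos hw hx)) hD23
  have heq4 : s * (a1 * b4) = t * (a4 * b1) := by
    rcases mul_eq_zero.mp hid4 with h | h
    · exact absurd h (ne_of_gt hk4)
    · linarith only [h]
  -- S5
  have hid5 : (al * (1 - al)) * ((s * (a1 * a4) - t * (b1 * b4)) * (a2 * a3 - b2 * b3)) = 0 := by
    linear_combination hE1234 - (al * (a2 * a3) + (1 - al) * (b2 * b3)) * hE14 - (p1 * p4) * hE23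
  have hne23 : a2 * a3 - b2 * b3 ≠ 0 := by
    intro h
    rw [h, mul_zero] at hP1
    exact lt_irrefl 0 hP1
  have heq5 : s * (a1 * a4) = t * (b1 * b4) := by
    rcases mul_eq_zero.mp hid5 with h | h
    · exact absurd h (ne_of_gt (mul_pos hal0 hbe))
    · rcases mul_eq_zero.mp h with h' | h'
      · linarith only [h']
      · exact absurd h' hne23
  -- a4 = b4
  have hsq : (a4 - b4) * (t * b1 * (a4 + b4)) = 0 := by
    linear_combination b4 * heq5 - a4 * heq4
  have ha4b4 : a4 = b4 := by
    rcases mul_eq_zero.mp hsq with h | h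
    · linarith only [h]
    · exfalso
      have : 0 < t * b1 * (a4 + b4) :=
        mul_pos (mul_pos ht hb1) (by linarith only [ha4, hb4])
      linarith only [h, this]
  -- s*a1 = t*b1
  have hstb : s * a1 = t * b1 := by
    have h := heq4
    rw [ha4b4] at h
    exact mul_right_cancel₀ (ne_of_gt hb4) (show (s * a1) * b4 = (t * b1) * b4 by linear_combination h)
  -- S9 (P4) ⇒ a2a3 > b2b3
  have hid9 : (al * (1 - al)) * ((a2 * a3 - b2 * b3) * (s * (a0 * a4) - t * (b0 * b4)))
      = p0 * p2 * p3 * p4 * p6 * (1 - p5 ^ 2) := by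
    linear_combination hE0234 - (al * (a0 * a4 * s) + (1 - al) * (b0 * b4 * t)) * hE23
      - (p2 * p3 * p5) * hE04
  have hR9 : 0 < p0 * p2 * p3 * p4 * p6 * (1 - p5 ^ 2) :=
    mul_pos (mul_pos (mul_pos (mul_pos (mul_pos hp0 hp2) hp3) hp4) hp6) hp52
  have hq9 : 0 < (a2 * a3 - b2 * b3) * (s * (a0 * a4) - t * (b0 * b4)) :=
    ppos (mul_pos hal0 hbe) (by rw [hid9]; exact hR9)
  have hkey9 : b1 * (s * (a0 * a4) - t * (b0 * b4)) = s * b4 * (a0 * b1 - a1 * b0) := by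
    rw [ha4b4]; linear_combination b0 * b4 * hstb
  have hsf9 : 0 < s * (a0 * a4) - t * (b0 * b4) :=
    ppos hb1 (by rw [hkey9]; exact mul_pos (mul_pos hs hb4) hD01)
  have h2233 : 0 < a2 * a3 - b2 * b3 := by
    rcases mul_pos_iff.mp hq9 with ⟨h1, _⟩ | ⟨_, h2⟩
    · exact h1
    · linarith only [h2, hsf9]
  have h0011 : 0 < a0 * a1 - b0 * b1 := by
    rcases mul_pos_iff.mp hP1 with ⟨h1, _⟩ | ⟨_, h2⟩
    · exact h1
    · linarith only [h2, h2233]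
  -- b2 < a2 , b0 < a0
  have h2b2 : b2 < a2 := by
    have key := mul_lt_mul'' (show a3 * b2 < a2 * b3 by linarith only [hD23])
      (show b2 * b3 < a2 * a3 by linarith only [h2233])
      (le_of_lt (mul_pos ha3 hb2)) (le_of_lt (mul_pos hb2 hb3))
    have hsq2 : b2 ^ 2 < a2 ^ 2 := by
      have := ppos (mul_pos ha3 hb3)
        (show 0 < (a3 * b3) * (a2 ^ 2 - b2 ^ 2) by nlinarith only [key])
      linarith only [this]
    nlinarith only [hsq2, ha2, hb2]
  have h0b0 : b0 < a0 := by
    have key := mul_lt_mul'' hd (show b0 * b1 < a0 * a1 by linarith only [h0011])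
      (le_of_lt (mul_pos ha1 hb0)) (le_of_lt (mul_pos hb0 hb1))
    have hsq0 : b0 ^ 2 < a0 ^ 2 := by
      have := ppos (mul_pos ha1 hb1)
        (show 0 < (a1 * b1) * (a0 ^ 2 - b0 ^ 2) by nlinarith only [key])
      linarith only [this]
    nlinarith only [hsq0, ha0, hb0]
  -- positivity aux
  have hw2 : (0:ℝ) < 1 - w ^ 2 := by nlinarith only [hw, hw1]
  have hx2 : (0:ℝ) < 1 - x ^ 2 := by nlinarith only [hx, hx1]
  have hwx : (0:ℝ) < 1 - w * x := by nlinarith only [hw, hx, hw1, hx1]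
  have hst : (0:ℝ) < 1 - s * t := by nlinarith only [hs, ht, hs1, ht1]
  have hstwx : (0:ℝ) < 1 - s * t * w * x := by
    linarith only [mul_pos (mul_pos hs ht) hwx, hst]
  have hs2 : (0:ℝ) < 1 - s ^ 2 := by nlinarith only [hs, hs1]
  have ht2 : (0:ℝ) < 1 - t ^ 2 := by nlinarith only [ht, ht1]
  -- S8 (N1) : (a3*a4 - b3*b4) * (s*(a0*a2) - t*(b0*b2)) < 0
  have hid8 : al * s * (a0 * a2 * a3 * a4) * (1 - al * w ^ 2)
      + (1 - al) * t * (b0 * b2 * b3 * b4) * (1 - (1 - al) * x ^ 2)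
      - al * (1 - al) * (w * x) * (s * (a0 * a2 * b3 * b4) + t * (a3 * a4 * b0 * b2)) = 0 := by
    linear_combination hE0234 - (al * (a3 * a4 * w) + (1 - al) * (b3 * b4 * x)) * hE02
      - (p0 * p2) * hE34
  have hP2 : 0 < a0 * a2 * a3 * a4 := mul_pos (mul_pos (mul_pos ha0 ha2) ha3) ha4
  have hQ2 : 0 < b0 * b2 * b3 * b4 := mul_pos (mul_pos (mul_pos hb0 hb2) hb3) hb4
  have hM8 : 0 < s * (a0 * a2 * b3 * b4) + t * (a3 * a4 * b0 * b2) :=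
    add_pos (mul_pos hs (mul_pos (mul_pos (mul_pos ha0 ha2) hb3) hb4))
      (mul_pos ht (mul_pos (mul_pos (mul_pos ha3 ha4) hb0) hb2))
  have he81 : al * s * (a0 * a2 * a3 * a4) * (1 - al) < al * s * (a0 * a2 * a3 * a4) * (1 - al * w ^ 2) := by
    nlinarith only [mul_pos (mul_pos (mul_pos hal0 hs) hP2) hal0, hw2]
  have he82' : (1 - al) * t * (b0 * b2 * b3 * b4) * al
      < (1 - al) * t * (b0 * b2 * b3 * b4) * (1 - (1 - al) * x ^ 2) := by
    nlinarith only [mul_pos (mul_pos (mul_pos hbe ht) hQ2) hbe, hx2]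
  have he83 : al * (1 - al) * (w * x) * (s * (a0 * a2 * b3 * b4) + t * (a3 * a4 * b0 * b2))
      < al * (1 - al) * (s * (a0 * a2 * b3 * b4) + t * (a3 * a4 * b0 * b2)) := by
    nlinarith only [mul_pos (mul_pos hal0 hbe) hM8, hwx]
  have hS8 : (a3 * a4 - b3 * b4) * (s * (a0 * a2) - t * (b0 * b2)) < 0 := by
    have h := pneg (mul_pos hal0 hbe)
      (show al * (1 - al) * ((s * (a0 * a2 * a3 * a4) + t * (b0 * b2 * b3 * b4))
        - (s * (a0 * a2 * b3 * b4) + t * (a3 * a4 * b0 * b2))) < 0 by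
          nlinarith only [hid8, he81, he82', he83])
    nlinarith only [h]
  have hkey2 : b1 * (s * (a0 * a2) - t * (b0 * b2)) = s * (a0 * a2 * b1 - a1 * (b0 * b2)) := by
    linear_combination b0 * b2 * hstb
  have hbr9 : 0 < a0 * a2 * b1 - a1 * (b0 * b2) := by
    nlinarith only [mul_pos ha0 hb1, hb2, h2b2, hd, hD01]
  have hsf2 : 0 < s * (a0 * a2) - t * (b0 * b2) :=
    ppos hb1 (by rw [hkey2]; exact mul_pos hs hbr9)
  have h3b3 : a3 < b3 := by
    have hf1 : a3 * a4 - b3 * b4 < 0 := by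
      rcases mul_neg_iff.mp hS8 with ⟨_, h2⟩ | ⟨h1, _⟩
      · linarith only [h2, hsf2]
      · exact h1
    rw [ha4b4] at hf1
    have := pneg hb4 (show b4 * (a3 - b3) < 0 by linarith only [hf1])
    linarith only [this]
  -- S7 (K1) : second factor negative, giving r0 < r1 r2
  have hid7 : al ^ 2 * (s * (a0 * a2 * a3 * a4)) * (w ^ 2 - 1)
      + (1 - al) ^ 2 * (t * (b0 * b2 * b3 * b4)) * (x ^ 2 - 1)
      + al * (1 - al) * ((w * x) * (s * (a0 * a3 * b2 * b4) + t * (a2 * a4 * b0 * b3))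
        - (s * (a0 * a4 * b2 * b3) + t * (a2 * a3 * b0 * b4))) = 0 := by
    linear_combination (al * (a2 * a4 * w) + (1 - al) * (b2 * b4 * x)) * hE03
      + (p0 * p3 * p5) * hE24 - (al * (a2 * a3) + (1 - al) * (b2 * b3)) * hE04
      - (p0 * p4 * p5 * p6) * hE23
  have ht71 : al ^ 2 * (s * (a0 * a2 * a3 * a4)) * (w ^ 2 - 1) < 0 := by
    nlinarith only [mul_pos (mul_pos (pow_pos hal0 2) (mul_pos hs hP2)) hw2]
  have ht72 : (1 - al) ^ 2 * (t * (b0 * b2 * b3 * b4)) * (x ^ 2 - 1) < 0 := by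
    nlinarith only [mul_pos (mul_pos (pow_pos hbe 2) (mul_pos ht hQ2)) hx2]
  have hM7 : 0 < s * (a0 * a3 * b2 * b4) + t * (a2 * a4 * b0 * b3) :=
    add_pos (mul_pos hs (mul_pos (mul_pos (mul_pos ha0 ha3) hb2) hb4))
      (mul_pos ht (mul_pos (mul_pos (mul_pos ha2 ha4) hb0) hb3))
  have hbr7 : 0 < (w * x) * (s * (a0 * a3 * b2 * b4) + t * (a2 * a4 * b0 * b3))
      - (s * (a0 * a4 * b2 * b3) + t * (a2 * a3 * b0 * b4)) :=
    ppos (mul_pos hal0 hbe) (by nlinarith only [hid7, ht71, ht72])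
  have hK1 : 0 < (a3 * b4 - a4 * b3) * (s * (a0 * b2) - t * (a2 * b0)) := by
    nlinarith only [hbr7, mul_pos hwx hM7]
  have hneg34 : a3 * b4 - a4 * b3 < 0 := by
    rw [ha4b4]
    have := mul_pos hb4 (show 0 < b3 - a3 by linarith only [h3b3])
    linarith only [this]
  have hsb7 : s * (a0 * b2) - t * (a2 * b0) < 0 := by
    rcases mul_pos_iff.mp hK1 with ⟨h1, _⟩ | ⟨_, h2⟩
    · linarith only [h1, hneg34]
    · exact h2
  have hkey7 : b1 * (s * (a0 * b2) - t * (a2 * b0)) = s * (a0 * b1 * b2 - a1 * (a2 * b0)) := by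
    linear_combination a2 * b0 * hstb
  have hF7 : a0 * b1 * b2 < a1 * (a2 * b0) := by
    have h1 : s * (a0 * b1 * b2 - a1 * (a2 * b0)) < 0 := by
      rw [← hkey7]; exact mul_neg_of_pos_of_neg hb1 hsb7
    have := pneg hs h1
    linarith only [this]
  -- S11 (J2) : w*a3 > x*b3
  have hid11 : (al * (1 - al) * (s * t) * (a0 * b1 - a1 * b0)) * (w * (a3 * b4) - x * (a4 * b3))
      = p0 * p1 * p3 * p4 * p5 * (1 - p6 ^ 2) := by
    linear_combination (al * (a1 * a4 * s) + (1 - al) * (b1 * b4 * t)) * hE03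
      + (p0 * p3 * p5) * hE14 - (al * (a1 * a3 * s * w) + (1 - al) * (b1 * b3 * t * x)) * hE04
      - (p0 * p4 * p5 * p6) * hE13
  have hR11 : 0 < p0 * p1 * p3 * p4 * p5 * (1 - p6 ^ 2) :=
    mul_pos (mul_pos (mul_pos (mul_pos (mul_pos hp0 hp1) hp3) hp4) hp5) hp62
  have hG13' : 0 < w * (a3 * b4) - x * (a4 * b3) :=
    ppos (mul_pos (mul_pos (mul_pos hal0 hbe) (mul_pos hs ht)) hD01)
      (by rw [hid11]; exact hR11)
  have hG13 : x * b3 < w * a3 := by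
    rw [ha4b4] at hG13'
    have := ppos hb4 (show 0 < b4 * (w * a3 - x * b3) by linarith only [hG13'])
    linarith only [this]
  -- S12 (N2) : a1 < b1
  have hid12 : al * w * (a0 * a1 * a3 * a4) * (1 - al * s ^ 2)
      + (1 - al) * x * (b0 * b1 * b3 * b4) * (1 - (1 - al) * t ^ 2)
      - al * (1 - al) * (s * t) * (w * (a0 * a3 * b1 * b4) + x * (a1 * a4 * b0 * b3)) = 0 := by
    linear_combination hE0134 - (al * (a1 * a4 * s) + (1 - al) * (b1 * b4 * t)) * hE03
      - (p0 * p3 * p5) * hE14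
  have hP3 : 0 < a0 * a1 * a3 * a4 := mul_pos (mul_pos (mul_pos ha0 ha1) ha3) ha4
  have hQ3 : 0 < b0 * b1 * b3 * b4 := mul_pos (mul_pos (mul_pos hb0 hb1) hb3) hb4
  have hM12 : 0 < w * (a0 * a3 * b1 * b4) + x * (a1 * a4 * b0 * b3) :=
    add_pos (mul_pos hw (mul_pos (mul_pos (mul_pos ha0 ha3) hb1) hb4))
      (mul_pos hx (mul_pos (mul_pos (mul_pos ha1 ha4) hb0) hb3))
  have he121 : al * w * (a0 * a1 * a3 * a4) * (1 - al) < al * w * (a0 * a1 * a3 * a4) * (1 - al * s ^ 2) := by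
    nlinarith only [mul_pos (mul_pos (mul_pos hal0 hw) hP3) hal0, hs2]
  have he122 : (1 - al) * x * (b0 * b1 * b3 * b4) * al
      < (1 - al) * x * (b0 * b1 * b3 * b4) * (1 - (1 - al) * t ^ 2) := by
    nlinarith only [mul_pos (mul_pos (mul_pos hbe hx) hQ3) hbe, ht2]
  have he123 : al * (1 - al) * (s * t) * (w * (a0 * a3 * b1 * b4) + x * (a1 * a4 * b0 * b3))
      < al * (1 - al) * (w * (a0 * a3 * b1 * b4) + x * (a1 * a4 * b0 * b3)) := by
    nlinarith only [mul_pos (mul_pos hal0 hbe) hM12, hst]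
  have hS12 : (a1 * a4 - b1 * b4) * (w * (a0 * a3) - x * (b0 * b3)) < 0 := by
    have h := pneg (mul_pos hal0 hbe)
      (show al * (1 - al) * ((w * (a0 * a1 * a3 * a4) + x * (b0 * b1 * b3 * b4))
        - (w * (a0 * a3 * b1 * b4) + x * (a1 * a4 * b0 * b3))) < 0 by
          nlinarith only [hid12, he121, he122, he123])
    nlinarith only [h]
  have hwax : 0 < w * (a0 * a3) - x * (b0 * b3) := by
    nlinarith only [mul_pos ha0 (show 0 < w * a3 - x * b3 by linarith only [hG13]),
      mul_pos (mul_pos hx hb3) (show 0 < a0 - b0 by linarith only [h0b0])]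
  have h1b1 : a1 < b1 := by
    have hf1 : a1 * a4 - b1 * b4 < 0 := by
      rcases mul_neg_iff.mp hS12 with ⟨_, h2⟩ | ⟨h1, _⟩
      · linarith only [h2, hwax]
      · exact h1
    rw [ha4b4] at hf1
    have := pneg hb4 (show b4 * (a1 - b1) < 0 by linarith only [hf1])
    linarith only [this]
  -- S10 (M1) : x*(a0*b2) > w*(a2*b0)
  have hid10 : al ^ 2 * (w * (a0 * a1 * a2 * a4)) * (1 - s ^ 2)
      + (1 - al) ^ 2 * (x * (b0 * b1 * b2 * b4)) * (1 - t ^ 2)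
      + al * (1 - al) * ((x * (a0 * a1 * b2 * b4) + w * (a2 * a4 * b0 * b1))
        - (s * t) * (x * (a0 * a4 * b1 * b2) + w * (a1 * a2 * b0 * b4))) = 0 := by
    linear_combination (al * (a2 * a4 * w) + (1 - al) * (b2 * b4 * x)) * hE01
      + (p0 * p1 * p5 * p6) * hE24 - (al * (a1 * a2 * s * w) + (1 - al) * (b1 * b2 * t * x)) * hE04
      - (p0 * p4 * p5 * p6) * hE12
  have hP5 : 0 < a0 * a1 * a2 * a4 := mul_pos (mul_pos (mul_pos ha0 ha1) ha2) ha4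
  have hQ5 : 0 < b0 * b1 * b2 * b4 := mul_pos (mul_pos (mul_pos hb0 hb1) hb2) hb4
  have ht101 : 0 < al ^ 2 * (w * (a0 * a1 * a2 * a4)) * (1 - s ^ 2) :=
    mul_pos (mul_pos (pow_pos hal0 2) (mul_pos hw hP5)) hs2
  have ht102 : 0 < (1 - al) ^ 2 * (x * (b0 * b1 * b2 * b4)) * (1 - t ^ 2) :=
    mul_pos (mul_pos (pow_pos hbe 2) (mul_pos hx hQ5)) ht2
  have hN10 : 0 < x * (a0 * a4 * b1 * b2) + w * (a1 * a2 * b0 * b4) :=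
    add_pos (mul_pos hx (mul_pos (mul_pos (mul_pos ha0 ha4) hb1) hb2))
      (mul_pos hw (mul_pos (mul_pos (mul_pos ha1 ha2) hb0) hb4))
  have hbr10 : (x * (a0 * a1 * b2 * b4) + w * (a2 * a4 * b0 * b1))
      - (s * t) * (x * (a0 * a4 * b1 * b2) + w * (a1 * a2 * b0 * b4)) < 0 :=
    pneg (mul_pos hal0 hbe) (by nlinarith only [hid10, ht101, ht102])
  have hS10 : (a1 * b4 - a4 * b1) * (x * (a0 * b2) - w * (a2 * b0)) < 0 := by
    nlinarith only [hbr10, mul_pos hst hN10]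
  have hx02 : w * (a2 * b0) < x * (a0 * b2) := by
    have hf1 : a1 * b4 - a4 * b1 < 0 := by
      rw [ha4b4]
      have := mul_pos hb4 (show 0 < b1 - a1 by linarith only [h1b1])
      linarith only [this]
    rcases mul_neg_iff.mp hS10 with ⟨h1, _⟩ | ⟨_, h2⟩
    · linarith only [h1, hf1]
    · linarith only [h2]
  -- combine : a2*(b0*b3) < a0*(a3*b2)
  have hr0r3 : a2 * (b0 * b3) < a0 * (a3 * b2) := by
    have k := mul_lt_mul'' hG13 hx02 (le_of_lt (mul_pos hx hb3))
      (le_of_lt (mul_pos hw (mul_pos ha2 hb0)))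
    have := ppos (mul_pos hw hx)
      (show 0 < (w * x) * (a0 * (a3 * b2) - a2 * (b0 * b3)) by nlinarith only [k])
    linarith only [this]
  have h02' : a2 * b0 < a0 * b2 := by
    have h1 : 0 < a2 * b0 * (b3 - a3) := mul_pos (mul_pos ha2 hb0) (by linarith only [h3b3])
    have := ppos ha3 (show 0 < a3 * (a0 * b2 - a2 * b0) by nlinarith only [hr0r3, h1])
    linarith only [this]
  -- S2 (B) : (a0*b2 - a2*b0)*(a1*b3 - a3*b1) < 0
  have hid2 : al ^ 2 * ((a0 * a1 * a2 * a3) * (1 - s ^ 2 * w ^ 2))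
      + (1 - al) ^ 2 * ((b0 * b1 * b2 * b3) * (1 - t ^ 2 * x ^ 2))
      + al * (1 - al) * ((a0 * a1 * (b2 * b3) + a2 * a3 * (b0 * b1))
        - (s * t * w * x) * (a0 * a3 * (b1 * b2) + a1 * a2 * (b0 * b3))) = 0 := by
    linear_combination (al * (a2 * a3) + (1 - al) * (b2 * b3)) * hE01
      + (p0 * p1 * p5 * p6) * hE23 - (al * (a1 * a2 * s * w) + (1 - al) * (b1 * b2 * t * x)) * hE03
      - (p0 * p3 * p5) * hE12
  have hP4 : 0 < a0 * a1 * a2 * a3 := mul_pos (mul_pos (mul_pos ha0 ha1) ha2) ha3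
  have hQ4 : 0 < b0 * b1 * b2 * b3 := mul_pos (mul_pos (mul_pos hb0 hb1) hb2) hb3
  have hsw1 : (0:ℝ) < 1 - s * w := by nlinarith only [hs, hw, hs1, hw1]
  have htx1 : (0:ℝ) < 1 - t * x := by nlinarith only [ht, hx, ht1, hx1]
  have hsw2 : (0:ℝ) < 1 - s ^ 2 * w ^ 2 := by
    nlinarith only [hsw1, mul_pos hs hw]
  have htx2 : (0:ℝ) < 1 - t ^ 2 * x ^ 2 := by
    nlinarith only [htx1, mul_pos ht hx]
  have ht21 : 0 < al ^ 2 * ((a0 * a1 * a2 * a3) * (1 - s ^ 2 * w ^ 2)) :=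
    mul_pos (pow_pos hal0 2) (mul_pos hP4 hsw2)
  have ht22 : 0 < (1 - al) ^ 2 * ((b0 * b1 * b2 * b3) * (1 - t ^ 2 * x ^ 2)) :=
    mul_pos (pow_pos hbe 2) (mul_pos hQ4 htx2)
  have hY1 : 0 < a0 * a3 * (b1 * b2) + a1 * a2 * (b0 * b3) :=
    add_pos (mul_pos (mul_pos ha0 ha3) (mul_pos hb1 hb2))
      (mul_pos (mul_pos ha1 ha2) (mul_pos hb0 hb3))
  have hbr2 : (a0 * a1 * (b2 * b3) + a2 * a3 * (b0 * b1))
      - (s * t * w * x) * (a0 * a3 * (b1 * b2) + a1 * a2 * (b0 * b3)) < 0 :=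
    pneg (mul_pos hal0 hbe) (by nlinarith only [hid2, ht21, ht22])
  have hD0213 : (a0 * b2 - a2 * b0) * (a1 * b3 - a3 * b1) < 0 := by
    nlinarith only [hbr2, mul_pos hstwx hY1]
  have h13' : a1 * b3 - a3 * b1 < 0 := by
    rcases mul_neg_iff.mp hD0213 with ⟨_, h2⟩ | ⟨h1, _⟩
    · exact h2
    · linarith only [h1, h02']
  -- endgame
  have m1 : a0 * (b2 * b3) < a2 * (a3 * b0) := by
    have k := mul_lt_mul'' hF7 (show a1 * b3 < a3 * b1 by linarith only [h13'])
      (le_of_lt (mul_pos (mul_pos ha0 hb1) hb2)) (le_of_lt (mul_pos ha1 hb3))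
    have := ppos (mul_pos ha1 hb1)
      (show 0 < (a1 * b1) * (a2 * (a3 * b0) - a0 * (b2 * b3)) by nlinarith only [k])
    linarith only [this]
  have m2 := mul_lt_mul'' m1 hr0r3
    (le_of_lt (mul_pos ha0 (mul_pos hb2 hb3))) (le_of_lt (mul_pos ha2 (mul_pos hb0 hb3)))
  have mfin := ppos (mul_pos (mul_pos ha0 ha2) (mul_pos hb0 hb2))
    (show 0 < (a0 * a2 * (b0 * b2)) * (a3 ^ 2 - b3 ^ 2) by nlinarith only [m2])
  nlinarith only [mfin, h3b3, ha3, hb3]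

/-- Leaf-side map of the five-leaf binary tree with cherries `{0,2}` and `{1,4}` and
central leaf `3` (the tree `W₁₃₂₅₄`). -/
def W13254 : Fin 7 → Finset (Fin 5)
  | 0 => {0}
  | 1 => {1}
  | 2 => {2}
  | 3 => {3}
  | 4 => {4}
  | 5 => {0, 2}
  | 6 => {1, 4}

/-- A two-class CFN mixture on the tree `W₁₂₃₄₅` cannot mimic the tree `W₁₃₂₅₄`. -/
theorem stmt9 :
    ¬ ∃ (α : ℝ) (θ θt θ' : Fin 7 → ℝ),
      0 < α ∧ α < 1 ∧
      (∀ e, θ e ∈ Set.Ioo (0 : ℝ) 1) ∧ (∀ e, θt e ∈ Set.Ioo (0 : ℝ) 1) ∧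
      (∀ e, θ' e ∈ Set.Ioo (0 : ℝ) 1) ∧
      ∀ A : Finset (Fin 5), Even A.card →
        α * (∏ e ∈ Finset.univ.filter fun e => Odd (W12345 e ∩ A).card, θ e) +
          (1 - α) * (∏ e ∈ Finset.univ.filter fun e => Odd (W12345 e ∩ A).card, θt e) =
        ∏ e ∈ Finset.univ.filter fun e => Odd (W13254 e ∩ A).card, θ' e := by
  rintro ⟨α, θ, θt, θ', hα0, hα1, hθm, hθtm, hθ'm, hmix⟩
  have hθ : ∀ e, 0 < θ e ∧ θ e < 1 := fun e => ⟨(hθm e).1, (hθm e).2⟩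
  have hθt : ∀ e, 0 < θt e ∧ θt e < 1 := fun e => ⟨(hθtm e).1, (hθtm e).2⟩
  have hθ' : ∀ e, 0 < θ' e ∧ θ' e < 1 := fun e => ⟨(hθ'm e).1, (hθ'm e).2⟩
  have h01 := hmix ({0,1} : Finset (Fin 5)) (by decide)
  rw [show (Finset.univ.filter fun e => Odd ((W12345 e) ∩ ({0,1} : Finset (Fin 5))).card) = ({0,1} : Finset (Fin 7)) from by decide,
      show (Finset.univ.filter fun e => Odd ((W13254 e) ∩ ({0,1} : Finset (Fin 5))).card) = ({0,1,5,6} : Finset (Fin 7)) from by decide] at h01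
  simp (config := { decide := true }) [Finset.prod_insert] at h01
  have h02 := hmix ({0,2} : Finset (Fin 5)) (by decide)
  rw [show (Finset.univ.filter fun e => Odd ((W12345 e) ∩ ({0,2} : Finset (Fin 5))).card) = ({0,2,5,6} : Finset (Fin 7)) from by decide,
      show (Finset.univ.filter fun e => Odd ((W13254 e) ∩ ({0,2} : Finset (Fin 5))).card) = ({0,2} : Finset (Fin 7)) from by decide] at h02
  simp (config := { decide := true }) [Finset.prod_insert] at h02
  have h03 := hmix ({0,3} : Finset (Fin 5)) (by decide)
  rw [show (Finset.univ.filter fun e => Odd ((W12345 e) ∩ ({0,3} : Finset (Fin 5))).card) = ({0,3,5,6} : Finset (Fin 7)) from by decide,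
      show (Finset.univ.filter fun e => Odd ((W13254 e) ∩ ({0,3} : Finset (Fin 5))).card) = ({0,3,5} : Finset (Fin 7)) from by decide] at h03
  simp (config := { decide := true }) [Finset.prod_insert] at h03
  have h04 := hmix ({0,4} : Finset (Fin 5)) (by decide)
  rw [show (Finset.univ.filter fun e => Odd ((W12345 e) ∩ ({0,4} : Finset (Fin 5))).card) = ({0,4,5} : Finset (Fin 7)) from by decide,
      show (Finset.univ.filter fun e => Odd ((W13254 e) ∩ ({0,4} : Finset (Fin 5))).card) = ({0,4,5,6} : Finset (Fin 7)) from by decide] at h04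
  simp (config := { decide := true }) [Finset.prod_insert] at h04
  have h12 := hmix ({1,2} : Finset (Fin 5)) (by decide)
  rw [show (Finset.univ.filter fun e => Odd ((W12345 e) ∩ ({1,2} : Finset (Fin 5))).card) = ({1,2,5,6} : Finset (Fin 7)) from by decide,
      show (Finset.univ.filter fun e => Odd ((W13254 e) ∩ ({1,2} : Finset (Fin 5))).card) = ({1,2,5,6} : Finset (Fin 7)) from by decide] at h12
  simp (config := { decide := true }) [Finset.prod_insert] at h12
  have h13 := hmix ({1,3} : Finset (Fin 5)) (by decide)
  rw [show (Finset.univ.filter fun e => Odd ((W12345 e) ∩ ({1,3} : Finset (Fin 5))).card) = ({1,3,5,6} : Finset (Fin 7)) from by decide,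
      show (Finset.univ.filter fun e => Odd ((W13254 e) ∩ ({1,3} : Finset (Fin 5))).card) = ({1,3,6} : Finset (Fin 7)) from by decide] at h13
  simp (config := { decide := true }) [Finset.prod_insert] at h13
  have h14 := hmix ({1,4} : Finset (Fin 5)) (by decide)
  rw [show (Finset.univ.filter fun e => Odd ((W12345 e) ∩ ({1,4} : Finset (Fin 5))).card) = ({1,4,5} : Finset (Fin 7)) from by decide,
      show (Finset.univ.filter fun e => Odd ((W13254 e) ∩ ({1,4} : Finset (Fin 5))).card) = ({1,4} : Finset (Fin 7)) from by decide] at h14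
  simp (config := { decide := true }) [Finset.prod_insert] at h14
  have h23 := hmix ({2,3} : Finset (Fin 5)) (by decide)
  rw [show (Finset.univ.filter fun e => Odd ((W12345 e) ∩ ({2,3} : Finset (Fin 5))).card) = ({2,3} : Finset (Fin 7)) from by decide,
      show (Finset.univ.filter fun e => Odd ((W13254 e) ∩ ({2,3} : Finset (Fin 5))).card) = ({2,3,5} : Finset (Fin 7)) from by decide] at h23
  simp (config := { decide := true }) [Finset.prod_insert] at h23
  have h24 := hmix ({2,4} : Finset (Fin 5)) (by decide)
  rw [show (Finset.univ.filter fun e => Odd ((W12345 e) ∩ ({2,4} : Finset (Fin 5))).card) = ({2,4,6} : Finset (Fin 7)) from by decide,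
      show (Finset.univ.filter fun e => Odd ((W13254 e) ∩ ({2,4} : Finset (Fin 5))).card) = ({2,4,5,6} : Finset (Fin 7)) from by decide] at h24
  simp (config := { decide := true }) [Finset.prod_insert] at h24
  have h34 := hmix ({3,4} : Finset (Fin 5)) (by decide)
  rw [show (Finset.univ.filter fun e => Odd ((W12345 e) ∩ ({3,4} : Finset (Fin 5))).card) = ({3,4,6} : Finset (Fin 7)) from by decide,
      show (Finset.univ.filter fun e => Odd ((W13254 e) ∩ ({3,4} : Finset (Fin 5))).card) = ({3,4,6} : Finset (Fin 7)) from by decide] at h34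
  simp (config := { decide := true }) [Finset.prod_insert] at h34
  have h0123 := hmix ({0,1,2,3} : Finset (Fin 5)) (by decide)
  rw [show (Finset.univ.filter fun e => Odd ((W12345 e) ∩ ({0,1,2,3} : Finset (Fin 5))).card) = ({0,1,2,3} : Finset (Fin 7)) from by decide,
      show (Finset.univ.filter fun e => Odd ((W13254 e) ∩ ({0,1,2,3} : Finset (Fin 5))).card) = ({0,1,2,3,6} : Finset (Fin 7)) from by decide] at h0123
  simp (config := { decide := true }) [Finset.prod_insert] at h0123
  have h0234 := hmix ({0,2,3,4} : Finset (Fin 5)) (by decide)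
  rw [show (Finset.univ.filter fun e => Odd ((W12345 e) ∩ ({0,2,3,4} : Finset (Fin 5))).card) = ({0,2,3,4,5} : Finset (Fin 7)) from by decide,
      show (Finset.univ.filter fun e => Odd ((W13254 e) ∩ ({0,2,3,4} : Finset (Fin 5))).card) = ({0,2,3,4,6} : Finset (Fin 7)) from by decide] at h0234
  simp (config := { decide := true }) [Finset.prod_insert] at h0234
  have h1234 := hmix ({1,2,3,4} : Finset (Fin 5)) (by decide)
  rw [show (Finset.univ.filter fun e => Odd ((W12345 e) ∩ ({1,2,3,4} : Finset (Fin 5))).card) = ({1,2,3,4,5} : Finset (Fin 7)) from by decide,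
      show (Finset.univ.filter fun e => Odd ((W13254 e) ∩ ({1,2,3,4} : Finset (Fin 5))).card) = ({1,2,3,4,5} : Finset (Fin 7)) from by decide] at h1234
  simp (config := { decide := true }) [Finset.prod_insert] at h1234
  have h0134 := hmix ({0,1,3,4} : Finset (Fin 5)) (by decide)
  rw [show (Finset.univ.filter fun e => Odd ((W12345 e) ∩ ({0,1,3,4} : Finset (Fin 5))).card) = ({0,1,3,4,6} : Finset (Fin 7)) from by decide,
      show (Finset.univ.filter fun e => Odd ((W13254 e) ∩ ({0,1,3,4} : Finset (Fin 5))).card) = ({0,1,3,4,5} : Finset (Fin 7)) from by decide] at h0134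
  simp (config := { decide := true }) [Finset.prod_insert] at h0134
  -- key determinant identity to decide the orientation of the mixture classes
  have hid1T : (α * (1 - α) * (θ 5 * θt 5 * θ 6 * θt 6) * (θ 0 * θt 1 - θ 1 * θt 0))
      * (θ 2 * θt 3 - θ 3 * θt 2)
      = θ' 0 * θ' 1 * θ' 2 * θ' 3 * θ' 6 * (1 - θ' 5 ^ 2) := by
    linear_combination (α * (θ 1 * θ 3 * θ 5 * θ 6) + (1 - α) * (θt 1 * θt 3 * θt 5 * θt 6)) * h02
      + (θ' 0 * θ' 2) * h13
      - (α * (θ 1 * θ 2 * θ 5 * θ 6) + (1 - α) * (θt 1 * θt 2 * θt 5 * θt 6)) * h03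
      - (θ' 0 * θ' 3 * θ' 5) * h12
  have hRT : 0 < θ' 0 * θ' 1 * θ' 2 * θ' 3 * θ' 6 * (1 - θ' 5 ^ 2) :=
    mul_pos (mul_pos (mul_pos (mul_pos (mul_pos (hθ' 0).1 (hθ' 1).1) (hθ' 2).1) (hθ' 3).1)
      (hθ' 6).1) (by nlinarith only [(hθ' 5).1, (hθ' 5).2])
  have hne : θ 1 * θt 0 ≠ θ 0 * θt 1 := by
    intro he
    rw [show θ 0 * θt 1 - θ 1 * θt 0 = 0 by linarith only [he], mul_zero, zero_mul] at hid1T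
    linarith only [hid1T, hRT]
  rcases hne.lt_or_gt with hcase | hcase
  · exact cfn_core α (θ 5) (θt 5) (θ 6) (θt 6) (θ 0) (θ 1) (θ 2) (θ 3) (θ 4) (θt 0) (θt 1) (θt 2) (θt 3) (θt 4)
      (θ' 0) (θ' 1) (θ' 2) (θ' 3) (θ' 4) (θ' 5) (θ' 6)
      hα0
      (by linarith)
      (hθ 0).1
      (hθ 1).1
      (hθ 2).1
      (hθ 3).1
      (hθ 4).1
      (hθt 0).1
      (hθt 1).1
      (hθt 2).1
      (hθt 3).1
      (hθt 4).1
      (hθ 5).1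
      (hθt 5).1
      (hθ 6).1
      (hθt 6).1
      (hθ 5).2
      (hθt 5).2
      (hθ 6).2
      (hθt 6).2
      (hθ' 0).1
      (hθ' 1).1
      (hθ' 2).1
      (hθ' 3).1
      (hθ' 4).1
      (hθ' 5).1
      (hθ' 6).1
      (hθ' 5).2
      (hθ' 6).2
      (by nlinarith only [hcase])
      (by linear_combination h01)
      (by linear_combination h02)
      (by linear_combination h03)
      (by linear_combination h04)
      (by linear_combination h12)
      (by linear_combination h13)
      (by linear_combination h14)
      (by linear_combination h23)
      (by linear_combination h24)
      (by linear_combination h34)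
      (by linear_combination h0123)
      (by linear_combination h0234)
      (by linear_combination h1234)
      (by linear_combination h0134)
  · exact cfn_core (1 - α) (θt 5) (θ 5) (θt 6) (θ 6) (θt 0) (θt 1) (θt 2) (θt 3) (θt 4) (θ 0) (θ 1) (θ 2) (θ 3) (θ 4)
      (θ' 0) (θ' 1) (θ' 2) (θ' 3) (θ' 4) (θ' 5) (θ' 6)
      (by linarith)
      (by linarith)
      (hθt 0).1
      (hθt 1).1
      (hθt 2).1
      (hθt 3).1
      (hθt 4).1
      (hθ 0).1
      (hθ 1).1
      (hθ 2).1
      (hθ 3).1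
      (hθ 4).1
      (hθt 5).1
      (hθ 5).1
      (hθt 6).1
      (hθ 6).1
      (hθt 5).2
      (hθ 5).2
      (hθt 6).2
      (hθ 6).2
      (hθ' 0).1
      (hθ' 1).1
      (hθ' 2).1
      (hθ' 3).1
      (hθ' 4).1
      (hθ' 5).1
      (hθ' 6).1
      (hθ' 5).2
      (hθ' 6).2
      (by nlinarith only [hcase])
      (by linear_combination h01)
      (by linear_combination h02)
      (by linear_combination h03)
      (by linear_combination h04)
      (by linear_combination h12)
      (by linear_combination h13)
      (by linear_combination h14)
      (by linear_combination h23)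
      (by linear_combination h24)
      (by linear_combination h34)
      (by linear_combination h0123)
      (by linear_combination h0234)
      (by linear_combination h1234)
      (by linear_combination h0134)
end
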